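/- arXiv:1306.5351 — 14 statements merged into one kernel-verified Lean document; each statement's English description precedes it below -/
import Mathlib

section
/- Fix q ∈ V and, for each p ∈ V, a function j_p : V → ℚ satisfying Δ j_p = 1_p − 1_q. For D : V → ℚ define the total potential b_q(D) = ∑_{p∈V} ∑_{v∈V} j_p(v)·D(v). Then for every proper subset A ⊊ V with q ∈ A one has b_q(D(Aᶜ,A)) > b_q(D(A,Aᶜ)); in fact b_q(D(A,Aᶜ)) − b_q(D(Aᶜ,A)) = |A| − |V| < 0. -/
open Finset

/-- The graph Laplacian acting on functions `V → R`:
`(Δf)(v) = ∑_{w adjacent to v} (f(v) − f(w))`. -/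
def lap {V : Type} [Fintype V] (G : SimpleGraph V) [DecidableRel G.Adj]
    {R : Type} [Ring R] (f : V → R) (v : V) : R :=
  ∑ w ∈ G.neighborFinset v, (f v - f w)

/-- `cutDiv G A B v` is the number of vertices of `B` adjacent to `v` if `v ∈ A`,
and `0` otherwise; this is the divisor `D(A,B)`. -/
def cutDiv {V : Type} [Fintype V] [DecidableEq V] (G : SimpleGraph V)
    [DecidableRel G.Adj] (A B : Finset V) (v : V) : ℕ :=
  if v ∈ A then (B.filter (fun w => G.Adj v w)).card else 0

/-- The total potential functional `b_q(D) = ∑_{p∈V} ∑_{v∈V} j_p(v)·D(v)`. -/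
def totalPotential {V : Type} [Fintype V] (j : V → V → ℚ) (D : V → ℚ) : ℚ :=
  ∑ p, ∑ v, j p v * D v

lemma expand_lap {V : Type} [Fintype V] (G : SimpleGraph V) [DecidableRel G.Adj]
    (f g : V → ℚ) :
    ∑ v, f v * lap G g v = ∑ v, ∑ w, if G.Adj v w then f v * (g v - g w) else 0 := by
  refine Finset.sum_congr rfl fun v _ => ?_
  rw [lap, Finset.mul_sum, SimpleGraph.neighborFinset_eq_filter, Finset.sum_filter]

lemma lap_symm {V : Type} [Fintype V] (G : SimpleGraph V) [DecidableRel G.Adj]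
    (f g : V → ℚ) :
    ∑ v, f v * lap G g v = ∑ v, g v * lap G f v := by
  rw [expand_lap, expand_lap]
  have key : ∀ v w, (if G.Adj v w then f v * (g v - g w) else 0) +
      (if G.Adj w v then f w * (g w - g v) else 0) =
      (if G.Adj v w then g v * (f v - f w) else 0) +
      (if G.Adj w v then g w * (f w - f v) else 0) := by
    intro v w
    by_cases h : G.Adj v w
    · have h' := h.symm
      simp only [h, h', if_true]; ring
    · have h' : ¬ G.Adj w v := fun hh => h hh.symm
      simp [h, h']
  have dbl : ∀ (F : V → V → ℚ), (∑ v, ∑ w, F v w) + (∑ v, ∑ w, F w v)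
      = ∑ v, ∑ w, (F v w + F w v) := by
    intro F
    rw [← Finset.sum_add_distrib]
    exact Finset.sum_congr rfl fun v _ => (Finset.sum_add_distrib).symm
  have comm : ∀ (F : V → V → ℚ), (∑ v, ∑ w, F v w) = ∑ v, ∑ w, F w v :=
    fun F => Finset.sum_comm
  have e1 : (∑ v, ∑ w, if G.Adj v w then f v * (g v - g w) else 0) +
      (∑ v, ∑ w, if G.Adj w v then f w * (g w - g v) else 0) =
      (∑ v, ∑ w, if G.Adj v w then g v * (f v - f w) else 0) +
      (∑ v, ∑ w, if G.Adj w v then g w * (f w - f v) else 0) := by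
    rw [dbl, dbl]
    exact Finset.sum_congr rfl fun v _ => Finset.sum_congr rfl fun w _ => key v w
  have c1 := comm (fun v w => if G.Adj v w then f v * (g v - g w) else 0)
  have c2 := comm (fun v w => if G.Adj v w then g v * (f v - f w) else 0)
  linarith

lemma cut_sub {V : Type} [Fintype V] [DecidableEq V] (G : SimpleGraph V)
    [DecidableRel G.Adj] (A : Finset V) (v : V) :
    (cutDiv G A Aᶜ v : ℚ) - (cutDiv G Aᶜ A v : ℚ)
      = lap G (fun w => if w ∈ A then (1:ℚ) else 0) v := by
  unfold cutDiv lap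
  by_cases hv : v ∈ A
  · have hv' : v ∉ Aᶜ := by simp [hv]
    simp only [hv, hv', if_true, if_false, Nat.cast_zero, sub_zero]
    have : ∑ w ∈ G.neighborFinset v, ((1:ℚ) - if w ∈ A then 1 else 0)
        = ∑ w ∈ (G.neighborFinset v).filter (fun w => w ∉ A), 1 := by
      rw [Finset.sum_filter]
      refine Finset.sum_congr rfl fun w _ => ?_
      by_cases hw : w ∈ A <;> simp [hw]
    rw [this, Finset.sum_const, nsmul_eq_mul, mul_one]
    congr 2
    ext w
    simp [SimpleGraph.mem_neighborFinset, and_comm]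
  · have hv' : v ∈ Aᶜ := by simp [hv]
    simp only [hv, hv', if_true, if_false, Nat.cast_zero, zero_sub]
    have : ∑ w ∈ G.neighborFinset v, (-if w ∈ A then (1:ℚ) else 0)
        = -∑ w ∈ (G.neighborFinset v).filter (fun w => w ∈ A), 1 := by
      rw [← Finset.sum_neg_distrib, Finset.sum_filter]
      refine Finset.sum_congr rfl fun w _ => ?_
      by_cases hw : w ∈ A <;> simp [hw]
    rw [this, Finset.sum_const, nsmul_eq_mul, mul_one, neg_inj]
    congr 2
    ext w
    simp [SimpleGraph.mem_neighborFinset, and_comm]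

theorem stmt0 (V : Type) [Fintype V] [Nonempty V] [DecidableEq V]
    (G : SimpleGraph V) [DecidableRel G.Adj] (hG : G.Connected)
    (q : V) (j : V → V → ℚ)
    (hj : ∀ p v, lap G (j p) v =
      (if v = p then 1 else 0) - (if v = q then 1 else 0))
    (A : Finset V) (hA : A ≠ Finset.univ) (hqA : q ∈ A) :
    totalPotential j (fun v => (cutDiv G Aᶜ A v : ℚ)) >
      totalPotential j (fun v => (cutDiv G A Aᶜ v : ℚ)) ∧
    totalPotential j (fun v => (cutDiv G A Aᶜ v : ℚ)) -
      totalPotential j (fun v => (cutDiv G Aᶜ A v : ℚ)) =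
      (A.card : ℚ) - (Fintype.card V : ℚ) ∧
    (A.card : ℚ) - (Fintype.card V : ℚ) < 0 := by
  set ind : V → ℚ := fun w => if w ∈ A then (1:ℚ) else 0 with hind
  have step : ∀ p, (∑ v, j p v * (cutDiv G A Aᶜ v : ℚ)) -
      (∑ v, j p v * (cutDiv G Aᶜ A v : ℚ)) = (if p ∈ A then (1:ℚ) else 0) - 1 := by
    intro p
    rw [← Finset.sum_sub_distrib]
    have h1 : ∀ v ∈ (univ : Finset V),
        j p v * (cutDiv G A Aᶜ v : ℚ) - j p v * (cutDiv G Aᶜ A v : ℚ)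
          = j p v * lap G ind v := by
      intro v _
      rw [← mul_sub, cut_sub]
    rw [Finset.sum_congr rfl h1, lap_symm]
    have h2 : ∀ v ∈ (univ : Finset V),
        ind v * lap G (j p) v
          = ind v * ((if v = p then 1 else 0) - (if v = q then 1 else 0)) := by
      intro v _; rw [hj p v]
    rw [Finset.sum_congr rfl h2]
    simp only [mul_sub, Finset.sum_sub_distrib, mul_ite, mul_one, mul_zero]
    rw [Finset.sum_ite_eq' univ p ind, Finset.sum_ite_eq' univ q ind]
    simp [hind, hqA]
  have diff : totalPotential j (fun v => (cutDiv G A Aᶜ v : ℚ)) -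
      totalPotential j (fun v => (cutDiv G Aᶜ A v : ℚ)) =
      (A.card : ℚ) - (Fintype.card V : ℚ) := by
    unfold totalPotential
    rw [← Finset.sum_sub_distrib, Finset.sum_congr rfl (fun p _ => step p)]
    rw [Finset.sum_sub_distrib]
    simp only [Finset.sum_ite_mem, Finset.univ_inter, Finset.sum_const,
      nsmul_eq_mul, mul_one, Finset.card_univ]
  have hlt : (A.card : ℚ) - (Fintype.card V : ℚ) < 0 := by
    have : A.card < Fintype.card V := by
      have := Finset.card_lt_card (Finset.ssubset_univ_iff.mpr hA)
      simpa [Finset.card_univ] using this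
    have h := (Nat.cast_lt (α := ℚ)).mpr this
    linarith
  refine ⟨by linarith [diff, hlt], diff, hlt⟩
end

section
/- Fix q ∈ V and, for each p ∈ V, a function j_p : V → ℝ satisfying Δ j_p = 1_p − 1_q and j_p(q) = 0. For a function σ on the darts of G, define its boundary ∂σ : V → ℝ by (∂σ)(v) = ∑_{e : e₊ = v} σ(e) − ∑_{e : e₋ = v} σ(e). Then the following are equivalent (this describes the Gröbner cone of the graphic oriented matroid ideal O_G^q inside the space of weight functionals for the graphic Lawrence ideal J_G): (a) (∂σ)(p) > 0 for every p ∈ V with p ≠ q; (b) there exist a function σ' on the darts of G with ∂σ' = 0 and a function β : V → ℝ with β(p) > 0 for all p ∈ V, such that σ(e) = σ'(e) + ∑_{p∈V} β(p)·(j_p(e₊) − j_p(e₋)) for every dart e. -/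
open Finset

/-- The boundary of a function on darts:
`(∂σ)(v) = ∑_{e : e₊ = v} σ(e) − ∑_{e : e₋ = v} σ(e)`, where a dart `e` has head
`e₊ = e.fst` and tail `e₋ = e.snd`. -/
def bdry {V : Type} [Fintype V] [DecidableEq V] (G : SimpleGraph V)
    [DecidableRel G.Adj] (σ : G.Dart → ℝ) (v : V) : ℝ :=
  (∑ e : G.Dart, if e.fst = v then σ e else 0) -
    ∑ e : G.Dart, if e.snd = v then σ e else 0

section helpers
variable {V : Type} [Fintype V] [DecidableEq V] (G : SimpleGraph V) [DecidableRel G.Adj]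

lemma sum_dart_fst (f : V → V → ℝ) (v : V) :
    (∑ e : G.Dart, if e.fst = v then f e.fst e.snd else 0)
      = ∑ w ∈ G.neighborFinset v, f v w := by
  classical
  rw [← Finset.sum_filter]
  have h : (Finset.univ.filter fun e : G.Dart => e.fst = v)
      = Finset.univ.image (G.dartOfNeighborSet v) := by
    simpa using G.dart_fst_fiber v
  rw [h, Finset.sum_image (fun a _ b _ h => G.dartOfNeighborSet_injective v h)]
  rw [← Finset.sum_coe_sort (G.neighborFinset v)]
  exact Fintype.sum_equiv (Equiv.subtypeEquivRight (fun w => by simp)) _ _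
    (fun w => by simp [SimpleGraph.dartOfNeighborSet])

lemma sum_dart_snd (f : V → V → ℝ) (v : V) :
    (∑ e : G.Dart, if e.snd = v then f e.fst e.snd else 0)
      = ∑ w ∈ G.neighborFinset v, f w v := by
  classical
  rw [← sum_dart_fst G (fun a b => f b a) v]
  exact Fintype.sum_bijective _ (SimpleGraph.Dart.symm_involutive.bijective) _ _
    (fun e => by cases e with | mk p h => cases p; rfl)

lemma bdry_pot (c : ℝ) (g : V → ℝ) (v : V) :
    bdry G (fun e => c * (g e.fst - g e.snd)) v = c * (2 * lap G g v) := by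
  unfold bdry
  rw [sum_dart_fst G (fun a b => c * (g a - g b)) v,
    sum_dart_snd G (fun a b => c * (g a - g b)) v]
  unfold lap
  simp only [Finset.mul_sum, ← Finset.sum_sub_distrib]
  exact Finset.sum_congr rfl fun w _ => by ring

lemma bdry_sub (σ τ : G.Dart → ℝ) (v : V) :
    bdry G (fun e => σ e - τ e) v = bdry G σ v - bdry G τ v := by
  unfold bdry
  have h : ∀ (c : Prop) [Decidable c] (a b : ℝ),
      (if c then a - b else 0) = (if c then a else 0) - (if c then b else 0) :=
    fun c _ a b => by split <;> simp
  simp only [h, Finset.sum_sub_distrib]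
  ring

lemma bdry_add (σ τ : G.Dart → ℝ) (v : V) :
    bdry G (fun e => σ e + τ e) v = bdry G σ v + bdry G τ v := by
  unfold bdry
  have h : ∀ (c : Prop) [Decidable c] (a b : ℝ),
      (if c then a + b else 0) = (if c then a else 0) + (if c then b else 0) :=
    fun c _ a b => by split <;> simp
  simp only [h, Finset.sum_add_distrib]
  ring

lemma bdry_sum {ι : Type} (s : Finset ι) (h : ι → G.Dart → ℝ) (v : V) :
    bdry G (fun e => ∑ p ∈ s, h p e) v = ∑ p ∈ s, bdry G (h p) v := by
  classical
  induction s using Finset.induction with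
  | empty => simp [bdry]
  | @insert a s hx ih =>
      rw [Finset.sum_insert hx,
        show (fun e => ∑ p ∈ insert a s, h p e)
            = fun e => h a e + ∑ p ∈ s, h p e from
          funext fun e => Finset.sum_insert hx,
        bdry_add, ih]

lemma bdry_total (σ : G.Dart → ℝ) : ∑ v, bdry G σ v = 0 := by
  unfold bdry
  rw [Finset.sum_sub_distrib, Finset.sum_comm,
    Finset.sum_comm (s := (univ : Finset V))]
  simp

end helpers


theorem stmt2 (V : Type) [Fintype V] [Nonempty V] [DecidableEq V]
    (G : SimpleGraph V) [DecidableRel G.Adj] (hG : G.Connected)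
    (q : V) (j : V → V → ℝ)
    (hj : ∀ p v, lap G (j p) v =
      (if v = p then 1 else 0) - (if v = q then 1 else 0))
    (hjq : ∀ p, j p q = 0)
    (σ : G.Dart → ℝ) :
    (∀ p : V, p ≠ q → 0 < bdry G σ p) ↔
    (∃ (σ' : G.Dart → ℝ) (β : V → ℝ), (∀ v, bdry G σ' v = 0) ∧ (∀ p, 0 < β p) ∧
        ∀ e : G.Dart, σ e = σ' e + ∑ p, β p * (j p e.fst - j p e.snd)) := by
  classical
  have key : ∀ (β : V → ℝ) (v : V),
      bdry G (fun e => ∑ p, β p * (j p e.fst - j p e.snd)) v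
        = 2 * β v - (if v = q then 2 * ∑ p, β p else 0) := by
    intro β v
    rw [bdry_sum G univ (fun p e => β p * (j p e.fst - j p e.snd)) v]
    have h1 : ∀ p : V, bdry G (fun e => β p * (j p e.fst - j p e.snd)) v
        = (if v = p then 2 * β p else 0) - (if v = q then 2 * β p else 0) := by
      intro p
      rw [bdry_pot, hj]
      split <;> split <;> ring
    simp only [h1, Finset.sum_sub_distrib]
    congr 1
    · rw [Finset.sum_ite_eq]; simp
    · split <;> simp [Finset.mul_sum]
  constructor
  · intro hσ
    set β : V → ℝ := fun p => if p = q then 1 else bdry G σ p / 2 with hβ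
    refine ⟨fun e => σ e - ∑ p, β p * (j p e.fst - j p e.snd), β, ?_, ?_,
      fun e => by simp⟩
    · intro v
      rw [bdry_sub, key]
      by_cases hv : v = q
      · subst hv
        simp only [if_pos rfl]
        have ht := bdry_total G σ
        rw [← Finset.add_sum_erase _ _ (Finset.mem_univ v)] at ht
        have hsum : ∑ p, β p = 1 + (∑ p ∈ univ.erase v, bdry G σ p) / 2 := by
          rw [← Finset.add_sum_erase _ _ (Finset.mem_univ v)]
          rw [show β v = 1 from if_pos rfl]
          congr 1
          rw [Finset.sum_div]
          exact Finset.sum_congr rfl fun p hp => by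
            rw [show β p = bdry G σ p / 2 from if_neg (Finset.mem_erase.mp hp).1]
        rw [hsum, show β v = 1 from if_pos rfl, if_pos trivial]
        linarith
      · rw [if_neg hv, show β v = bdry G σ v / 2 from if_neg hv]
        ring
    · intro p
      by_cases hp : p = q
      · rw [show β p = 1 from if_pos hp]; norm_num
      · rw [show β p = bdry G σ p / 2 from if_neg hp]
        exact half_pos (hσ p hp)
  · rintro ⟨σ', β, hb0, hβ, hdec⟩ p hp
    rw [show σ = fun e => σ' e + ∑ p, β p * (j p e.fst - j p e.snd) from funext hdec,
      bdry_add, key, hb0, if_neg hp]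
    have := hβ p
    linarith
end

section
/- The ℤ-submodule of the functions V → ℤ spanned by the set {1_{e₊} − 1_{e₋} : e a dart of G} is exactly {D : V → ℤ | ∑_{v∈V} D(v) = 0}. (Equivalently, the sequence C₁(G,ℤ) → C₀(G,ℤ) → ℤ → 0, given by the boundary map followed by the degree map, is exact.) -/
open Finset

theorem stmt5 (V : Type) [Fintype V] [Nonempty V] [DecidableEq V]
    (G : SimpleGraph V) [DecidableRel G.Adj] (hG : G.Connected)
    (D : V → ℤ) :
    D ∈ Submodule.span ℤ {g : V → ℤ | ∃ e : G.Dart,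
        g = fun v => (if v = e.fst then 1 else 0) - (if v = e.snd then 1 else 0)} ↔
    ∑ v, D v = 0 := by
  set S : Set (V → ℤ) := {g : V → ℤ | ∃ e : G.Dart,
      g = fun v => (if v = e.fst then 1 else 0) - (if v = e.snd then 1 else 0)} with hS
  constructor
  · intro hD
    let L : (V → ℤ) →ₗ[ℤ] ℤ :=
      { toFun := fun f => ∑ v, f v
        map_add' := by intros; simp [Finset.sum_add_distrib]
        map_smul' := by intros; simp [Finset.mul_sum] }
    have hle : Submodule.span ℤ S ≤ LinearMap.ker L := by
      rw [Submodule.span_le]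
      rintro g ⟨e, rfl⟩
      simp [L, Finset.sum_sub_distrib]
    exact hle hD
  · intro hsum
    have key : ∀ u w : V,
        (fun v => (if v = u then (1:ℤ) else 0) - (if v = w then 1 else 0)) ∈
          Submodule.span ℤ S := by
      intro u w
      obtain ⟨p⟩ := hG u w
      induction p with
      | @nil u =>
        have h0 : (fun v => (if v = u then (1:ℤ) else 0) - (if v = u then 1 else 0))
            = (0 : V → ℤ) := by
          funext v; simp
        rw [h0]
        exact Submodule.zero_mem _
      | @cons u b w h q ih =>
        have h1 : (fun v => (if v = u then (1:ℤ) else 0) - (if v = b then 1 else 0)) ∈ S :=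
          ⟨SimpleGraph.Dart.mk (u, b) h, rfl⟩
        have hdecomp : (fun v => (if v = u then (1:ℤ) else 0) - (if v = w then 1 else 0)) =
            (fun v => (if v = u then (1:ℤ) else 0) - (if v = b then 1 else 0)) +
            (fun v => (if v = b then (1:ℤ) else 0) - (if v = w then 1 else 0)) := by
          funext v; simp only [Pi.add_apply]; ring
        rw [hdecomp]
        exact Submodule.add_mem _ (Submodule.subset_span h1) ih
    obtain ⟨v0⟩ := (inferInstance : Nonempty V)
    have hD : D = ∑ u, D u •
        (fun v => (if v = u then (1:ℤ) else 0) - (if v = v0 then 1 else 0)) := by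
      funext v
      simp only [Finset.sum_apply, Pi.smul_apply, smul_eq_mul, mul_sub]
      rw [Finset.sum_sub_distrib]
      simp [Finset.sum_ite_eq, ← Finset.sum_mul, hsum]
    rw [hD]
    exact Submodule.sum_mem _ fun u _ => Submodule.smul_mem _ _ (key u v0)
end

section
/- For every q ∈ V, the ideal I_G equals the ideal of R generated by the cut binomials x^{D(Aᶜ,A)} − x^{D(A,Aᶜ)}, taken over all proper subsets A ⊊ V with q ∈ A. -/
open Finset MvPolynomial

/-! If `D₁ - D₂ = Δf`, the binomial `x^{D₁} - x^{D₂}` lies in the cut ideal by induction on the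
spread `∑ v, |f v - f q|` of the potential. If `f` is not constant then, after possibly swapping
`D₁` and `D₂` (and negating `f`), the level set `S` where `f` is maximal misses `q`. On `S` we have
`D₁ ≥ Δf ≥ D(S,Sᶜ)`, so `x^{D₁}` is divisible by `x^{D(S,Sᶜ)}`; trading that factor for
`x^{D(Sᶜ,S)}` changes `x^{D₁}` by a multiple of the cut binomial of `A = Sᶜ` and replaces `f` by
`f - 𝟙_S`, which has smaller spread. A constant potential has `Δf = 0`, so then `D₁ = D₂`. -/

section Laplacian

variable {V : Type} [Fintype V] (G : SimpleGraph V) [DecidableRel G.Adj]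

lemma lap_sub {R : Type} [Ring R] (f g : V → R) (v : V) :
    lap G (f - g) v = lap G f v - lap G g v := by
  simp only [lap, Pi.sub_apply, ← sum_sub_distrib, sub_sub_sub_comm]

lemma lap_neg {R : Type} [Ring R] (f : V → R) (v : V) : lap G (-f) v = -lap G f v := by
  simp only [lap, Pi.neg_apply, ← sum_neg_distrib, neg_sub_neg, neg_sub]

lemma lap_const {R : Type} [Ring R] (c : R) (v : V) : lap G (fun _ => c) v = 0 := by
  simp [lap]

variable [DecidableEq V]

lemma cutDiv_of_mem {A : Finset V} (B : Finset V) {v : V} (hv : v ∈ A) :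
    cutDiv G A B v = #{w ∈ G.neighborFinset v | w ∈ B} := by
  rw [cutDiv, if_pos hv]
  congr 1
  ext w
  simp [and_comm]

lemma lap_indicator (S : Finset V) (v : V) :
    lap G ((S : Set V).indicator 1) v = (cutDiv G S Sᶜ v : ℤ) - cutDiv G Sᶜ S v := by
  by_cases hv : v ∈ S
  · have hv' : v ∉ Sᶜ := by simpa using hv
    rw [cutDiv_of_mem G _ hv, cutDiv, if_neg hv', card_filter, lap]
    push_cast
    rw [sub_zero]
    refine Finset.sum_congr rfl fun w _ => ?_
    by_cases hw : w ∈ S <;> simp [hv, hw]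
  · rw [cutDiv_of_mem G _ (mem_compl.2 hv), cutDiv, if_neg hv, card_filter, lap]
    push_cast
    rw [zero_sub, ← Finset.sum_neg_distrib]
    refine Finset.sum_congr rfl fun w _ => ?_
    by_cases hw : w ∈ S <;> simp [hv, hw]

/-- Every neighbour of a maximum of `f` outside the top level set is at least one step lower. -/
lemma cutDiv_topLevel_le_lap {f : V → ℤ} {M : ℤ} (hM : ∀ w, f w ≤ M) {v : V} (hv : f v = M) :
    (cutDiv G {w | f w = M} ({w | f w = M} : Finset V)ᶜ v : ℤ) ≤ lap G f v := by
  rw [cutDiv_of_mem G _ (by simpa using hv), card_filter, lap]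
  push_cast
  refine sum_le_sum fun w _ => ?_
  have := hM w
  split_ifs with hw
  · simp only [mem_compl, mem_filter, mem_univ, true_and] at hw
    omega
  · omega

end Laplacian

section Spread

variable {V : Type} [Fintype V]

def spread (q : V) (f : V → ℤ) : ℕ := ∑ v, (f v - f q).natAbs

lemma spread_neg (q : V) (f : V → ℤ) : spread q (-f) = spread q f := by
  simp only [spread, Pi.neg_apply, ← neg_sub', Int.natAbs_neg]

lemma spread_sub_indicator_lt {q : V} {f : V → ℤ} {S : Finset V} (hq : q ∉ S)
    (hS : S.Nonempty) (hfS : ∀ v ∈ S, f q < f v) :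
    spread q (f - (S : Set V).indicator 1) < spread q f := by
  have hq' : ((S : Set V).indicator 1 q : ℤ) = 0 := by simp [hq]
  obtain ⟨v₀, hv₀⟩ := hS
  refine sum_lt_sum (fun v _ => ?_) ⟨v₀, mem_univ v₀, ?_⟩
  · by_cases hv : v ∈ S
    · have := hfS v hv
      simp only [Pi.sub_apply, hq', Set.indicator_of_mem (mem_coe.2 hv), Pi.one_apply]
      omega
    · simp [hq', hv]
  · have := hfS v₀ hv₀
    simp only [Pi.sub_apply, hq', Set.indicator_of_mem (mem_coe.2 hv₀), Pi.one_apply]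
    omega

end Spread

section XPow

variable {V : Type} [Fintype V] (K : Type) [CommRing K]

noncomputable def xPow (D : V → ℕ) : MvPolynomial V K := ∏ v, X v ^ D v

lemma xPow_add (D E : V → ℕ) : xPow K (D + E) = xPow K D * xPow K E := by
  simp only [xPow, Pi.add_apply, pow_add, prod_mul_distrib]

end XPow

section CutIdeal

variable {V : Type} [Fintype V] [DecidableEq V] (G : SimpleGraph V) [DecidableRel G.Adj]
  (K : Type) [CommRing K]

noncomputable def cutIdeal (q : V) : Ideal (MvPolynomial V K) :=
  Ideal.span {p | ∃ A : Finset V, A ≠ univ ∧ q ∈ A ∧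
    p = xPow K (cutDiv G Aᶜ A) - xPow K (cutDiv G A Aᶜ)}

variable {G K}

lemma xPow_sub_xPow_fire_mem_cutIdeal {q : V} {S : Finset V} (hq : q ∉ S) (hS : S.Nonempty)
    {D : V → ℕ} (hD : cutDiv G S Sᶜ ≤ D) :
    xPow K D - xPow K (D - cutDiv G S Sᶜ + cutDiv G Sᶜ S) ∈ cutIdeal G K q := by
  have hcut : xPow K (cutDiv G S Sᶜ) - xPow K (cutDiv G Sᶜ S) ∈ cutIdeal G K q := by
    refine Ideal.subset_span ⟨Sᶜ, ?_, mem_compl.2 hq, by rw [compl_compl]⟩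
    obtain ⟨v, hv⟩ := hS
    exact fun h => mem_compl.1 (h ▸ mem_univ v) hv
  have hsplit : xPow K D = xPow K (D - cutDiv G S Sᶜ) * xPow K (cutDiv G S Sᶜ) := by
    rw [← xPow_add, tsub_add_cancel_of_le hD]
  rw [hsplit, xPow_add, ← mul_sub]
  exact Ideal.mul_mem_left _ _ hcut

lemma exists_xPow_sub_xPow_mem_cutIdeal_spread_lt {q : V} {D₁ D₂ : V → ℕ} {f : V → ℤ}
    (hf : ∀ v, (D₁ v : ℤ) - D₂ v = lap G f v) (hq : ∃ w, f q < f w) :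
    ∃ (D₁' : V → ℕ) (f' : V → ℤ), (∀ v, (D₁' v : ℤ) - D₂ v = lap G f' v) ∧
      spread q f' < spread q f ∧ xPow K D₁ - xPow K D₁' ∈ cutIdeal G K q := by
  obtain ⟨w, hw⟩ := hq
  obtain ⟨m, -, hm⟩ := exists_mem_eq_sup' ⟨q, mem_univ q⟩ f
  have hM : ∀ v, f v ≤ f m := fun v => hm ▸ le_sup' f (mem_univ v)
  set S : Finset V := {v | f v = f m}
  have hmS : m ∈ S := by simp [S]
  have hqS : q ∉ S := by simp only [S, mem_filter, mem_univ, true_and]; linarith [hM w]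
  have hD : ∀ v, cutDiv G S Sᶜ v ≤ D₁ v := fun v => by
    by_cases hv : v ∈ S
    · have hcut : (cutDiv G S Sᶜ v : ℤ) ≤ lap G f v :=
        cutDiv_topLevel_le_lap G hM (mem_filter.1 hv).2
      have hfv := hf v
      omega
    · simp [cutDiv, hv]
  refine ⟨D₁ - cutDiv G S Sᶜ + cutDiv G Sᶜ S, f - (S : Set V).indicator 1, fun v => ?_,
    spread_sub_indicator_lt hqS ⟨m, hmS⟩ fun v hv => ?_,
    xPow_sub_xPow_fire_mem_cutIdeal hqS ⟨m, hmS⟩ hD⟩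
  · rw [lap_sub, lap_indicator, ← hf v]
    push_cast [Pi.add_apply, Pi.sub_apply, Nat.cast_sub (hD v)]
    ring
  · rw [(mem_filter.1 hv).2]
    exact hw.trans_le (hM w)

lemma xPow_sub_xPow_mem_cutIdeal (q : V) {D₁ D₂ : V → ℕ} {f : V → ℤ}
    (hf : ∀ v, (D₁ v : ℤ) - D₂ v = lap G f v) : xPow K D₁ - xPow K D₂ ∈ cutIdeal G K q := by
  induction hn : spread q f using Nat.strong_induction_on generalizing D₁ D₂ f with
  | _ n ih =>
  by_cases hup : ∃ w, f q < f w
  · obtain ⟨D₁', f', hf', hlt, hmem⟩ := exists_xPow_sub_xPow_mem_cutIdeal_spread_lt (K := K) hf hup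
    rw [← sub_add_sub_cancel _ (xPow K D₁')]
    exact Ideal.add_mem _ hmem (ih _ (hn ▸ hlt) hf' rfl)
  by_cases hdown : ∃ w, f w < f q
  · have hf_neg : ∀ v, (D₂ v : ℤ) - D₁ v = lap G (-f) v := fun v => by
      rw [lap_neg, ← hf v, neg_sub]
    obtain ⟨D₂', f', hf', hlt, hmem⟩ := exists_xPow_sub_xPow_mem_cutIdeal_spread_lt (K := K)
      hf_neg (by simpa only [Pi.neg_apply, neg_lt_neg_iff] using hdown)
    rw [spread_neg, hn] at hlt
    rw [← neg_sub, ← sub_add_sub_cancel _ (xPow K D₂')]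
    exact neg_mem (Ideal.add_mem _ hmem (ih _ hlt hf' rfl))
  push Not at hup hdown
  have hconst : f = fun _ => f q := funext fun v => le_antisymm (hup v) (hdown v)
  have hD : D₁ = D₂ := funext fun v => by
    have := hf v
    rw [hconst, lap_const] at this
    omega
  rw [hD, sub_self]
  exact zero_mem _

end CutIdeal

theorem stmt6_general (V : Type) [Fintype V] [DecidableEq V]
    (G : SimpleGraph V) [DecidableRel G.Adj]
    (K : Type) [Field K] (q : V) :
    Ideal.span {p : MvPolynomial V K | ∃ D₁ D₂ : V → ℕ,
        (∃ f : V → ℤ, ∀ v, (D₁ v : ℤ) - (D₂ v : ℤ) = lap G f v) ∧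
        p = (∏ v, X v ^ D₁ v) - ∏ v, X v ^ D₂ v} =
    Ideal.span {p : MvPolynomial V K | ∃ A : Finset V, A ≠ Finset.univ ∧ q ∈ A ∧
        p = (∏ v, X v ^ cutDiv G Aᶜ A v) - ∏ v, X v ^ cutDiv G A Aᶜ v} := by
  refine le_antisymm (Ideal.span_le.2 ?_) (Ideal.span_le.2 ?_)
  · rintro p ⟨D₁, D₂, ⟨f, hf⟩, rfl⟩
    exact xPow_sub_xPow_mem_cutIdeal q hf
  · rintro p ⟨A, -, -, rfl⟩
    refine Ideal.subset_span ⟨_, _, ⟨(↑Aᶜ : Set V).indicator 1, fun v => ?_⟩, rfl⟩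
    rw [lap_indicator, compl_compl]

theorem stmt6 (V : Type) [Fintype V] [Nonempty V] [DecidableEq V]
    (G : SimpleGraph V) [DecidableRel G.Adj] (hG : G.Connected)
    (K : Type) [Field K] (q : V) :
    Ideal.span {p : MvPolynomial V K | ∃ D₁ D₂ : V → ℕ,
        (∃ f : V → ℤ, ∀ v, (D₁ v : ℤ) - (D₂ v : ℤ) = lap G f v) ∧
        p = (∏ v, X v ^ D₁ v) - ∏ v, X v ^ D₂ v} =
    Ideal.span {p : MvPolynomial V K | ∃ A : Finset V, A ≠ Finset.univ ∧ q ∈ A ∧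
        p = (∏ v, X v ^ cutDiv G Aᶜ A v) - ∏ v, X v ^ cutDiv G A Aᶜ v} :=
  stmt6_general V G K q
end

section
/- For every q ∈ V, the graphic Lawrence ideal J_G equals the ideal of S generated by the cut binomials ∏_{e ∈ E(Aᶜ,A)} y_e − ∏_{e ∈ E(A,Aᶜ)} y_e, taken over all proper subsets A ⊊ V with q ∈ A. -/
open Finset MvPolynomial

/-- The graphic Lawrence ideal `J_G` of a graph `G`, inside the polynomial ring with
one variable per dart of `G`.  A dart `e` has head `e₊ = e.fst` and tail `e₋ = e.snd`. -/
noncomputable def lawrenceIdeal {V : Type} [Fintype V] [DecidableEq V]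
    (G : SimpleGraph V) [DecidableRel G.Adj] (K : Type) [Field K] :
    Ideal (MvPolynomial G.Dart K) :=
  Ideal.span {p | ∃ f : V → ℤ,
    p = (∏ e : G.Dart, X e ^ (f e.fst - f e.snd).toNat) -
        ∏ e : G.Dart, X e ^ (f e.snd - f e.fst).toNat}

section Aux

variable {V : Type} [Fintype V] [DecidableEq V]
variable (G : SimpleGraph V) [DecidableRel G.Adj] (K : Type) [Field K]

/-- The "positive part" monomial of a Lawrence binomial. -/
noncomputable def PmAux (f : V → ℤ) : MvPolynomial G.Dart K :=
  ∏ e : G.Dart, X e ^ (f e.fst - f e.snd).toNat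

/-- The "negative part" monomial of a Lawrence binomial. -/
noncomputable def NmAux (f : V → ℤ) : MvPolynomial G.Dart K :=
  ∏ e : G.Dart, X e ^ (f e.snd - f e.fst).toNat

/-- The set of cut binomials for cuts containing `q`. -/
def cutGens (q : V) : Set (MvPolynomial G.Dart K) :=
  {p | ∃ A : Finset V, A ≠ Finset.univ ∧ q ∈ A ∧
        p = (∏ e ∈ univ.filter (fun e : G.Dart => e.fst ∈ Aᶜ ∧ e.snd ∈ A), X e) -
            ∏ e ∈ univ.filter (fun e : G.Dart => e.fst ∈ A ∧ e.snd ∈ Aᶜ), X e}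

lemma PmAux_factor (f g : V → ℤ) (m : ℤ) (hm : ∀ v, f v ≤ m)
    (hg : ∀ v, g v = if f v = m then f v - 1 else f v) (A : Finset V)
    (hA : ∀ v, v ∈ A ↔ f v = m) :
    PmAux G K f = PmAux G K g *
      ∏ e ∈ univ.filter (fun e : G.Dart => e.fst ∈ A ∧ e.snd ∈ Aᶜ), X e := by
  rw [Finset.prod_filter, PmAux, PmAux, ← Finset.prod_mul_distrib]
  refine Finset.prod_congr rfl fun e _ => ?_
  have h1 := hm e.fst
  have h2 := hm e.snd
  have hcond : (e.fst ∈ A ∧ e.snd ∈ Aᶜ) ↔ (f e.fst = m ∧ ¬ f e.snd = m) := by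
    simp [hA, Finset.mem_compl]
  by_cases hc : f e.fst = m ∧ ¬ f e.snd = m
  · rw [if_pos (hcond.mpr hc)]
    have hexp : (f e.fst - f e.snd).toNat = (g e.fst - g e.snd).toNat + 1 := by
      rw [hg, hg]; split_ifs <;> omega
    rw [hexp, pow_succ]
  · rw [if_neg (fun h => hc (hcond.mp h)), mul_one]
    congr 1
    rw [hg, hg]; split_ifs <;> omega

lemma NmAux_factor (f g : V → ℤ) (m : ℤ) (hm : ∀ v, f v ≤ m)
    (hg : ∀ v, g v = if f v = m then f v - 1 else f v) (A : Finset V)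
    (hA : ∀ v, v ∈ A ↔ f v = m) :
    NmAux G K f = NmAux G K g *
      ∏ e ∈ univ.filter (fun e : G.Dart => e.fst ∈ Aᶜ ∧ e.snd ∈ A), X e := by
  rw [Finset.prod_filter, NmAux, NmAux, ← Finset.prod_mul_distrib]
  refine Finset.prod_congr rfl fun e _ => ?_
  have h1 := hm e.fst
  have h2 := hm e.snd
  have hcond : (e.fst ∈ Aᶜ ∧ e.snd ∈ A) ↔ (f e.snd = m ∧ ¬ f e.fst = m) := by
    simp [hA, Finset.mem_compl]; tauto
  by_cases hc : f e.snd = m ∧ ¬ f e.fst = m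
  · rw [if_pos (hcond.mpr hc)]
    have hexp : (f e.snd - f e.fst).toNat = (g e.snd - g e.fst).toNat + 1 := by
      rw [hg, hg]; split_ifs <;> omega
    rw [hexp, pow_succ]
  · rw [if_neg (fun h => hc (hcond.mp h)), mul_one]
    congr 1
    rw [hg, hg]; split_ifs <;> omega

lemma PmAux_eq_NmAux_of_const (f : V → ℤ) (c : ℤ) (hc : ∀ v, f v = c) :
    PmAux G K f = NmAux G K f := by
  refine Finset.prod_congr rfl fun e _ => ?_
  rw [hc e.fst, hc e.snd]

lemma key_mem (q : V) (n : ℕ) : ∀ f : V → ℤ,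
    (∑ v : V, ((f v - f q).toNat + (f q - f v).toNat)) ≤ n →
    PmAux G K f - NmAux G K f ∈ Ideal.span (cutGens G K q) := by
  induction n with
  | zero =>
    intro f hf
    have hs : ∑ v : V, ((f v - f q).toNat + (f q - f v).toNat) = 0 := Nat.le_zero.mp hf
    have hc : ∀ v, f v = f q := by
      intro v
      have := (Finset.sum_eq_zero_iff.mp hs) v (mem_univ v)
      omega
    rw [PmAux_eq_NmAux_of_const G K f (f q) hc, sub_self]
    exact zero_mem _
  | succ n ih =>
    intro f hf
    by_cases hconst : ∀ v, f v = f q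
    · rw [PmAux_eq_NmAux_of_const G K f (f q) hconst, sub_self]
      exact zero_mem _
    push_neg at hconst
    obtain ⟨v0, hv0⟩ := hconst
    obtain ⟨w, -, hw⟩ := Finset.exists_max_image univ f ⟨q, mem_univ q⟩
    set m := f w with hmw
    have hm : ∀ v, f v ≤ m := fun v => hw v (mem_univ v)
    have hwm : f w = m := rfl
    set A := univ.filter (fun v => f v = m) with hAdef
    have hA : ∀ v, v ∈ A ↔ f v = m := by intro v; simp [hAdef]
    set g : V → ℤ := fun v => if f v = m then f v - 1 else f v with hgdef
    have hg : ∀ v, g v = if f v = m then f v - 1 else f v := fun v => rfl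
    have hAne : A ≠ univ := by
      intro h
      have h1 : f v0 = m := (hA v0).mp (h ▸ mem_univ v0)
      have h2 : f q = m := (hA q).mp (h ▸ mem_univ q)
      exact hv0 (by omega)
    set U : MvPolynomial G.Dart K :=
      ∏ e ∈ univ.filter (fun e : G.Dart => e.fst ∈ A ∧ e.snd ∈ Aᶜ), X e with hU
    set W : MvPolynomial G.Dart K :=
      ∏ e ∈ univ.filter (fun e : G.Dart => e.fst ∈ Aᶜ ∧ e.snd ∈ A), X e with hW
    have hfactP : PmAux G K f = PmAux G K g * U := PmAux_factor G K f g m hm hg A hA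
    have hfactN : NmAux G K f = NmAux G K g * W := NmAux_factor G K f g m hm hg A hA
    -- membership of the cut binomial
    have hWU : W - U ∈ Ideal.span (cutGens G K q) := by
      by_cases hqA : q ∈ A
      · exact Ideal.subset_span ⟨A, hAne, hqA, rfl⟩
      · have hqAc : q ∈ Aᶜ := Finset.mem_compl.mpr hqA
        have hAcne : Aᶜ ≠ univ := by
          intro h
          have : w ∈ Aᶜ := h ▸ mem_univ w
          rw [Finset.mem_compl, hA] at this
          exact this hwm
        have hUW : U - W ∈ Ideal.span (cutGens G K q) := by
          refine Ideal.subset_span ⟨Aᶜ, hAcne, hqAc, ?_⟩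
          rw [compl_compl]
        have := neg_mem hUW
        simpa [neg_sub] using this
    -- measure decreases
    have hdec : (∑ v : V, ((g v - g q).toNat + (g q - g v).toNat)) <
        ∑ v : V, ((f v - f q).toNat + (f q - f v).toNat) := by
      apply Finset.sum_lt_sum
      · intro v _
        have h1 := hm v
        have h2 := hm q
        rw [hg v, hg q]
        split_ifs <;> omega
      · by_cases hq : f q = m
        · refine ⟨v0, mem_univ v0, ?_⟩
          have h1 := hm v0
          rw [hg v0, hg q]
          split_ifs <;> omega
        · refine ⟨w, mem_univ w, ?_⟩
          have h2 := hm q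
          rw [hg w, hg q]
          split_ifs <;> omega
    have hmeas : (∑ v : V, ((g v - g q).toNat + (g q - g v).toNat)) ≤ n := by omega
    have hBg := ih g hmeas
    have hkey : PmAux G K f - NmAux G K f =
        (PmAux G K g - NmAux G K g) * U + -(NmAux G K g * (W - U)) := by
      rw [hfactP, hfactN]; ring
    rw [hkey]
    exact Ideal.add_mem _ (Ideal.mul_mem_right _ _ hBg)
      (neg_mem (Ideal.mul_mem_left _ _ hWU))

end Aux

theorem stmt7 (V : Type) [Fintype V] [Nonempty V] [DecidableEq V]
    (G : SimpleGraph V) [DecidableRel G.Adj] (hG : G.Connected)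
    (K : Type) [Field K] (q : V) :
    lawrenceIdeal G K =
    Ideal.span {p : MvPolynomial G.Dart K |
        ∃ A : Finset V, A ≠ Finset.univ ∧ q ∈ A ∧
        p = (∏ e ∈ univ.filter (fun e : G.Dart => e.fst ∈ Aᶜ ∧ e.snd ∈ A), X e) -
            ∏ e ∈ univ.filter (fun e : G.Dart => e.fst ∈ A ∧ e.snd ∈ Aᶜ), X e} := by
  apply le_antisymm
  · rw [lawrenceIdeal, Ideal.span_le]
    rintro p ⟨f, rfl⟩
    exact key_mem G K q _ f le_rfl
  · rw [Ideal.span_le]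
    rintro p ⟨A, hAu, hqA, rfl⟩
    rw [lawrenceIdeal]
    apply Ideal.subset_span
    refine ⟨fun v => if v ∈ A then 0 else 1, ?_⟩
    congr 1
    · rw [Finset.prod_filter]
      refine Finset.prod_congr rfl fun e _ => ?_
      by_cases h1 : e.fst ∈ A <;> by_cases h2 : e.snd ∈ A <;>
        simp [h1, h2, Finset.mem_compl]
    · rw [Finset.prod_filter]
      refine Finset.prod_congr rfl fun e _ => ?_
      by_cases h1 : e.fst ∈ A <;> by_cases h2 : e.snd ∈ A <;>
        simp [h1, h2, Finset.mem_compl]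
end

section
/- Fix q ∈ V and a real number c > 0. For f : V → ℝ let m(f) = ∏_{e : f(e₊) > f(e₋)} y_e ∈ S (product over all darts e with strictly larger value at the head). Then the ideal of S generated by the monomials m(f), over all f : V → ℝ with f(q) = −c and ∑_{v∈V} f(v) = 0, equals the ideal of S generated by the cut monomials ∏_{e ∈ E(Aᶜ,A)} y_e over all proper subsets A ⊊ V with q ∈ A. (The former ideal is the graphic oriented matroid ideal O_G^q of the graphic hyperplane arrangement; in particular it does not depend on c.) -/
open Finset MvPolynomial

theorem stmt8 (V : Type) [Fintype V] [Nonempty V] [DecidableEq V]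
    (G : SimpleGraph V) [DecidableRel G.Adj] (hG : G.Connected)
    (K : Type) [Field K] (q : V) (c : ℝ) (hc : 0 < c) :
    Ideal.span {p : MvPolynomial G.Dart K | ∃ f : V → ℝ,
        f q = -c ∧ (∑ v, f v) = 0 ∧
        p = ∏ e ∈ univ.filter (fun e : G.Dart => f e.snd < f e.fst), X e} =
    Ideal.span {p : MvPolynomial G.Dart K |
        ∃ A : Finset V, A ≠ Finset.univ ∧ q ∈ A ∧
        p = ∏ e ∈ univ.filter (fun e : G.Dart => e.fst ∈ Aᶜ ∧ e.snd ∈ A), X e} := by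
  apply le_antisymm
  · rw [Ideal.span_le]
    rintro p ⟨f, hfq, hsum, rfl⟩
    set A : Finset V := univ.filter (fun v => f v < 0) with hA
    have hqA : q ∈ A := by
      simp only [hA, mem_filter, mem_univ, true_and, hfq]
      linarith
    have hAne : A ≠ univ := by
      intro h
      have h2 : ∑ v, f v < ∑ _v : V, (0 : ℝ) := by
        apply Finset.sum_lt_sum_of_nonempty univ_nonempty
        intro v _
        have hv : v ∈ A := h ▸ mem_univ v
        simpa [hA] using hv
      simp only [Finset.sum_const_zero] at h2
      linarith
    have hsub : univ.filter (fun e : G.Dart => e.fst ∈ Aᶜ ∧ e.snd ∈ A) ⊆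
        univ.filter (fun e : G.Dart => f e.snd < f e.fst) := by
      intro e he
      simp only [hA, mem_filter, mem_univ, true_and, mem_compl] at he ⊢
      obtain ⟨h1, h2⟩ := he
      linarith
    rw [← Finset.prod_sdiff hsub]
    exact Ideal.mul_mem_left _ _ (Ideal.subset_span ⟨A, hAne, hqA, rfl⟩)
  · rw [Ideal.span_le]
    rintro p ⟨A, hAne, hqA, rfl⟩
    have hcompl : Aᶜ.Nonempty := by
      rw [← Finset.card_pos, Finset.card_compl]
      have := Finset.card_lt_card (lt_of_le_of_ne (Finset.subset_univ A) hAne)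
      rw [Finset.card_univ] at this
      omega
    have hb : (0 : ℝ) < (Aᶜ.card : ℝ) := by
      exact_mod_cast Finset.card_pos.mpr hcompl
    have ha : (0 : ℝ) < (A.card : ℝ) := by
      exact_mod_cast Finset.card_pos.mpr ⟨q, hqA⟩
    set d : ℝ := c * A.card / Aᶜ.card with hd
    have hdpos : 0 < d := by positivity
    set f : V → ℝ := fun v => if v ∈ A then -c else d with hf
    have hfq : f q = -c := by simp [hf, hqA]
    have hsum : ∑ v, f v = 0 := by
      rw [← Finset.sum_add_sum_compl A]
      have h1 : ∑ v ∈ A, f v = A.card * (-c) := by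
        rw [Finset.sum_congr rfl (fun v hv => if_pos hv), Finset.sum_const, nsmul_eq_mul]
      have h2 : ∑ v ∈ Aᶜ, f v = Aᶜ.card * d := by
        rw [Finset.sum_congr rfl (fun v hv => if_neg (Finset.mem_compl.mp hv)),
          Finset.sum_const, nsmul_eq_mul]
      rw [h1, h2, hd]
      field_simp
      ring
    have hfilt : (univ.filter fun e : G.Dart => f e.snd < f e.fst) =
        univ.filter fun e : G.Dart => e.fst ∈ Aᶜ ∧ e.snd ∈ A := by
      ext e
      simp only [mem_filter, mem_univ, true_and, mem_compl]
      by_cases h1 : e.fst ∈ A <;> by_cases h2 : e.snd ∈ A <;>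
        simp [hf, h1, h2] <;> linarith
    exact Ideal.subset_span ⟨f, hfq, hsum, by rw [hfilt]⟩
end

section
/- Fix q ∈ V. The ideal O_G^q equals the intersection ⋂_T P_T taken over all spanning trees T of G, where for each spanning tree T, P_T is the ideal of S generated by {y_e : e ∈ O_T} and O_T is the set of darts of G that are edges of T oriented away from q, i.e. darts e with e₋ adjacent to e₊ in T and dist_T(q, e₊) = dist_T(q, e₋) + 1. Moreover this is the minimal prime decomposition of O_G^q (each P_T is a prime ideal containing O_G^q). -/
open Finset MvPolynomial

/-- The graphic oriented matroid ideal `O_G^q`: the ideal generated by the cut monomials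
`∏_{e ∈ E(Aᶜ,A)} y_e` over all proper subsets `A ⊊ V` with `q ∈ A`.  A dart `e` has head
`e₊ = e.fst` and tail `e₋ = e.snd`, and `E(A,B)` is the set of darts with head in `A` and
tail in `B`. -/
noncomputable def orientedMatroidIdeal {V : Type} [Fintype V] [DecidableEq V]
    (G : SimpleGraph V) [DecidableRel G.Adj] (K : Type) [Field K] (q : V) :
    Ideal (MvPolynomial G.Dart K) :=
  Ideal.span {p | ∃ A : Finset V, A ≠ Finset.univ ∧ q ∈ A ∧
    p = ∏ e ∈ univ.filter (fun e : G.Dart => e.fst ∈ Aᶜ ∧ e.snd ∈ A), X e}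

/-- The prime ideal `P_T` associated to a spanning tree `T` of `G`: the ideal generated by
the variables `y_e` for darts `e` of `G` that are edges of `T` oriented away from `q`. -/
noncomputable def treeIdeal {V : Type} [Fintype V] [DecidableEq V]
    (G : SimpleGraph V) [DecidableRel G.Adj] (K : Type) [Field K]
    (T : SimpleGraph V) (q : V) : Ideal (MvPolynomial G.Dart K) :=
  Ideal.span {p | ∃ e : G.Dart, T.Adj e.snd e.fst ∧
    T.dist q e.fst = T.dist q e.snd + 1 ∧ p = X e}

/-!
Each `P_T` is spanned by variables, hence prime: it is the kernel of the substitution sending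
those variables to `0`. Every cut `E(Aᶜ, A)` contains the `T`-edge through which a vertex
outside `A` nearest to `q` is reached, and that edge points away from `q`; so `O_G^q ≤ P_T`.
Conversely all these ideals are monomial, so take a monomial `y^m` divisible by no cut monomial.
Then every cut contains a dart `e` with `m e = 0`. Growing a tree from `q` along such darts, and
recording depths, gives a spanning tree (connected, with `|V| - 1` edges) whose darts pointing
away from `q` are exactly the darts used, so `y^m ∉ P_T`.
-/

namespace MvPolynomial

variable {σ R : Type*} [CommRing R]

lemma sub_aeval_mem_of_forall_X_sub_mem {I : Ideal (MvPolynomial σ R)}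
    {g : σ → MvPolynomial σ R} (hg : ∀ i, X i - g i ∈ I) (p : MvPolynomial σ R) :
    p - aeval g p ∈ I := by
  induction p using MvPolynomial.induction_on with
  | C a => simp
  | add p r hp hr => simpa [add_sub_add_comm] using add_mem hp hr
  | mul_X p i hp =>
    have : p * X i - aeval g (p * X i) = (p - aeval g p) * X i + aeval g p * (X i - g i) := by
      simp only [map_mul, aeval_X]; ring
    rw [this]
    exact add_mem (I.mul_mem_right _ hp) (I.mul_mem_left _ (hg i))

lemma isPrime_span_X_image [IsDomain R] (s : Set σ) :
    (Ideal.span (X '' s) : Ideal (MvPolynomial σ R)).IsPrime := by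
  classical
  let g (i : σ) : MvPolynomial σ R := if i ∈ s then 0 else X i
  have hker : Ideal.span (X '' s) = RingHom.ker (aeval (R := R) g) := by
    refine le_antisymm (Ideal.span_le.mpr ?_) fun p hp => ?_
    · rintro _ ⟨i, hi, rfl⟩
      simp [g, hi]
    · have hX : ∀ i, X i - g i ∈ Ideal.span (X '' s) := fun i => by
        by_cases hi : i ∈ s
        · simpa [g, hi] using Ideal.subset_span (Set.mem_image_of_mem X hi)
        · simp [g, hi]
      have := sub_aeval_mem_of_forall_X_sub_mem hX p
      rwa [RingHom.mem_ker.mp hp, sub_zero] at this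
  rw [hker]
  exact RingHom.ker_isPrime _

lemma sum_single_one_le_iff {F : Finset σ} {m : σ →₀ ℕ} :
    ∑ i ∈ F, Finsupp.single i 1 ≤ m ↔ ∀ i ∈ F, m i ≠ 0 := by
  classical
  simp only [Finsupp.le_def, Finsupp.coe_finsetSum, Finset.sum_apply, Finsupp.single_apply,
    Finset.sum_ite_eq']
  exact forall_congr' fun i => by by_cases hi : i ∈ F <;> simp [hi, Nat.one_le_iff_ne_zero]

end MvPolynomial

namespace SimpleGraph

variable {V : Type*} {G : SimpleGraph V} {q v : V}

lemma Connected.exists_adj_dist_eq_add_one (hG : G.Connected) (hv : v ≠ q) :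
    ∃ w, G.Adj w v ∧ G.dist q v = G.dist q w + 1 := by
  obtain ⟨p, hp⟩ := hG.exists_walk_length_eq_dist v q
  cases p with
  | nil => exact absurd rfl hv
  | @cons _ w _ hvw p =>
    have hle : G.dist w q ≤ p.length := G.dist_le p
    have htri : G.dist v q ≤ G.dist v w + G.dist w q := hG.dist_triangle
    rw [dist_eq_one_iff_adj.mpr hvw, Walk.length_cons] at *
    exact ⟨w, hvw.symm, by rw [dist_comm, dist_comm (u := q)]; omega⟩

lemma Connected.exists_adj_dist_eq_add_one_of_mem_of_notMem (hG : G.Connected) {A : Set V}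
    (hq : q ∈ A) (hv : v ∉ A) :
    ∃ x ∈ A, ∃ y ∉ A, G.Adj x y ∧ G.dist q y = G.dist q x + 1 := by
  induction hn : G.dist q v using Nat.strong_induction_on generalizing v with
  | _ n ih =>
    obtain ⟨w, hwv, hdist⟩ := hG.exists_adj_dist_eq_add_one (ne_of_mem_of_not_mem hq hv).symm
    by_cases hw : w ∈ A
    · exact ⟨w, hw, v, hv, hwv, hdist⟩
    · exact ih _ (by omega) hw rfl

lemma Reachable.le_add_dist {f : V → ℕ} (hf : ∀ x y, G.Adj x y → f y ≤ f x + 1) {u : V}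
    (h : G.Reachable u v) : f v ≤ f u + G.dist u v := by
  suffices ∀ {a b} (p : G.Walk a b), f b ≤ f a + p.length by
    obtain ⟨p, hp⟩ := h.exists_walk_length_eq_dist
    exact hp ▸ this p
  intro a b p
  induction p with
  | nil => simp
  | @cons x y _ hxy p ih =>
    have := hf x y hxy
    rw [Walk.length_cons]
    omega

def parentGraph (q : V) (par : V → V) : SimpleGraph V :=
  fromEdgeSet {e | ∃ v ≠ q, e = s(v, par v)}

section parentGraph

variable {par : V → V} {dep : V → ℕ}

lemma parentGraph_adj (hdep : ∀ v ≠ q, dep v = dep (par v) + 1) {x y : V} :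
    (parentGraph q par).Adj x y ↔ (x ≠ q ∧ y = par x) ∨ (y ≠ q ∧ x = par y) := by
  simp only [parentGraph, fromEdgeSet_adj, Set.mem_ofPred_eq, Sym2.eq_iff]
  constructor
  · rintro ⟨⟨v, hv, ⟨rfl, rfl⟩ | ⟨rfl, rfl⟩⟩, -⟩
    · exact .inl ⟨hv, rfl⟩
    · exact .inr ⟨hv, rfl⟩
  · rintro (⟨hx, rfl⟩ | ⟨hy, rfl⟩)
    · exact ⟨⟨x, hx, .inl ⟨rfl, rfl⟩⟩, fun h => by have := hdep x hx; rw [← h] at this; omega⟩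
    · exact ⟨⟨y, hy, .inr ⟨rfl, rfl⟩⟩, fun h => by have := hdep y hy; rw [h] at this; omega⟩

lemma parentGraph_reachable (hdep : ∀ v ≠ q, dep v = dep (par v) + 1) (v : V) :
    (parentGraph q par).Reachable q v := by
  induction hn : dep v using Nat.strong_induction_on generalizing v with
  | _ n ih =>
    by_cases hv : v = q
    · exact hv ▸ .rfl
    · have hpar := hdep v hv
      exact (ih _ (by omega) _ rfl).trans ((parentGraph_adj hdep).mpr (.inr ⟨hv, rfl⟩)).reachable

lemma parentGraph_dist (hq : dep q = 0) (hdep : ∀ v ≠ q, dep v = dep (par v) + 1) (v : V) :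
    (parentGraph q par).dist q v = dep v := by
  refine le_antisymm ?_ ?_
  · induction hn : dep v using Nat.strong_induction_on generalizing v with
    | _ n ih =>
      by_cases hv : v = q
      · simp [hv]
      · have hpar := hdep v hv
        have hadj : (parentGraph q par).Adj (par v) v := (parentGraph_adj hdep).mpr (.inr ⟨hv, rfl⟩)
        have htri := (parentGraph_reachable hdep (par v)).dist_triangle_left v
        rw [dist_eq_one_iff_adj.mpr hadj] at htri
        have := ih _ (by omega) (par v) rfl
        omega
  · have := (parentGraph_reachable hdep v).le_add_dist (f := dep) ?_
    · omega
    · intro x y hxy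
      rcases (parentGraph_adj hdep).mp hxy with ⟨hx, rfl⟩ | ⟨hy, rfl⟩
      · have := hdep x hx; omega
      · have := hdep y hy; omega

lemma parentGraph_isTree [Finite V] (hdep : ∀ v ≠ q, dep v = dep (par v) + 1) :
    (parentGraph q par).IsTree := by
  refine isTree_iff_connected_and_card.mpr
    ⟨(connected_iff_exists_forall_reachable _).mpr ⟨q, parentGraph_reachable hdep⟩, ?_⟩
  let edge (v : {v // v ≠ q}) : (parentGraph q par).edgeSet :=
    ⟨s(v, par v), (parentGraph_adj hdep).mpr (.inl ⟨v.2, rfl⟩)⟩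
  have hedge : Function.Bijective edge := by
    refine ⟨fun v w hvw => ?_, ?_⟩
    · rcases Sym2.eq_iff.mp (congrArg Subtype.val hvw) with ⟨h, -⟩ | ⟨h₁, h₂⟩
      · exact Subtype.ext h
      · have := hdep v v.2
        have := hdep w w.2
        rw [← h₁, ← h₂] at *
        omega
    · rintro ⟨e, he⟩
      induction e using Sym2.inductionOn with
      | hf x y =>
        have hxy : (parentGraph q par).Adj x y := he
        rcases (parentGraph_adj hdep).mp hxy with ⟨hx, rfl⟩ | ⟨hy, rfl⟩
        · exact ⟨⟨x, hx⟩, rfl⟩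
        · exact ⟨⟨y, hy⟩, Subtype.ext Sym2.eq_swap⟩
  have := Fintype.ofFinite V
  classical
  rw [← Nat.card_congr (Equiv.ofBijective edge hedge), Nat.card_eq_fintype_card,
    Nat.card_eq_fintype_card, Fintype.card_subtype_compl, Fintype.card_subtype_eq]
  have := Fintype.card_pos_iff.mpr ⟨q⟩
  omega

lemma parentGraph_adj_of_dist_eq_add_one (hq : dep q = 0)
    (hdep : ∀ v ≠ q, dep v = dep (par v) + 1) {x y : V} (hxy : (parentGraph q par).Adj x y)
    (hdist : (parentGraph q par).dist q y = (parentGraph q par).dist q x + 1) :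
    y ≠ q ∧ x = par y := by
  rw [parentGraph_dist hq hdep, parentGraph_dist hq hdep] at hdist
  rcases (parentGraph_adj hdep).mp hxy with ⟨hx, rfl⟩ | h
  · have := hdep x hx
    omega
  · exact h

end parentGraph

section Greedy

variable [Fintype V]

lemma exists_parent_of_forall_exists_rel {R : V → V → Prop} (q : V)
    (h : ∀ A : Finset V, q ∈ A → A ≠ univ → ∃ u ∈ A, ∃ v ∉ A, R u v) :
    ∃ (par : V → V) (dep : V → ℕ), dep q = 0 ∧
      ∀ v ≠ q, dep v = dep (par v) + 1 ∧ R (par v) v := by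
  let IsGrown (A : Finset V) : Prop := q ∈ A ∧ ∃ (par : V → V) (dep : V → ℕ), dep q = 0 ∧
    ∀ v ∈ A, v ≠ q → par v ∈ A ∧ dep v = dep (par v) + 1 ∧ R (par v) v
  classical
  obtain ⟨A, hA, hmax⟩ := (univ.filter IsGrown).exists_max_image card
    ⟨{q}, mem_filter.mpr ⟨mem_univ _, mem_singleton_self q, id, fun _ => 0, rfl,
      fun v hv hvq => absurd (mem_singleton.mp hv) hvq⟩⟩
  obtain ⟨hqA, par, dep, hq, hpar⟩ := (mem_filter.mp hA).2
  by_cases hAu : A = univ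
  · subst hAu
    exact ⟨par, dep, hq, fun v hv => (hpar v (mem_univ v) hv).2⟩
  exfalso
  obtain ⟨u, hu, v, hv, huv⟩ := h A hqA hAu
  have hgrown : IsGrown (insert v A) := by
    refine ⟨mem_insert_of_mem hqA, Function.update par v u,
      Function.update dep v (dep u + 1), ?_, fun w hw hwq => ?_⟩
    · rwa [Function.update_of_ne (ne_of_mem_of_not_mem hqA hv)]
    rcases mem_insert.mp hw with rfl | hw
    · simp [hu, huv, Function.update_of_ne (ne_of_mem_of_not_mem hu hv)]
    · obtain ⟨hparA, hdep, hR⟩ := hpar w hw hwq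
      simp [Function.update_of_ne (ne_of_mem_of_not_mem hw hv),
        Function.update_of_ne (ne_of_mem_of_not_mem hparA hv), hparA, hdep, hR]
  have := hmax _ (mem_filter.mpr ⟨mem_univ _, hgrown⟩)
  rw [card_insert_of_notMem hv] at this
  omega

theorem exists_isTree_le_of_forall_exists_rel (G : SimpleGraph V) (q : V) {R : V → V → Prop}
    (hRG : ∀ u v, R u v → G.Adj u v)
    (h : ∀ A : Finset V, q ∈ A → A ≠ univ → ∃ u ∈ A, ∃ v ∉ A, R u v) :
    ∃ T ≤ G, T.IsTree ∧ ∀ x y, T.Adj x y → T.dist q y = T.dist q x + 1 → R x y := by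
  obtain ⟨par, dep, hq, hpar⟩ := exists_parent_of_forall_exists_rel q h
  have hdep v hv : dep v = dep (par v) + 1 := (hpar v hv).1
  refine ⟨parentGraph q par, fun x y hxy => ?_, parentGraph_isTree hdep, fun x y hxy hdist => ?_⟩
  · rcases (parentGraph_adj hdep).mp hxy with ⟨hx, rfl⟩ | ⟨hy, rfl⟩
    · exact (hRG _ _ (hpar x hx).2).symm
    · exact hRG _ _ (hpar y hy).2
  · obtain ⟨hy, rfl⟩ := parentGraph_adj_of_dist_eq_add_one hq hdep hxy hdist
    exact (hpar y hy).2

end Greedy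

end SimpleGraph

section TreeIdeals

variable {V : Type} [Fintype V] [DecidableEq V] {G : SimpleGraph V} [DecidableRel G.Adj]
  {K : Type} [Field K] {q : V}

lemma treeIdeal_eq_span_X_image (T : SimpleGraph V) :
    treeIdeal G K T q =
      Ideal.span (X '' {e : G.Dart | T.Adj e.snd e.fst ∧ T.dist q e.fst = T.dist q e.snd + 1}) := by
  simp only [treeIdeal, Set.image, Set.mem_ofPred_eq, eq_comm, and_assoc]

lemma orientedMatroidIdeal_eq_span_monomial_image :
    orientedMatroidIdeal G K q = Ideal.span ((fun m => monomial m (1 : K)) ''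
      {m | ∃ A : Finset V, A ≠ univ ∧ q ∈ A ∧
        m = ∑ e ∈ univ.filter (fun e : G.Dart => e.fst ∈ Aᶜ ∧ e.snd ∈ A), Finsupp.single e 1}) := by
  have hprod (F : Finset G.Dart) : ∏ e ∈ F, (X e : MvPolynomial G.Dart K) =
      monomial (∑ e ∈ F, Finsupp.single e 1) 1 := by
    rw [monomial_sum_one]
    rfl
  simp only [orientedMatroidIdeal, hprod]
  congr 1
  ext p
  simp [eq_comm, and_assoc]

lemma treeIdeal_isPrime (T : SimpleGraph V) : (treeIdeal G K T q).IsPrime := by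
  rw [treeIdeal_eq_span_X_image]
  exact isPrime_span_X_image _

lemma orientedMatroidIdeal_le_treeIdeal {T : SimpleGraph V} (hTG : T ≤ G) (hT : T.Connected) :
    orientedMatroidIdeal G K q ≤ treeIdeal G K T q := by
  rw [orientedMatroidIdeal, Ideal.span_le]
  rintro _ ⟨A, hA, hqA, rfl⟩
  obtain ⟨v, hv⟩ : ∃ v, v ∉ A := by simpa [eq_univ_iff_forall] using hA
  obtain ⟨x, hx, y, hy, hxy, hdist⟩ :=
    hT.exists_adj_dist_eq_add_one_of_mem_of_notMem (A := ↑A) hqA hv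
  let e : G.Dart := ⟨(y, x), hTG hxy.symm⟩
  exact Ideal.prod_mem _ (i := e) (by simpa [e] using ⟨hy, hx⟩)
    (Ideal.subset_span ⟨e, hxy, hdist, rfl⟩)

lemma sInf_treeIdeal_le_orientedMatroidIdeal :
    sInf {P : Ideal (MvPolynomial G.Dart K) |
      ∃ T : SimpleGraph V, T ≤ G ∧ T.IsTree ∧ P = treeIdeal G K T q} ≤
      orientedMatroidIdeal G K q := by
  intro p hp
  rw [orientedMatroidIdeal_eq_span_monomial_image, mem_ideal_span_monomial_image]
  intro m hm
  by_contra! hcut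
  -- `R u v`: the dart `e` from `u` to `v` has `y_e ∤ y^m`
  obtain ⟨T, hTG, hT, hTm⟩ := SimpleGraph.exists_isTree_le_of_forall_exists_rel G q
    (R := fun u v => ∃ h : G.Adj v u, m ⟨(v, u), h⟩ = 0)
    (fun u v ⟨h, _⟩ => h.symm)
    fun A hqA hA => by
      obtain ⟨e, he, hme⟩ := not_forall₂.mp <|
        mt sum_single_one_le_iff.mpr (hcut _ ⟨A, hA, hqA, rfl⟩)
      simp only [mem_filter, mem_univ, true_and, mem_compl] at he
      exact ⟨e.snd, he.2, e.fst, he.1, e.adj, not_not.mp hme⟩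
  have hpT := Ideal.mem_sInf.mp hp ⟨T, hTG, hT, rfl⟩
  rw [treeIdeal_eq_span_X_image, mem_ideal_span_X_image] at hpT
  obtain ⟨e, ⟨hadj, hdist⟩, hme⟩ := hpT m hm
  exact hme (hTm _ _ hadj hdist).2

end TreeIdeals

theorem stmt9_general (V : Type) [Fintype V] [DecidableEq V]
    (G : SimpleGraph V) [DecidableRel G.Adj]
    (K : Type) [Field K] (q : V) :
    orientedMatroidIdeal G K q =
      sInf {P : Ideal (MvPolynomial G.Dart K) |
        ∃ T : SimpleGraph V, T ≤ G ∧ T.IsTree ∧ P = treeIdeal G K T q} ∧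
    ∀ T : SimpleGraph V, T ≤ G → T.IsTree →
      (treeIdeal G K T q (V := V)).IsPrime ∧
        orientedMatroidIdeal G K q ≤ treeIdeal G K T q := by
  refine ⟨le_antisymm ?_ sInf_treeIdeal_le_orientedMatroidIdeal,
    fun T hTG hT => ⟨treeIdeal_isPrime T, orientedMatroidIdeal_le_treeIdeal hTG hT.connected⟩⟩
  refine le_sInf ?_
  rintro _ ⟨T, hTG, hT, rfl⟩
  exact orientedMatroidIdeal_le_treeIdeal hTG hT.connected

theorem stmt9 (V : Type) [Fintype V] [Nonempty V] [DecidableEq V]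
    (G : SimpleGraph V) [DecidableRel G.Adj] (hG : G.Connected)
    (K : Type) [Field K] (q : V) :
    orientedMatroidIdeal G K q =
      sInf {P : Ideal (MvPolynomial G.Dart K) |
        ∃ T : SimpleGraph V, T ≤ G ∧ T.IsTree ∧ P = treeIdeal G K T q} ∧
    ∀ T : SimpleGraph V, T ≤ G → T.IsTree →
      (treeIdeal G K T q (V := V)).IsPrime ∧
        orientedMatroidIdeal G K q ≤ treeIdeal G K T q :=
  stmt9_general V G K q
end

section
/- Fix q ∈ V and a function ev assigning to each vertex v ∈ V a dart ev(v) of G with head v. Let L = {y_e − y_{ev(e₊)} : e a dart of G with e ≠ ev(e₊)} and L^{(q)} = L ∪ {y_{ev(q)}}. Then every list without repetitions whose set of entries is exactly L^{(q)} is a regular sequence on the S-module S/O_G^q. (In particular L^{(q)} is a linear system of parameters for S/O_G^q.) -/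
open Finset MvPolynomial

/-!
Quotienting by the forms `y_e - y_{ev(e₊)}` for the darts `e` of a set `D` amounts to
substituting `y_{ev(e₊)}` for `y_e`. This substitution turns `O_G^q` into the monomial ideal
generated by the collapsed cut monomials (together with `y_{ev(q)}` once that form has been used),
so every intermediate quotient is governed by a monomial ideal, and regularity of the next form is
a colon computation there. The variable `y_{ev(q)}` divides no collapsed cut monomial, since
`ev(q)` has head `q ∈ A`. For a new dart `e`, if a monomial `m` is outside the monomial ideal
while `y_e m` and `y_{ev(e₊)} m` are inside, witnessed by cuts `A` and `B`, then the cut of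
`A ∩ B` already divides `m`. Since this works for every `D`, the forms may be used in any order.
The ideals stay proper because `G` is connected, so no cut monomial is constant.
-/

namespace Finsupp

variable {σ : Type*}

theorem apply_le_of_le_add_single {g n : σ →₀ ℕ} {x d : σ}
    (h : g ≤ n + Finsupp.single x 1) (hd : d ≠ x) : g d ≤ n d := by
  simpa [Finsupp.single_eq_of_ne hd] using h d

theorem apply_eq_add_one_of_le_add_single {g n : σ →₀ ℕ} {x : σ}
    (h : g ≤ n + Finsupp.single x 1) (hn : ¬ g ≤ n) : g x = n x + 1 := by
  have hx : ¬ g x ≤ n x := fun hx => hn fun d => by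
    by_cases hd : d = x
    · exact hd ▸ hx
    · exact apply_le_of_le_add_single h hd
  have := h x
  simp only [Finsupp.coe_add, Pi.add_apply, Finsupp.single_eq_same] at this
  omega

end Finsupp

namespace MvPolynomial

variable {σ R : Type*} [CommRing R]

theorem mem_span_monomial_of_X_mul_mem {gens : Set (σ →₀ ℕ)} {u : σ}
    (h : ∀ n, (∃ g ∈ gens, g ≤ n + Finsupp.single u 1) → ∃ g ∈ gens, g ≤ n)
    {f : MvPolynomial σ R}
    (hf : X u * f ∈ Ideal.span ((fun s => monomial s (1 : R)) '' gens)) :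
    f ∈ Ideal.span ((fun s => monomial s (1 : R)) '' gens) := by
  classical
  rw [mem_ideal_span_monomial_image] at hf ⊢
  intro m hm
  refine h m (hf _ ?_)
  rwa [mem_support_iff, coeff_X_mul', if_pos (by simp), add_tsub_cancel_right,
    ← mem_support_iff]

theorem mem_span_monomial_of_X_sub_X_mul_mem {gens : Set (σ →₀ ℕ)} {e t : σ}
    (het : e ≠ t)
    (h : ∀ n, ¬ (∃ g ∈ gens, g ≤ n) → (∃ g ∈ gens, g ≤ n + Finsupp.single e 1) →
      n e = 0 ∧ ¬ ∃ g ∈ gens, g ≤ n + Finsupp.single t 1)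
    {f : MvPolynomial σ R}
    (hf : (X e - X t) * f ∈ Ideal.span ((fun s => monomial s (1 : R)) '' gens)) :
    f ∈ Ideal.span ((fun s => monomial s (1 : R)) '' gens) := by
  classical
  rw [mem_ideal_span_monomial_image] at hf ⊢
  have balance (n : σ →₀ ℕ) (hn : ¬ ∃ g ∈ gens, g ≤ n) :
      (if e ∈ n.support then coeff (n - Finsupp.single e 1) f else 0) =
        if t ∈ n.support then coeff (n - Finsupp.single t 1) f else 0 := by
    have h0 : coeff n ((X e - X t) * f) = 0 := by
      by_contra h0
      exact hn (hf n (mem_support_iff.mpr h0))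
    rwa [sub_mul, coeff_sub, sub_eq_zero, coeff_X_mul', coeff_X_mul'] at h0
  -- strong induction on the exponent of `t`, applying `balance` at `m + eₑ` or at `m + eₜ`
  suffices ∀ k m, m t = k → coeff m f ≠ 0 → ∃ g ∈ gens, g ≤ m from
    fun m hm => this _ m rfl (mem_support_iff.mp hm)
  intro k
  induction k using Nat.strong_induction_on with
  | _ k ih =>
  rintro m rfl hc
  by_contra hm
  by_cases hme : ∃ g ∈ gens, g ≤ m + Finsupp.single e 1
  · obtain ⟨hm0, hmt⟩ := h m hm hme
    have := balance _ hmt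
    simp [het, hm0] at this
    exact hc this.symm
  · have := balance _ hme
    simp [het] at this
    split_ifs at this with hmt
    · exact hc this
    refine hme ?_
    obtain ⟨g, hg, hle⟩ := ih _ (by simp [het]; omega) _ rfl (this ▸ hc)
    exact ⟨g, hg, hle.trans tsub_le_self⟩

theorem sub_rename_mem_span_X_sub_X (c : σ → σ) (f : MvPolynomial σ R) :
    f - rename c f ∈ Ideal.span (Set.range fun i => (X i - X (c i) : MvPolynomial σ R)) := by
  set I := Ideal.span (Set.range fun i => (X i - X (c i) : MvPolynomial σ R))
  rw [← Ideal.Quotient.eq]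
  have : (Ideal.Quotient.mkₐ R I).comp (rename c) = Ideal.Quotient.mkₐ R I := by
    ext i
    simpa using (Ideal.Quotient.eq.mpr (Ideal.subset_span ⟨i, rfl⟩ : X i - X (c i) ∈ I)).symm
  exact (DFunLike.congr_fun this f).symm

theorem rename_prod_X {τ : Type*} (c : σ → τ) (s : Finset σ) :
    rename c (∏ e ∈ s, X e : MvPolynomial σ R) =
      monomial (∑ e ∈ s, Finsupp.single (c e) 1) 1 := by
  simp only [map_prod, rename_X, monomial_sum_one]
  rfl

end MvPolynomial

open Pointwise in
theorem RingTheory.Sequence.isRegular_quotient_cons {R : Type*} [CommRing R] {I : Ideal R} {s : R}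
    {l : List R}
    (hs : ∀ f, s * f ∈ I → f ∈ I) (hl : IsRegular (R ⧸ (I ⊔ Ideal.span {s})) l) :
    IsRegular (R ⧸ I) (s :: l) := by
  rw [isRegular_cons_iff]
  refine ⟨(isSMulRegular_quotient_iff_mem_of_smul_mem I s).mpr hs, ?_⟩
  have hsmul : s • (⊤ : Submodule R (R ⧸ I)) = Submodule.map I.mkQ (Ideal.span {s}) := by
    rw [← Submodule.ideal_span_singleton_smul, ← Submodule.range_mkQ, LinearMap.range_eq_map,
      ← Submodule.map_smul'', smul_eq_mul, Ideal.mul_top]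
  exact ((Submodule.quotEquivOfEq _ _ hsmul).trans
    (Submodule.quotientQuotientEquivQuotientSup I (Ideal.span {s}))).isRegular_congr l |>.mpr hl

namespace GraphicOrientedMatroid

variable {V : Type} [DecidableEq V] {G : SimpleGraph V}

section Collapse

variable (ev : V → G.Dart) (D : Finset G.Dart)

def collapse (e : G.Dart) : G.Dart :=
  if e ∈ D then ev e.fst else e

variable {ev D}

lemma collapse_of_notMem {e : G.Dart} (he : e ∉ D) : collapse ev D e = e := if_neg he

lemma collapse_fst (hev : ∀ v, (ev v).fst = v) (f : G.Dart) : (collapse ev D f).fst = f.fst := by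
  unfold collapse
  split_ifs <;> simp [hev]

lemma collapse_ev (hev : ∀ v, (ev v).fst = v) (hD : ∀ d ∈ D, d ≠ ev d.fst) (v : V) :
    collapse ev D (ev v) = ev v :=
  if_neg fun h => hD _ h (by rw [hev])

lemma eq_of_collapse_eq (hev : ∀ v, (ev v).fst = v) {e f : G.Dart} (he : e ≠ ev e.fst)
    (h : collapse ev D f = e) : f = e := by
  unfold collapse at h
  split_ifs at h
  · exact absurd (by rw [← h, hev]) he
  · exact h

end Collapse

variable [Fintype V] [DecidableRel G.Adj]

variable (G) in
def cutDarts (A : Finset V) : Finset G.Dart :=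
  univ.filter fun e : G.Dart => e.fst ∈ Aᶜ ∧ e.snd ∈ A

@[simp]
lemma mem_cutDarts {A : Finset V} {f : G.Dart} :
    f ∈ cutDarts G A ↔ f.fst ∉ A ∧ f.snd ∈ A := by
  simp [cutDarts]

lemma cutDarts_nonempty (hG : G.Connected) {A : Finset V} (hA : A ≠ univ) {q : V} (hq : q ∈ A) :
    (cutDarts G A).Nonempty := by
  obtain ⟨v, hv⟩ : ∃ v, v ∉ A := by simpa [eq_univ_iff_forall] using hA
  obtain ⟨d, -, hd, hd'⟩ := (hG.preconnected q v).some.exists_boundary_dart A hq hv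
  exact ⟨d.symm, by simpa using ⟨hd', hd⟩⟩

section CutExponent

variable (ev : V → G.Dart) (D : Finset G.Dart)

noncomputable def cutExponent (A : Finset V) : G.Dart →₀ ℕ :=
  ∑ f ∈ cutDarts G A, Finsupp.single (collapse ev D f) 1

variable {ev D}

lemma cutExponent_apply (A : Finset V) (d : G.Dart) :
    cutExponent ev D A d = #{f ∈ cutDarts G A | collapse ev D f = d} := by
  rw [cutExponent, Finsupp.finsetSum_apply, card_filter]
  simp [Finsupp.single_apply]

lemma cutExponent_eq_zero (hev : ∀ v, (ev v).fst = v) {A : Finset V} {d : G.Dart}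
    (hd : d.fst ∈ A) : cutExponent ev D A d = 0 := by
  rw [cutExponent_apply, card_eq_zero, filter_eq_empty_iff]
  rintro f hf rfl
  exact (mem_cutDarts.mp hf).1 (collapse_fst hev f ▸ hd)

lemma cutExponent_inter_le (hev : ∀ v, (ev v).fst = v) {A : Finset V} (B : Finset V)
    {d : G.Dart} (hd : d.fst ∉ A) : cutExponent ev D (A ∩ B) d ≤ cutExponent ev D A d := by
  simp only [cutExponent_apply]
  refine card_le_card fun f => ?_
  simp only [mem_filter, mem_cutDarts, mem_inter]
  rintro ⟨⟨-, hfA, -⟩, rfl⟩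
  exact ⟨⟨collapse_fst hev f ▸ hd, hfA⟩, rfl⟩

lemma cutExponent_le_one (hev : ∀ v, (ev v).fst = v) (A : Finset V) {e : G.Dart}
    (he : e ≠ ev e.fst) : cutExponent ev D A e ≤ 1 := by
  rw [cutExponent_apply, ← card_singleton e]
  exact card_le_card fun f hf =>
    mem_singleton.mpr (eq_of_collapse_eq hev he (mem_filter.mp hf).2)

end CutExponent

section Combinatorics

variable (ev : V → G.Dart) (D : Finset G.Dart)

def collapsedGens (q : V) (b : Bool) : Set (G.Dart →₀ ℕ) :=
  cutExponent ev D '' {A | A ≠ univ ∧ q ∈ A} ∪ {n | b ∧ n = Finsupp.single (ev q) 1}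

variable {ev D} {q : V} {b : Bool}

lemma exists_cut_of_le_add_single (hev : ∀ v, (ev v).fst = v) {e : G.Dart} (he : e ≠ ev e.fst)
    {n : G.Dart →₀ ℕ} (hn : ¬ ∃ g ∈ collapsedGens ev D q b, g ≤ n)
    (h : ∃ g ∈ collapsedGens ev D q b, g ≤ n + Finsupp.single e 1) :
    n e = 0 ∧ ∃ A, q ∈ A ∧ e.fst ∉ A ∧ ∀ d ≠ e, cutExponent ev D A d ≤ n d := by
  obtain ⟨g, hg, hle⟩ := h
  have hx := Finsupp.apply_eq_add_one_of_le_add_single hle fun h => hn ⟨g, hg, h⟩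
  rcases hg with ⟨A, ⟨-, hqA⟩, rfl⟩ | ⟨-, rfl⟩
  · have := cutExponent_le_one hev A he (D := D)
    refine ⟨by omega, A, hqA, fun heA => ?_, fun d => Finsupp.apply_le_of_le_add_single hle⟩
    have := cutExponent_eq_zero hev heA (D := D) (d := e)
    omega
  · have hq : ev q = e := by
      by_contra h
      simp [Finsupp.single_eq_of_ne' h] at hx
    exact absurd (by rw [← hq, hev]) he

lemma not_exists_le_add_single_ev (hev : ∀ v, (ev v).fst = v) {e : G.Dart} (he : e ≠ ev e.fst)
    {n : G.Dart →₀ ℕ} (hn : ¬ ∃ g ∈ collapsedGens ev D q b, g ≤ n)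
    (hz : ∃ g ∈ collapsedGens ev D q b, g ≤ n + Finsupp.single e 1) :
    ¬ ∃ g ∈ collapsedGens ev D q b, g ≤ n + Finsupp.single (ev e.fst) 1 := by
  obtain ⟨-, A, hqA, heA, hA⟩ := exists_cut_of_le_add_single hev he hn hz
  rintro ⟨g, hg, hle⟩
  have hB (d : G.Dart) := Finsupp.apply_le_of_le_add_single (d := d) hle
  have hx := Finsupp.apply_eq_add_one_of_le_add_single hle fun h => hn ⟨g, hg, h⟩
  rcases hg with ⟨B, ⟨-, hqB⟩, rfl⟩ | ⟨-, rfl⟩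
  · have heB : e.fst ∉ B := fun heB => by
      have := cutExponent_eq_zero hev (D := D) (d := ev e.fst) (by rwa [hev])
      omega
    -- off `e` the cut of `A` is below `n`, off `ev e.fst` that of `B`; the cut of `A ∩ B` is
    -- below the first where heads lie outside `A` and below the second where they lie outside `B`
    refine hn ⟨_, .inl ⟨A ∩ B, ⟨fun h => heA (h ▸ mem_univ _ |> mem_inter.mp).1,
      mem_inter.mpr ⟨hqA, hqB⟩⟩, rfl⟩, fun d => ?_⟩
    by_cases hdA : d.fst ∈ A <;> by_cases hdB : d.fst ∈ B
    · simp [cutExponent_eq_zero hev (mem_inter.mpr ⟨hdA, hdB⟩)]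
    · rw [inter_comm]
      refine (cutExponent_inter_le hev A hdB).trans (hB d ?_)
      rintro rfl
      exact heA (by rwa [hev] at hdA)
    · exact (cutExponent_inter_le hev B hdA).trans (hA d (by rintro rfl; exact heB hdB))
    · by_cases hde : d = e
      · subst hde
        rw [inter_comm]
        exact (cutExponent_inter_le hev A hdB).trans (hB d he)
      · exact (cutExponent_inter_le hev B hdA).trans (hA d hde)
  · have hq : ev q = ev e.fst := by
      by_contra h
      simp [Finsupp.single_eq_of_ne' h] at hx
    exact heA (by rwa [← hev e.fst, ← hq, hev])

lemma exists_le_of_le_add_single_ev (hev : ∀ v, (ev v).fst = v) {n : G.Dart →₀ ℕ}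
    (h : ∃ g ∈ collapsedGens ev D q false, g ≤ n + Finsupp.single (ev q) 1) :
    ∃ g ∈ collapsedGens ev D q false, g ≤ n := by
  obtain ⟨g, hg, hle⟩ := h
  refine ⟨g, hg, ?_⟩
  by_contra hgn
  have hx := Finsupp.apply_eq_add_one_of_le_add_single hle hgn
  rcases hg with ⟨A, ⟨-, hqA⟩, rfl⟩ | ⟨⟨⟩, -⟩
  rw [cutExponent_eq_zero hev (by rwa [hev])] at hx
  omega

end Combinatorics

section Ideals

variable (K : Type) [Field K] (ev : V → G.Dart) (D : Finset G.Dart) (q : V) (b : Bool)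

noncomputable def collapsedIdeal : Ideal (MvPolynomial G.Dart K) :=
  Ideal.span ((fun n => monomial n 1) '' collapsedGens ev D q b)

/-- The ideal reached from `O_G^q` after using the forms `y_e - y_{ev(e₊)}`, `e ∈ D`, and also
`y_{ev(q)}` if `b`. -/
noncomputable def stageIdeal : Ideal (MvPolynomial G.Dart K) :=
  orientedMatroidIdeal G K q ⊔ Ideal.span ((fun e => X e - X (ev e.fst)) '' (D : Set G.Dart)) ⊔
    if b then Ideal.span {X (ev q)} else ⊥

variable {K ev D q b}

lemma orientedMatroidIdeal_le_stageIdeal : orientedMatroidIdeal G K q ≤ stageIdeal K ev D q b :=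
  le_sup_left.trans le_sup_left

lemma X_sub_X_mem_stageIdeal {e : G.Dart} (he : e ∈ D) :
    X e - X (ev e.fst) ∈ stageIdeal K ev D q b :=
  Ideal.mem_sup_left (Ideal.mem_sup_right (Ideal.subset_span ⟨e, he, rfl⟩))

lemma stageIdeal_empty_false : stageIdeal K ev ∅ q false = orientedMatroidIdeal G K q := by
  simp [stageIdeal]

lemma stageIdeal_sup_X_sub_X (e : G.Dart) :
    stageIdeal K ev D q b ⊔ Ideal.span {X e - X (ev e.fst)} =
      stageIdeal K ev (insert e D) q b := by
  simp only [stageIdeal, coe_insert, Set.image_insert_eq, Ideal.span_insert]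
  ac_rfl

lemma stageIdeal_false_sup_X :
    stageIdeal K ev D q false ⊔ Ideal.span {X (ev q)} = stageIdeal K ev D q true := by
  simp [stageIdeal]

lemma stageIdeal_ne_top (hG : G.Connected) : stageIdeal K ev D q b ≠ ⊤ := by
  refine ne_top_of_le_ne_top (RingHom.ker_ne_top (constantCoeff (R := K) (σ := G.Dart))) ?_
  simp only [stageIdeal, orientedMatroidIdeal, sup_le_iff, Ideal.span_le]
  refine ⟨⟨?_, ?_⟩, ?_⟩
  · rintro _ ⟨A, hA, hqA, rfl⟩
    obtain ⟨f, hf⟩ := cutDarts_nonempty hG hA hqA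
    rw [SetLike.mem_coe, RingHom.mem_ker, map_prod]
    exact prod_eq_zero hf (constantCoeff_X K f)
  · rintro _ ⟨e, -, rfl⟩
    simp
  · split_ifs
    · simp
    · exact bot_le

lemma sub_rename_collapse_mem (f : MvPolynomial G.Dart K) :
    f - rename (collapse ev D) f ∈ stageIdeal K ev D q b := by
  refine Ideal.span_le.mpr ?_ (sub_rename_mem_span_X_sub_X (collapse ev D) f)
  rintro _ ⟨i, rfl⟩
  unfold collapse
  dsimp only
  split_ifs with hi
  · exact X_sub_X_mem_stageIdeal hi
  · simp

lemma map_rename_collapse_stageIdeal_le (hev : ∀ v, (ev v).fst = v)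
    (hD : ∀ d ∈ D, d ≠ ev d.fst) :
    (stageIdeal K ev D q b).map (rename (collapse ev D)) ≤ collapsedIdeal K ev D q b := by
  simp only [stageIdeal, Ideal.map_sup, orientedMatroidIdeal, Ideal.map_span, sup_le_iff,
    Ideal.span_le]
  refine ⟨⟨?_, ?_⟩, ?_⟩
  · rintro _ ⟨_, ⟨A, hA, hqA, rfl⟩, rfl⟩
    rw [SetLike.mem_coe, rename_prod_X]
    exact Ideal.subset_span ⟨_, .inl ⟨A, ⟨hA, hqA⟩, rfl⟩, rfl⟩
  · rintro _ ⟨_, ⟨e, he, rfl⟩, rfl⟩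
    rw [SetLike.mem_coe, map_sub, rename_X, rename_X, collapse_ev hev hD, collapse,
      if_pos (mem_coe.mp he), sub_self]
    exact zero_mem _
  · cases b
    · simp
    · simp only [if_true, Ideal.map_span, Set.image_singleton, Ideal.span_le,
        Set.singleton_subset_iff, rename_X, collapse_ev hev hD]
      exact Ideal.subset_span ⟨_, .inr ⟨rfl, rfl⟩, rfl⟩

lemma collapsedIdeal_le_stageIdeal : collapsedIdeal K ev D q b ≤ stageIdeal K ev D q b := by
  rw [collapsedIdeal, Ideal.span_le]
  rintro _ ⟨_, ⟨A, ⟨hA, hqA⟩, rfl⟩ | ⟨hb, rfl⟩, rfl⟩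
  · have hcut : ∏ e ∈ cutDarts G A, X e ∈ stageIdeal K ev D q b :=
      orientedMatroidIdeal_le_stageIdeal (Ideal.subset_span ⟨A, hA, hqA, rfl⟩)
    have := sub_mem hcut (sub_rename_collapse_mem (∏ e ∈ cutDarts G A, X e))
    rwa [sub_sub_cancel, rename_prod_X] at this
  · subst hb
    show X (ev q) ∈ stageIdeal K ev D q true
    exact Ideal.mem_sup_right (by rw [if_pos rfl]; exact Ideal.mem_span_singleton_self _)

lemma mem_stageIdeal_iff (hev : ∀ v, (ev v).fst = v) (hD : ∀ d ∈ D, d ≠ ev d.fst)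
    {f : MvPolynomial G.Dart K} :
    f ∈ stageIdeal K ev D q b ↔ rename (collapse ev D) f ∈ collapsedIdeal K ev D q b :=
  ⟨fun h => map_rename_collapse_stageIdeal_le hev hD (Ideal.mem_map_of_mem _ h),
    fun h => sub_add_cancel f _ ▸
      add_mem (sub_rename_collapse_mem f) (collapsedIdeal_le_stageIdeal h)⟩

end Ideals

section Regularity

variable {K : Type} [Field K] {ev : V → G.Dart} {D : Finset G.Dart} {q : V} {b : Bool}

lemma mem_stageIdeal_of_X_sub_X_mul_mem (hev : ∀ v, (ev v).fst = v)
    (hD : ∀ d ∈ D, d ≠ ev d.fst) {e : G.Dart} (heD : e ∉ D) (he : e ≠ ev e.fst)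
    {f : MvPolynomial G.Dart K} (hf : (X e - X (ev e.fst)) * f ∈ stageIdeal K ev D q b) :
    f ∈ stageIdeal K ev D q b := by
  rw [mem_stageIdeal_iff hev hD] at hf ⊢
  rw [map_mul, map_sub, rename_X, rename_X, collapse_of_notMem heD, collapse_ev hev hD] at hf
  exact mem_span_monomial_of_X_sub_X_mul_mem he (fun n hn hz =>
    ⟨(exists_cut_of_le_add_single hev he hn hz).1, not_exists_le_add_single_ev hev he hn hz⟩) hf

lemma mem_stageIdeal_of_X_mul_mem (hev : ∀ v, (ev v).fst = v) (hD : ∀ d ∈ D, d ≠ ev d.fst)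
    {f : MvPolynomial G.Dart K} (hf : X (ev q) * f ∈ stageIdeal K ev D q false) :
    f ∈ stageIdeal K ev D q false := by
  rw [mem_stageIdeal_iff hev hD] at hf ⊢
  rw [map_mul, rename_X, collapse_ev hev hD] at hf
  exact mem_span_monomial_of_X_mul_mem (fun n => exists_le_of_le_add_single_ev hev) hf

theorem isRegular_stageIdeal (hG : G.Connected) (hev : ∀ v, (ev v).fst = v)
    {l : List (MvPolynomial G.Dart K)} (hl : l.Nodup) (hD : ∀ d ∈ D, d ≠ ev d.fst)
    (hmem : ∀ s ∈ l, (∃ e ∉ D, e ≠ ev e.fst ∧ s = X e - X (ev e.fst)) ∨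
      (b = false ∧ s = X (ev q))) :
    RingTheory.Sequence.IsRegular (MvPolynomial G.Dart K ⧸ stageIdeal K ev D q b) l := by
  induction l generalizing D b with
  | nil =>
    have : Nontrivial (MvPolynomial G.Dart K ⧸ stageIdeal K ev D q b) :=
      Ideal.Quotient.nontrivial_iff.mpr (stageIdeal_ne_top hG)
    exact .nil _ _
  | cons s l ih =>
    obtain ⟨hsl, htail⟩ := List.nodup_cons.mp hl
    rcases hmem s List.mem_cons_self with ⟨e, heD, he, rfl⟩ | ⟨rfl, rfl⟩
    · refine RingTheory.Sequence.isRegular_quotient_cons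
        (fun f => mem_stageIdeal_of_X_sub_X_mul_mem hev hD heD he) ?_
      rw [stageIdeal_sup_X_sub_X]
      refine ih htail (fun d hd => ?_) fun p hp => ?_
      · rcases mem_insert.mp hd with rfl | hd
        exacts [he, hD d hd]
      rcases hmem p (List.mem_cons_of_mem _ hp) with ⟨e', he'D, he', rfl⟩ | h
      · refine .inl ⟨e', ?_, he', rfl⟩
        rw [mem_insert, not_or]
        exact ⟨by rintro rfl; exact hsl hp, he'D⟩
      · exact .inr h
    · refine RingTheory.Sequence.isRegular_quotient_cons
        (fun f => mem_stageIdeal_of_X_mul_mem hev hD) ?_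
      rw [stageIdeal_false_sup_X]
      refine ih htail hD fun p hp => ?_
      rcases hmem p (List.mem_cons_of_mem _ hp) with h | ⟨-, rfl⟩
      exacts [.inl h, absurd hp hsl]

end Regularity

end GraphicOrientedMatroid

theorem stmt11_general (V : Type) [Fintype V] [DecidableEq V]
    (G : SimpleGraph V) [DecidableRel G.Adj] (hG : G.Connected)
    (K : Type) [Field K] (q : V)
    (ev : V → G.Dart) (hev : ∀ v, (ev v).fst = v)
    (l : List (MvPolynomial G.Dart K)) (hl : l.Nodup)
    (hset : {p | p ∈ l} =
      {p : MvPolynomial G.Dart K | ∃ e : G.Dart, e ≠ ev e.fst ∧ p = X e - X (ev e.fst)} ∪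
        {X (ev q)}) :
    RingTheory.Sequence.IsRegular
      (MvPolynomial G.Dart K ⧸ orientedMatroidIdeal G K q) l := by
  rw [← GraphicOrientedMatroid.stageIdeal_empty_false (ev := ev)]
  refine GraphicOrientedMatroid.isRegular_stageIdeal hG hev hl (by simp) fun p hp => ?_
  rcases (hset.subset hp : p ∈ _ ∪ _) with ⟨e, he, rfl⟩ | rfl
  exacts [.inl ⟨e, notMem_empty e, he, rfl⟩, .inr ⟨rfl, rfl⟩]

theorem stmt11 (V : Type) [Fintype V] [Nonempty V] [DecidableEq V]
    (G : SimpleGraph V) [DecidableRel G.Adj] (hG : G.Connected)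
    (K : Type) [Field K] (q : V)
    (ev : V → G.Dart) (hev : ∀ v, (ev v).fst = v)
    (l : List (MvPolynomial G.Dart K)) (hl : l.Nodup)
    (hset : {p | p ∈ l} =
      {p : MvPolynomial G.Dart K | ∃ e : G.Dart, e ≠ ev e.fst ∧ p = X e - X (ev e.fst)} ∪
        {X (ev q)}) :
    RingTheory.Sequence.IsRegular
      (MvPolynomial G.Dart K ⧸ orientedMatroidIdeal G K q) l :=
  stmt11_general V G hG K q ev hev l hl hset
end

section
/- Fix a function ev assigning to each vertex v ∈ V a dart ev(v) of G with head v, and let L = {y_e − y_{ev(e₊)} : e a dart of G with e ≠ ev(e₊)}. Then every list without repetitions whose set of entries is exactly L is a regular sequence on the S-module S/J_G. -/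
open Finset MvPolynomial

/-!
For a set `T` of darts let `I_T = J_G + (y_e - y_{ev(e₊)} : e ∈ T)`, and let `Λ_T ⊆ ℤ^darts` be
spanned by the coboundaries `e ↦ f(e₊) - f(e₋)` of functions `f : V → ℤ` and by the differences
`δ_e - δ_{ev(e₊)}`, `e ∈ T`. The monomial map `y_e ↦ t^{[δ_e]}` into the group algebra of
`ℤ^darts / Λ_T` has kernel exactly `I_T`. The hard inclusion is a chip-firing argument: once every
`e ∈ T` is merged into `ev(e₊)`, two monomials whose exponents differ by a merged coboundary
`δf` are joined by repeatedly firing the set where `f` is maximal, and each firing is a Lawrence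
binomial.

So `S / I_T` is a subring of a group algebra, in which `y_e - y_{ev(e₊)}` for `e ∉ T` becomes
`t^α - t^β` where some homomorphism `χ` to `ℝ` has `χ α ≠ χ β`; such an element is a
nonzerodivisor, as one sees on the `χ`-leading coefficients. `χ` comes from a potential `n` with
`L n = δ_{e₋} - δ_{e₊}` for the Laplacian `L`, which exists because `G` is connected.
-/

section QuotientSMulTop
variable {S : Type*} [CommRing S]

theorem mk_mem_smul_top_iff (J I : Ideal S) (s : S) :
    Ideal.Quotient.mk J s ∈ (I • ⊤ : Submodule S (S ⧸ J)) ↔ s ∈ J ⊔ I := by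
  rw [Ideal.smul_top_eq_map, Submodule.restrictScalars_mem, Ideal.Quotient.algebraMap_eq,
    Ideal.mem_quotient_iff_mem_sup, sup_comm]

theorem isSMulRegular_quotient_smul_top_iff (J I : Ideal S) (r : S) :
    IsSMulRegular ((S ⧸ J) ⧸ (I • ⊤ : Submodule S (S ⧸ J))) r ↔
      ∀ s, r * s ∈ J ⊔ I → s ∈ J ⊔ I := by
  rw [isSMulRegular_quotient_iff_mem_of_smul_mem, Ideal.Quotient.mk_surjective.forall]
  simp only [← mk_mem_smul_top_iff J I, Algebra.smul_def, Ideal.Quotient.algebraMap_eq, map_mul]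

theorem top_ne_smul_top_iff (J I : Ideal S) :
    (⊤ : Submodule S (S ⧸ J)) ≠ I • ⊤ ↔ J ⊔ I ≠ ⊤ := by
  rw [Ne, Ne, not_iff_not, eq_comm, Ideal.smul_top_eq_map, Submodule.restrictScalars_eq_top_iff,
    Ideal.eq_top_iff_one, Ideal.eq_top_iff_one, ← map_one (Ideal.Quotient.mk J),
    Ideal.Quotient.algebraMap_eq, Ideal.mem_quotient_iff_mem_sup, sup_comm]

end QuotientSMulTop

namespace AddMonoidAlgebra
variable {R A Γ : Type*} [Ring R] [AddCommGroup A] [AddCommGroup Γ] [LinearOrder Γ]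
  [IsOrderedAddMonoid Γ]

theorem eq_zero_of_single_sub_single_mul_eq_zero_of_lt (χ : A →+ Γ) {α β : A}
    (hlt : χ β < χ α) {g : AddMonoidAlgebra R A}
    (hg : (single α 1 - single β 1) * g = 0) : g = 0 := by
  by_contra hg0
  obtain ⟨s, hs, hmax⟩ := g.coeff.support.exists_max_image χ
    (Finsupp.support_nonempty_iff.2 (by rwa [Ne, AddMonoidAlgebra.coeff_eq_zero]))
  have hcoeff : ((single α 1 - single β 1) * g).coeff (α + s) =
      g.coeff s - g.coeff (α - β + s) := by
    rw [sub_mul, coeff_sub, Finsupp.sub_apply, coeff_single_mul_apply, coeff_single_mul_apply,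
      one_mul, one_mul]
    congr 2 <;> abel
  have hbeyond : g.coeff (α - β + s) = 0 := by
    by_contra hne
    have := hmax _ (Finsupp.mem_support_iff.2 hne)
    rw [map_add, map_sub, add_le_iff_nonpos_left, sub_nonpos] at this
    exact this.not_gt hlt
  rw [hg, hbeyond, sub_zero] at hcoeff
  exact Finsupp.mem_support_iff.1 hs hcoeff.symm

theorem eq_zero_of_single_sub_single_mul_eq_zero (χ : A →+ Γ) {α β : A} (hχ : χ α ≠ χ β)
    {g : AddMonoidAlgebra R A} (hg : (single α 1 - single β 1) * g = 0) : g = 0 := by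
  rcases hχ.lt_or_gt with h | h
  · refine eq_zero_of_single_sub_single_mul_eq_zero_of_lt χ h ?_
    rw [← neg_sub, neg_mul, hg, neg_zero]
  · exact eq_zero_of_single_sub_single_mul_eq_zero_of_lt χ h hg

end AddMonoidAlgebra

namespace MvPolynomial
variable {σ R A : Type*} [CommRing R] [AddCommMonoid A] (ζ : σ → A)

theorem aeval_single_monomial (a : σ →₀ ℕ) (c : R) :
    aeval (fun i => AddMonoidAlgebra.single (ζ i) (1 : R)) (monomial a c) =
      AddMonoidAlgebra.single (a.sum fun i k => k • ζ i) c := by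
  rw [aeval_monomial, Finsupp.prod, Finsupp.sum]
  simp only [AddMonoidAlgebra.single_pow, one_pow]
  rw [AddMonoidAlgebra.prod_single, prod_const_one, AddMonoidAlgebra.coe_algebraMap,
    Function.comp_apply, AddMonoidAlgebra.single_mul_single, zero_add, mul_one]
  rfl

theorem ker_aeval_single_le {I : Ideal (MvPolynomial σ R)}
    (h : ∀ a b : σ →₀ ℕ, (a.sum fun i k => k • ζ i) = b.sum (fun i k => k • ζ i) →
      monomial a 1 - monomial b 1 ∈ I) :
    RingHom.ker (aeval (fun i => AddMonoidAlgebra.single (ζ i) (1 : R))) ≤ I := by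
  set deg : (σ →₀ ℕ) → A := fun a => a.sum fun i k => k • ζ i
  -- `mapDomain (invFun deg)` is a section of the monomial map modulo `I`
  have key : ∀ p, p - AddMonoidAlgebra.mapDomain (Function.invFun deg)
      (aeval (fun i => AddMonoidAlgebra.single (ζ i) (1 : R)) p) ∈ I := by
    intro p
    induction p using MvPolynomial.induction_on' with
    | monomial a c =>
      rw [aeval_single_monomial, AddMonoidAlgebra.mapDomain_single, single_eq_monomial,
        ← mul_one c, ← smul_eq_mul, ← smul_monomial, ← smul_monomial, ← smul_sub]
      exact Submodule.smul_of_tower_mem _ c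
        (h _ _ (Function.invFun_eq (f := deg) ⟨a, rfl⟩).symm)
    | add p q hp hq =>
      rw [map_add, AddMonoidAlgebra.mapDomain_add, add_sub_add_comm]
      exact add_mem hp hq
  intro p hp
  simpa [RingHom.mem_ker.1 hp, AddMonoidAlgebra.mapDomain_zero] using key p

end MvPolynomial

section FiberSum
variable {α β M : Type*} [Fintype α] [DecidableEq β] [AddCommMonoid M]

def fiberSum (r : α → β) : (α → M) →+ (β → M) where
  toFun c b := ∑ a with r a = b, c a
  map_zero' := by ext; simp
  map_add' c d := by ext; simp [sum_add_distrib]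

theorem fiberSum_apply (r : α → β) (c : α → M) (b : β) :
    fiberSum r c b = ∑ a with r a = b, c a := rfl

theorem fiberSum_single [DecidableEq α] (r : α → β) (a : α) (m : M) :
    fiberSum r (Pi.single a m) = Pi.single (r a) m := by
  ext b
  rw [fiberSum_apply]
  by_cases h : r a = b
  · subst h
    rw [sum_eq_single_of_mem a (by simp) fun a' _ ha' => by simp [ha']]
    simp
  · rw [Pi.single_eq_of_ne (Ne.symm h)]
    refine sum_eq_zero fun a' ha' => ?_
    rw [Pi.single_eq_of_ne]
    rintro rfl
    exact h (mem_filter.1 ha').2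

theorem map_fiberSum {N : Type*} [AddCommMonoid N] (ψ : M →+ N) (r : α → β) (c : α → M)
    (b : β) : ψ (fiberSum r c b) = fiberSum r (fun a => ψ (c a)) b := by
  simp [fiberSum_apply]

theorem natCast_fiberSum (r : α → β) (c : α → ℕ) (b : β) :
    ((fiberSum r c b : ℕ) : ℤ) = fiberSum r (fun a => (c a : ℤ)) b :=
  map_fiberSum (Nat.castAddMonoidHom ℤ) r c b

theorem natCast_fiberSum_toNat_sub_toNat_neg (r : α → β) (x : α → ℤ) (b : β) :
    ((fiberSum r (fun a => (x a).toNat) b : ℕ) : ℤ) - fiberSum r (fun a => (-x a).toNat) b =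
      fiberSum r x b := by
  rw [natCast_fiberSum, natCast_fiberSum, ← Pi.sub_apply, ← map_sub]
  exact congrArg (fiberSum r · b) (_root_.funext fun a => Int.toNat_sub_toNat_neg _)

theorem prod_pow_fiberSum {P : Type*} [CommMonoid P] [Fintype β] (r : α → β) (x : β → P)
    (c : α → ℕ) : ∏ b, x b ^ fiberSum r c b = ∏ a, x (r a) ^ c a := by
  rw [← prod_fiberwise univ r]
  refine prod_congr rfl fun b _ => ?_
  rw [fiberSum_apply, ← prod_pow_eq_pow_sum]
  exact prod_congr rfl fun a ha => by rw [(mem_filter.1 ha).2]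

end FiberSum

namespace SimpleGraph
open Matrix
variable {V : Type*} [Fintype V] {G : SimpleGraph V} [DecidableRel G.Adj]

theorem sum_dart_eq_sum_adj {M : Type*} [AddCommMonoid M] (F : V → V → M) :
    ∑ d : G.Dart, F d.fst d.snd = ∑ i, ∑ j, if G.Adj i j then F i j else 0 := by
  rw [← Fintype.sum_prod_type', ← Finset.sum_filter]
  exact Finset.sum_bij (fun d _ => d.toProd) (fun d _ => by simp [d.adj])
    (fun _ _ _ _ h => Dart.ext _ _ h) (fun p hp => ⟨⟨p, (mem_filter.1 hp).2⟩, mem_univ _, rfl⟩)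
    (fun _ _ => rfl)

variable [DecidableEq V]

theorem sum_dart_sub_mul_fst (f n : V → ℝ) :
    ∑ d : G.Dart, (f d.fst - f d.snd) * n d.fst = f ⬝ᵥ (G.lapMatrix ℝ *ᵥ n) := by
  rw [dotProduct_mulVec, ← mulVec_transpose, (G.isSymm_lapMatrix ℝ).eq, dotProduct_comm]
  simp only [dotProduct, lapMatrix_mulVec_apply, sum_dart_eq_sum_adj (G := G)
    (fun i j => (f i - f j) * n i), G.degree_eq_sum_if_adj (R := ℝ), neighborFinset_eq_filter,
    sum_filter, sum_mul, mul_sum, ← sum_sub_distrib]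
  refine sum_congr rfl fun i _ => sum_congr rfl fun j _ => ?_
  split_ifs <;> ring

theorem exists_lapMatrix_mulVec_eq (hG : G.Connected) {y : V → ℝ} (hy : ∑ v, y v = 0) :
    ∃ n, G.lapMatrix ℝ *ᵥ n = y := by
  have := hG.nonempty
  set s : (V → ℝ) →ₗ[ℝ] ℝ := ∑ v, LinearMap.proj v
  have hs : ∀ x, s x = ∑ v, x v := fun x => by simp [s]
  have hrange : LinearMap.range (G.lapMatrix ℝ).toLin' ≤ LinearMap.ker s := by
    rintro _ ⟨n, rfl⟩
    rw [LinearMap.mem_ker, hs, toLin'_apply, ← one_dotProduct, dotProduct_mulVec,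
      ← mulVec_transpose, (G.isSymm_lapMatrix ℝ).eq]
    exact (congrArg (· ⬝ᵥ n) G.lapMatrix_mulVec_const_eq_zero).trans (zero_dotProduct n)
  have hker : Module.finrank ℝ (LinearMap.ker (G.lapMatrix ℝ).toLin') = 1 := by
    have := hG.preconnected.subsingleton_connectedComponent
    rw [← card_connectedComponent_eq_finrank_ker_toLin'_lapMatrix]
    exact Fintype.card_eq_one_iff.2
      ⟨G.connectedComponentMk (Classical.arbitrary V), fun _ => Subsingleton.elim _ _⟩
  have hsurj : LinearMap.range s = ⊤ := by
    refine LinearMap.range_eq_top.2 fun c => ⟨Pi.single (Classical.arbitrary V) c, ?_⟩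
    rw [hs, Finset.sum_pi_single']
    simp
  have h1 := LinearMap.finrank_range_add_finrank_ker (G.lapMatrix ℝ).toLin'
  have h2 := LinearMap.finrank_range_add_finrank_ker s
  rw [hsurj, finrank_top, Module.finrank_self] at h2
  exact (Submodule.eq_of_le_of_finrank_le hrange (by omega)).ge (by rwa [LinearMap.mem_ker, hs])

end SimpleGraph

namespace GraphicLawrence

noncomputable section

section Darts
variable {V : Type} {G : SimpleGraph V}

variable (G) in
def coboundary : (V → ℤ) →+ (G.Dart → ℤ) where
  toFun f d := f d.fst - f d.snd
  map_zero' := by ext; simp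
  map_add' f g := by ext; simp only [Pi.add_apply]; ring

theorem coboundary_apply (f : V → ℤ) (d : G.Dart) :
    coboundary G f d = f d.fst - f d.snd := rfl

open Classical in
def mergeDart (ev : V → G.Dart) (T : Set G.Dart) (e : G.Dart) : G.Dart :=
  if e ∈ T then ev e.fst else e

variable {ev : V → G.Dart} (T : Set G.Dart)

theorem mergeDart_fst (hev : ∀ v, (ev v).fst = v) (e : G.Dart) :
    (mergeDart ev T e).fst = e.fst := by
  unfold mergeDart; split_ifs <;> simp [hev]

theorem mergeDart_ev (hev : ∀ v, (ev v).fst = v) (v : V) : mergeDart ev T (ev v) = ev v := by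
  unfold mergeDart; split_ifs <;> simp [hev]

end Darts

section MonomialMap
variable {V : Type} [DecidableEq V] {G : SimpleGraph V} {K : Type} [Field K]
  (ev : V → G.Dart) (T : Set G.Dart)

variable (K) in
def evDiff (e : G.Dart) : MvPolynomial G.Dart K := X e - X (ev e.fst)

def mergedLattice : AddSubgroup (G.Dart → ℤ) :=
  (coboundary G).range ⊔
    AddSubgroup.closure ((fun e => Pi.single e 1 - Pi.single (ev e.fst) 1) '' T)

def dartClass (e : G.Dart) : (G.Dart → ℤ) ⧸ mergedLattice ev T :=
  QuotientAddGroup.mk (Pi.single e 1)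

variable (K) in
def monomialMap :
    MvPolynomial G.Dart K →ₐ[K] AddMonoidAlgebra K ((G.Dart → ℤ) ⧸ mergedLattice ev T) :=
  aeval fun e => AddMonoidAlgebra.single (dartClass ev T e) 1

theorem monomialMap_evDiff (e : G.Dart) :
    monomialMap K ev T (evDiff K ev e) = AddMonoidAlgebra.single (dartClass ev T e) 1 -
      AddMonoidAlgebra.single (dartClass ev T (ev e.fst)) 1 := by
  rw [evDiff, map_sub, monomialMap, aeval_X, aeval_X]

variable [Fintype V] [DecidableRel G.Adj]

theorem sum_nsmul_dartClass (n : G.Dart → ℕ) :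
    ∑ e, n e • dartClass ev T e = QuotientAddGroup.mk (fun e => (n e : ℤ)) := by
  simp only [dartClass, ← QuotientAddGroup.mk_nsmul, ← QuotientAddGroup.mk_sum]
  congr 1
  ext d
  simp [Finset.sum_apply, Pi.single_apply]

theorem finsuppSum_nsmul_dartClass (a : G.Dart →₀ ℕ) :
    (a.sum fun e k => k • dartClass ev T e) = QuotientAddGroup.mk (fun e => (a e : ℤ)) := by
  rw [Finsupp.sum_fintype _ _ (by simp), sum_nsmul_dartClass]

theorem monomialMap_prod_X_pow (n : G.Dart → ℕ) :
    monomialMap K ev T (∏ e, X e ^ n e) =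
      AddMonoidAlgebra.single (QuotientAddGroup.mk (fun e => (n e : ℤ))) 1 := by
  simp only [map_prod, map_pow, monomialMap, aeval_X, AddMonoidAlgebra.single_pow, one_pow]
  rw [AddMonoidAlgebra.prod_single, prod_const_one, sum_nsmul_dartClass]

end MonomialMap

variable {V : Type} [Fintype V] [DecidableEq V] {G : SimpleGraph V} [DecidableRel G.Adj]
  {K : Type} [Field K] (ev : V → G.Dart) (T : Set G.Dart)

variable (K) in
def mergedIdeal : Ideal (MvPolynomial G.Dart K) :=
  lawrenceIdeal G K ⊔ Ideal.span (evDiff K ev '' T)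

variable (K) in
def quotMonomial (c : G.Dart → ℕ) : MvPolynomial G.Dart K ⧸ mergedIdeal K ev T :=
  ∏ e, Ideal.Quotient.mk _ (X e) ^ c e

theorem mk_X_mergeDart (e : G.Dart) :
    Ideal.Quotient.mk (mergedIdeal K ev T) (X (mergeDart ev T e)) =
      Ideal.Quotient.mk _ (X e) := by
  unfold mergeDart
  split_ifs with he
  · rw [eq_comm, Ideal.Quotient.eq]
    exact Ideal.mem_sup_right (Ideal.subset_span ⟨e, he, rfl⟩)
  · rfl

theorem quotMonomial_fiberSum (c : G.Dart → ℕ) :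
    quotMonomial K ev T (fiberSum (mergeDart ev T) c) = quotMonomial K ev T c := by
  simp only [quotMonomial, prod_pow_fiberSum, mk_X_mergeDart]

theorem quotMonomial_add (c d : G.Dart → ℕ) :
    quotMonomial K ev T (c + d) = quotMonomial K ev T c * quotMonomial K ev T d := by
  simp only [quotMonomial, Pi.add_apply, pow_add, prod_mul_distrib]

theorem quotMonomial_toNat_coboundary (f : V → ℤ) :
    quotMonomial K ev T (fun e => (coboundary G f e).toNat) =
      quotMonomial K ev T (fun e => (-coboundary G f e).toNat) := by
  simp only [quotMonomial, ← map_pow, ← map_prod, coboundary_apply, neg_sub]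
  rw [Ideal.Quotient.eq]
  exact Ideal.mem_sup_left (Ideal.subset_span ⟨f, rfl⟩)

theorem mk_monomial (a : G.Dart →₀ ℕ) :
    Ideal.Quotient.mk (mergedIdeal K ev T) (monomial a 1) = quotMonomial K ev T a := by
  rw [monomial_eq, C_1, one_mul, Finsupp.prod_fintype _ _ fun _ => pow_zero _, map_prod]
  simp only [map_pow, quotMonomial]

theorem mergedIdeal_le_ker : mergedIdeal K ev T ≤ RingHom.ker (monomialMap K ev T) := by
  refine sup_le (Ideal.span_le.2 ?_) (Ideal.span_le.2 ?_)
  · rintro _ ⟨f, rfl⟩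
    rw [SetLike.mem_coe, RingHom.mem_ker, map_sub, monomialMap_prod_X_pow,
      monomialMap_prod_X_pow, sub_eq_zero]
    congr 1
    rw [QuotientAddGroup.eq_iff_sub_mem]
    refine AddSubgroup.mem_sup_left ⟨f, ?_⟩
    ext d
    simp only [coboundary_apply, Pi.sub_apply]
    omega
  · rintro _ ⟨e, he, rfl⟩
    rw [SetLike.mem_coe, RingHom.mem_ker, monomialMap_evDiff, sub_eq_zero]
    congr 1
    rw [dartClass, dartClass, QuotientAddGroup.eq_iff_sub_mem]
    exact AddSubgroup.mem_sup_right (AddSubgroup.subset_closure ⟨e, he, rfl⟩)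

variable {ev T}

theorem fiberSum_toNat_coboundary_le (hev : ∀ v, (ev v).fst = v) {f : V → ℤ} {M : ℤ}
    (hM : ∀ v, f v ≤ M) {u w : G.Dart → ℕ}
    (h : ∀ g, (u g : ℤ) - w g = fiberSum (mergeDart ev T) (coboundary G f) g) :
    fiberSum (mergeDart ev T)
      (fun e => (coboundary G (fun v => if f v = M then 1 else 0) e).toNat) ≤ u := by
  intro g
  rw [fiberSum_apply]
  by_cases hg : f g.fst = M
  · have hfiber : fiberSum (mergeDart ev T) (coboundary G f) g ≤ u g := by
      have := h g; omega
    have hle : ∑ e with mergeDart ev T e = g,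
        ((coboundary G (fun v => if f v = M then 1 else 0) e).toNat : ℤ) ≤ u g := by
      refine le_trans (sum_le_sum fun e he => ?_) hfiber
      have he : f e.fst = M := by rw [← mergeDart_fst T hev e, (mem_filter.1 he).2, hg]
      have := hM e.snd
      simp only [coboundary_apply, he]
      split_ifs <;> omega
    exact_mod_cast hle
  · refine (sum_eq_zero fun e he => ?_).trans_le (Nat.zero_le _)
    have he : f e.fst ≠ M := by rwa [← mergeDart_fst T hev e, (mem_filter.1 he).2]
    simp only [coboundary_apply, if_neg he]
    omega

theorem quotMonomial_fire (f : V → ℤ) {u : G.Dart → ℕ}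
    (hle : fiberSum (mergeDart ev T) (fun e => (coboundary G f e).toNat) ≤ u) :
    quotMonomial K ev T u = quotMonomial K ev T
      (u - fiberSum (mergeDart ev T) (fun e => (coboundary G f e).toNat) +
        fiberSum (mergeDart ev T) (fun e => (-coboundary G f e).toNat)) := by
  rw [quotMonomial_add, quotMonomial_fiberSum (c := fun e => (-coboundary G f e).toNat),
    ← quotMonomial_toNat_coboundary,
    ← quotMonomial_fiberSum (c := fun e => (coboundary G f e).toNat), ← quotMonomial_add,
    tsub_add_cancel_of_le hle]

/-- Induction on `f`: firing the vertices where `f` is maximal lowers `f` there by one and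
moves the exponent vector by the coboundary of their indicator. -/
theorem quotMonomial_eq_of_sub_eq (hev : ∀ v, (ev v).fst = v) (c : ℤ) (f : V → ℤ)
    (hc : ∀ v, c ≤ f v) (u w : G.Dart → ℕ)
    (h : ∀ g, (u g : ℤ) - w g = fiberSum (mergeDart ev T) (coboundary G f) g) :
    quotMonomial K ev T u = quotMonomial K ev T w := by
  by_cases hf : ∀ v, f v = c
  · have h0 : coboundary G f = 0 := by ext d; simp [coboundary_apply, hf]
    congr 1
    funext g
    have := h g
    rw [h0, map_zero, Pi.zero_apply] at this
    omega
  obtain ⟨v0, hv0⟩ := not_forall.1 hf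
  have : Nonempty V := ⟨v0⟩
  obtain ⟨vM, hvM⟩ := Finite.exists_max f
  set top : V → ℤ := fun v => if f v = f vM then 1 else 0
  have hle : fiberSum (mergeDart ev T) (fun e => (coboundary G top e).toNat) ≤ u :=
    fiberSum_toNat_coboundary_le hev hvM h
  have hc' : ∀ v, c ≤ (f - top) v := by
    intro v
    have := hvM v; have := hvM v0; have := hc v; have := hc v0
    simp only [Pi.sub_apply, top]
    split_ifs <;> omega
  rw [quotMonomial_fire top hle]
  refine quotMonomial_eq_of_sub_eq hev c (f - top) hc' _ w fun g => ?_
  rw [map_sub, map_sub, Pi.sub_apply, ← h,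
    ← natCast_fiberSum_toNat_sub_toNat_neg _ (coboundary G top)]
  simp only [Pi.add_apply, Pi.sub_apply, Nat.cast_add, Nat.cast_sub (hle g)]
  ring
termination_by ∑ v, (f v - c).toNat
decreasing_by
  refine sum_lt_sum (fun v _ => ?_) ⟨vM, mem_univ _, ?_⟩
  all_goals have := hc v0; have := hvM v0; simp only [Pi.sub_apply]; split_ifs <;> omega

theorem exists_fiberSum_eq_coboundary (hev : ∀ v, (ev v).fst = v) {x : G.Dart → ℤ}
    (hx : x ∈ mergedLattice ev T) :
    ∃ f, fiberSum (mergeDart ev T) (coboundary G f) = fiberSum (mergeDart ev T) x := by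
  suffices mergedLattice ev T ≤
      (((fiberSum (mergeDart ev T)).comp (coboundary G)).range).comap
        (fiberSum (mergeDart ev T)) from this hx
  refine sup_le ?_ ((AddSubgroup.closure_le _).2 ?_)
  · rintro _ ⟨f, rfl⟩
    exact ⟨f, rfl⟩
  · rintro _ ⟨e, he, rfl⟩
    refine ⟨0, ?_⟩
    rw [map_zero, map_sub, fiberSum_single, fiberSum_single, mergeDart_ev T hev, mergeDart,
      if_pos he, sub_self]

theorem monomial_sub_monomial_mem (hev : ∀ v, (ev v).fst = v) {a b : G.Dart →₀ ℕ}
    (hab : (fun e => (a e : ℤ)) - (fun e => (b e : ℤ)) ∈ mergedLattice ev T) :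
    monomial a (1 : K) - monomial b 1 ∈ mergedIdeal K ev T := by
  obtain ⟨f, hf⟩ := exists_fiberSum_eq_coboundary hev hab
  obtain ⟨c, hc⟩ := Finite.bddBelow_range f
  rw [← Ideal.Quotient.eq, mk_monomial, mk_monomial, ← quotMonomial_fiberSum,
    ← quotMonomial_fiberSum (c := b)]
  refine quotMonomial_eq_of_sub_eq hev c f (fun v => hc ⟨v, rfl⟩) _ _ fun g => ?_
  rw [natCast_fiberSum, natCast_fiberSum, ← Pi.sub_apply, ← map_sub, hf]

theorem ker_monomialMap (hev : ∀ v, (ev v).fst = v) :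
    RingHom.ker (monomialMap K ev T) = mergedIdeal K ev T := by
  refine le_antisymm ?_ (mergedIdeal_le_ker ev T)
  refine ker_aeval_single_le (dartClass ev T) fun a b hab => monomial_sub_monomial_mem hev ?_
  rwa [finsuppSum_nsmul_dartClass, finsuppSum_nsmul_dartClass,
    QuotientAddGroup.eq_iff_sub_mem] at hab

theorem exists_addMonoidHom_dartClass_ne (hG : G.Connected) (hev : ∀ v, (ev v).fst = v)
    {e : G.Dart} (heT : e ∉ T) (hne : e ≠ ev e.fst) :
    ∃ χ : ((G.Dart → ℤ) ⧸ mergedLattice ev T) →+ ℝ,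
      χ (dartClass ev T e) ≠ χ (dartClass ev T (ev e.fst)) := by
  obtain ⟨n, hn⟩ := SimpleGraph.exists_lapMatrix_mulVec_eq hG
    (y := Pi.single e.snd 1 - Pi.single e.fst 1) (by simp [sum_sub_distrib])
  -- pairing with `wt` kills every coboundary because `L n = δ_{e.snd} - δ_{e.fst}`, and `wt` is
  -- constant on the darts identified by `T`
  set wt : G.Dart → ℝ := fun d => n d.fst + if d = e then 1 else 0
  set pair : (G.Dart → ℤ) →+ ℝ :=
    AddMonoidHom.mk' (fun x => ∑ d, (x d : ℝ) * wt d) fun x y => by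
      simp only [Pi.add_apply, Int.cast_add, add_mul, sum_add_distrib]
  have hpair : ∀ d, pair (Pi.single d 1) = wt d := fun d => by
    simp [pair, Pi.single_apply]
  have hker : mergedLattice ev T ≤ pair.ker := by
    refine sup_le ?_ ((AddSubgroup.closure_le _).2 ?_)
    · rintro _ ⟨f, rfl⟩
      rw [AddMonoidHom.mem_ker]
      simp only [pair, wt, AddMonoidHom.mk'_apply, coboundary_apply, Int.cast_sub, mul_add,
        sum_add_distrib, mul_ite, mul_one, mul_zero, sum_ite_eq', mem_univ, if_true]
      rw [SimpleGraph.sum_dart_sub_mul_fst (fun v => (f v : ℝ)), hn]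
      simp [dotProduct_sub]
    · rintro _ ⟨e0, he0, rfl⟩
      have h1 : e0 ≠ e := fun h => heT (h ▸ he0)
      have h2 : ev e0.fst ≠ e := fun h => hne (by rw [← h, hev])
      rw [SetLike.mem_coe, AddMonoidHom.mem_ker, map_sub, hpair, hpair]
      simp [wt, h1, h2, hev]
  refine ⟨QuotientAddGroup.lift _ pair hker, ?_⟩
  simp [dartClass, hpair, wt, Ne.symm hne, hev]

theorem mem_mergedIdeal_of_evDiff_mul_mem (hG : G.Connected) (hev : ∀ v, (ev v).fst = v)
    {e : G.Dart} (heT : e ∉ T) (hne : e ≠ ev e.fst) {g : MvPolynomial G.Dart K}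
    (hg : evDiff K ev e * g ∈ mergedIdeal K ev T) : g ∈ mergedIdeal K ev T := by
  rw [← ker_monomialMap hev, RingHom.mem_ker] at hg ⊢
  obtain ⟨χ, hχ⟩ := exists_addMonoidHom_dartClass_ne hG hev heT hne
  rw [map_mul, monomialMap_evDiff] at hg
  exact AddMonoidAlgebra.eq_zero_of_single_sub_single_mul_eq_zero χ hχ hg

end

end GraphicLawrence

open GraphicLawrence

theorem stmt12_general (V : Type) [Fintype V] [DecidableEq V]
    (G : SimpleGraph V) [DecidableRel G.Adj] (hG : G.Connected)
    (K : Type) [Field K]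
    (ev : V → G.Dart) (hev : ∀ v, (ev v).fst = v)
    (l : List (MvPolynomial G.Dart K)) (hl : l.Nodup)
    (hset : {p | p ∈ l} =
      {p : MvPolynomial G.Dart K | ∃ e : G.Dart, e ≠ ev e.fst ∧ p = X e - X (ev e.fst)}) :
    RingTheory.Sequence.IsRegular (MvPolynomial G.Dart K ⧸ lawrenceIdeal G K) l := by
  have hofList : ∀ l' ⊆ l,
      Ideal.ofList l' = Ideal.span (evDiff K ev '' {e | evDiff K ev e ∈ l'}) := by
    intro l' hl'
    refine congrArg Ideal.span (Set.image_preimage_eq_of_subset fun p hp => ?_).symm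
    obtain ⟨e, -, rfl⟩ := (Set.ext_iff.1 hset p).1 (hl' hp)
    exact ⟨e, rfl⟩
  refine ⟨⟨fun i hi => ?_⟩, ?_⟩
  · rw [isSMulRegular_quotient_smul_top_iff, hofList _ (List.take_subset _ _)]
    obtain ⟨e, hne, he⟩ := (Set.ext_iff.1 hset l[i]).1 (l.getElem_mem hi)
    have heT : e ∉ {e | evDiff K ev e ∈ l.take i} := fun h =>
      List.disjoint_take_drop hl le_rfl (show l[i] ∈ l.take i by rw [he]; exact h)
        (List.mem_iff_getElem.2 ⟨0, by simpa, by simp⟩)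
    rw [he]
    exact fun g => mem_mergedIdeal_of_evDiff_mul_mem hG hev heT hne
  · rw [top_ne_smul_top_iff, hofList l (List.Subset.refl l)]
    exact ne_top_of_le_ne_top (RingHom.ker_ne_top _) (mergedIdeal_le_ker ev _)

theorem stmt12 (V : Type) [Fintype V] [Nonempty V] [DecidableEq V]
    (G : SimpleGraph V) [DecidableRel G.Adj] (hG : G.Connected)
    (K : Type) [Field K]
    (ev : V → G.Dart) (hev : ∀ v, (ev v).fst = v)
    (l : List (MvPolynomial G.Dart K)) (hl : l.Nodup)
    (hset : {p | p ∈ l} =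
      {p : MvPolynomial G.Dart K | ∃ e : G.Dart, e ≠ ev e.fst ∧ p = X e - X (ev e.fst)}) :
    RingTheory.Sequence.IsRegular (MvPolynomial G.Dart K ⧸ lawrenceIdeal G K) l :=
  stmt12_general V G hG K ev hev l hl hset
end

section
/- Let φ : S → R be the K-algebra homomorphism determined by φ(y_e) = x_{e₊} for every dart e of G. Then the image ideal of J_G under φ (the ideal of R generated by φ(J_G)) equals I_G. -/
open Finset MvPolynomial

/-- The ideal `I_G` of the graph `G`: generated by the binomials `x^{D₁} − x^{D₂}` over
pairs of effective divisors `D₁, D₂` whose difference is a principal divisor. -/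
noncomputable def divisorIdeal {V : Type} [Fintype V] [DecidableEq V]
    (G : SimpleGraph V) [DecidableRel G.Adj] (K : Type) [Field K] :
    Ideal (MvPolynomial V K) :=
  Ideal.span {p | ∃ D₁ D₂ : V → ℕ,
    (∃ f : V → ℤ, ∀ v, (D₁ v : ℤ) - (D₂ v : ℤ) = lap G f v) ∧
    p = (∏ v, X v ^ D₁ v) - ∏ v, X v ^ D₂ v}

section Aux

variable {V : Type} [Fintype V] [DecidableEq V]
    (G : SimpleGraph V) [DecidableRel G.Adj] {K : Type} [Field K]

lemma aeval_prod_dart (h : V → V → ℕ) :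
    aeval (R := K) (fun e : G.Dart => (X e.fst : MvPolynomial V K))
      (∏ e : G.Dart, X e ^ h e.fst e.snd) =
    ∏ v, X v ^ (∑ w ∈ G.neighborFinset v, h v w) := by
  rw [map_prod]
  simp only [map_pow, aeval_X]
  rw [← Finset.prod_fiberwise univ (fun e : G.Dart => e.fst)
    (fun e : G.Dart => (X e.fst : MvPolynomial V K) ^ h e.fst e.snd)]
  refine Finset.prod_congr rfl fun v _ => ?_
  rw [show (∑ w ∈ G.neighborFinset v, h v w) =
      ∑ e ∈ univ.filter (fun e : G.Dart => e.fst = v), h e.fst e.snd from ?_]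
  · rw [← Finset.prod_pow_eq_pow_sum]
    refine Finset.prod_congr rfl fun e he => ?_
    simp only [Finset.mem_filter] at he
    rw [he.2]
  · refine Finset.sum_bij' (fun w hw => SimpleGraph.Dart.mk (v, w) (by simpa using hw))
      (fun e he => e.snd) ?_ ?_ ?_ ?_ ?_
    · intro w hw; simp
    · intro e he
      simp only [Finset.mem_filter] at he
      simpa [← he.2] using e.adj
    · intro w hw; rfl
    · intro e he
      simp only [Finset.mem_filter] at he
      exact SimpleGraph.Dart.ext _ _ (Prod.ext he.2.symm rfl)
    · intro w hw; rfl

lemma lap_diff (f : V → ℤ) (v : V) :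
    ((∑ w ∈ G.neighborFinset v, (f v - f w).toNat : ℕ) : ℤ) -
      ((∑ w ∈ G.neighborFinset v, (f w - f v).toNat : ℕ) : ℤ) = lap G f v := by
  unfold lap
  push_cast
  rw [← Finset.sum_sub_distrib]
  refine Finset.sum_congr rfl fun w _ => ?_
  omega

lemma gen_mem (f : V → ℤ) :
    (∏ v, (X v : MvPolynomial V K) ^ (∑ w ∈ G.neighborFinset v, (f v - f w).toNat)) -
      (∏ v, X v ^ (∑ w ∈ G.neighborFinset v, (f w - f v).toNat)) ∈
    Ideal.map
      ((aeval (fun e : G.Dart => (X e.fst : MvPolynomial V K))).toRingHom :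
        MvPolynomial G.Dart K →+* MvPolynomial V K)
      (lawrenceIdeal G K) := by
  have h1 : ((∏ e : G.Dart, X e ^ (f e.fst - f e.snd).toNat) -
      ∏ e : G.Dart, X e ^ (f e.snd - f e.fst).toNat : MvPolynomial G.Dart K) ∈
      lawrenceIdeal G K := Ideal.subset_span ⟨f, rfl⟩
  have h2 := Ideal.mem_map_of_mem
    ((aeval (fun e : G.Dart => (X e.fst : MvPolynomial V K))).toRingHom :
        MvPolynomial G.Dart K →+* MvPolynomial V K) h1
  have h3 : ((aeval (fun e : G.Dart => (X e.fst : MvPolynomial V K))).toRingHom :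
        MvPolynomial G.Dart K →+* MvPolynomial V K)
      ((∏ e : G.Dart, X e ^ (f e.fst - f e.snd).toNat) -
        ∏ e : G.Dart, X e ^ (f e.snd - f e.fst).toNat) =
      (∏ v, (X v : MvPolynomial V K) ^ (∑ w ∈ G.neighborFinset v, (f v - f w).toNat)) -
        (∏ v, X v ^ (∑ w ∈ G.neighborFinset v, (f w - f v).toNat)) := by
    rw [map_sub]
    exact congrArg₂ (· - ·) (aeval_prod_dart G fun v w => (f v - f w).toNat)
      (aeval_prod_dart G fun v w => (f w - f v).toNat)
  rwa [h3] at h2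

lemma main_ind (n : ℕ) : ∀ f : V → ℤ, (∀ v, 0 ≤ f v) → (∑ v, (f v).toNat) = n →
    ∀ a b : V → ℕ, (∀ v, (a v : ℤ) - b v = lap G f v) →
    (∏ v, (X v : MvPolynomial V K) ^ a v) - (∏ v, X v ^ b v) ∈
    Ideal.map
      ((aeval (fun e : G.Dart => (X e.fst : MvPolynomial V K))).toRingHom :
        MvPolynomial G.Dart K →+* MvPolynomial V K)
      (lawrenceIdeal G K) := by
  induction n using Nat.strong_induction_on with
  | _ n IH =>
  intro f hf hn a b hab
  by_cases hc : ∀ v w, f v = f w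
  · have hab0 : a = b := by
      funext v
      have h0 : lap G f v = 0 := by
        unfold lap
        refine Finset.sum_eq_zero fun w _ => ?_
        rw [hc v w, sub_self]
      have := hab v
      rw [h0] at this
      omega
    rw [hab0, sub_self]
    exact Ideal.zero_mem _
  · push_neg at hc
    obtain ⟨v1, w1, hvw⟩ := hc
    have hne : (univ : Finset V).Nonempty := ⟨v1, mem_univ v1⟩
    set m : ℤ := univ.sup' hne f with hm
    have hfm : ∀ v, f v ≤ m := fun v => Finset.le_sup' f (mem_univ v)
    obtain ⟨v0, -, hv0⟩ := Finset.exists_mem_eq_sup' hne f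
    -- m ≥ 1
    have hm1 : 1 ≤ m := by
      rcases lt_or_ge (f w1) (f v1) with h | h
      · have := hf w1; have := hfm v1; omega
      · have h' : f w1 ≠ f v1 := fun e => hvw e.symm
        have := hf v1; have := hfm w1; omega
    set g : V → ℤ := fun v => if f v = m then 1 else 0 with hg
    have hg01 : ∀ v, g v = 0 ∨ g v = 1 := by
      intro v; simp only [hg]; split <;> simp
    set p : V → ℕ := fun v => ∑ w ∈ G.neighborFinset v, (g v - g w).toNat with hp
    set q : V → ℕ := fun v => ∑ w ∈ G.neighborFinset v, (g w - g v).toNat with hq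
    have hpq : ∀ v, (p v : ℤ) - q v = lap G g v := fun v => lap_diff G g v
    -- p v ≤ a v
    have hpa : ∀ v, p v ≤ a v := by
      intro v
      by_cases hvA : f v = m
      · have key : (p v : ℤ) ≤ lap G f v := by
          unfold lap
          rw [hp]
          push_cast
          refine Finset.sum_le_sum fun w hw => ?_
          have h1 : g v = 1 := by simp [hg, hvA]
          have h3 := hfm w
          by_cases hwA : f w = m
          · have h2 : g w = 1 := by simp [hg, hwA]
            omega
          · have h2 : g w = 0 := by simp [hg, hwA]
            omega
        have := hab v
        have hb := (b v).cast_nonneg (α := ℤ)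
        omega
      · have : p v = 0 := by
          rw [hp]
          refine Finset.sum_eq_zero fun w hw => ?_
          have h1 : g v = 0 := by simp [hg, hvA]
          have h2 := hg01 w
          omega
        omega
    set c : V → ℕ := fun v => a v - p v + q v with hcdef
    -- first piece
    have piece1 : (∏ v, (X v : MvPolynomial V K) ^ a v) - (∏ v, X v ^ c v) ∈
        Ideal.map
          ((aeval (fun e : G.Dart => (X e.fst : MvPolynomial V K))).toRingHom :
            MvPolynomial G.Dart K →+* MvPolynomial V K)
          (lawrenceIdeal G K) := by
      have hfac : (∏ v, (X v : MvPolynomial V K) ^ a v) - (∏ v, X v ^ c v) =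
          (∏ v, (X v : MvPolynomial V K) ^ (a v - p v)) *
            ((∏ v, X v ^ p v) - ∏ v, X v ^ q v) := by
        rw [mul_sub, ← Finset.prod_mul_distrib, ← Finset.prod_mul_distrib]
        congr 1
        · refine Finset.prod_congr rfl fun v _ => ?_
          rw [← pow_add, Nat.sub_add_cancel (hpa v)]
        · refine Finset.prod_congr rfl fun v _ => ?_
          rw [← pow_add]
      rw [hfac]
      exact Ideal.mul_mem_left _ _ (gen_mem G g)
    -- second piece
    set f' : V → ℤ := fun v => f v - g v with hf'
    have hf'0 : ∀ v, 0 ≤ f' v := by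
      intro v
      by_cases hvA : f v = m
      · have h1 : f' v = m - 1 := by simp [hf', hg, hvA]
        omega
      · have h1 : f' v = f v := by simp [hf', hg, hvA]
        have := hf v
        omega
    have hlt : (∑ v, (f' v).toNat) < n := by
      rw [← hn]
      refine Finset.sum_lt_sum (fun v _ => ?_) ⟨v0, mem_univ v0, ?_⟩
      · rcases hg01 v with h | h <;> simp only [hf'] <;> omega
      · have hfv0 : f v0 = m := by rw [hm, hv0]
        have hgv0 : g v0 = 1 := by simp [hg, hfv0]
        simp only [hf']
        omega
    have hcb : ∀ v, (c v : ℤ) - b v = lap G f' v := by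
      intro v
      have hlapsub : lap G f' v = lap G f v - lap G g v := by
        unfold lap
        rw [← Finset.sum_sub_distrib]
        refine Finset.sum_congr rfl fun w _ => ?_
        simp only [hf']
        ring
      have h1 := hab v
      have h2 := hpq v
      have h3 : (c v : ℤ) = (a v : ℤ) - p v + q v := by
        simp only [hcdef]
        push_cast [Nat.cast_sub (hpa v)]
        ring
      rw [hlapsub]
      omega
    have piece2 := IH _ hlt f' hf'0 rfl c b hcb
    have := Ideal.add_mem _ piece1 piece2
    simpa using this

end Aux

theorem stmt13 (V : Type) [Fintype V] [Nonempty V] [DecidableEq V]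
    (G : SimpleGraph V) [DecidableRel G.Adj] (hG : G.Connected)
    (K : Type) [Field K] :
    Ideal.map
      ((aeval (fun e : G.Dart => (X e.fst : MvPolynomial V K))).toRingHom :
        MvPolynomial G.Dart K →+* MvPolynomial V K)
      (lawrenceIdeal G K) = divisorIdeal G K := by
  apply le_antisymm
  · rw [lawrenceIdeal, Ideal.map_span, Ideal.span_le]
    rintro _ ⟨_, ⟨f, rfl⟩, rfl⟩
    refine Ideal.subset_span ?_
    refine ⟨fun v => ∑ w ∈ G.neighborFinset v, (f v - f w).toNat,
      fun v => ∑ w ∈ G.neighborFinset v, (f w - f v).toNat, ⟨f, fun v => lap_diff G f v⟩, ?_⟩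
    rw [map_sub]
    exact congrArg₂ (· - ·) (aeval_prod_dart G fun v w => (f v - f w).toNat)
      (aeval_prod_dart G fun v w => (f w - f v).toNat)
  · rw [divisorIdeal, Ideal.span_le]
    rintro _ ⟨D₁, D₂, ⟨f, hfl⟩, rfl⟩
    have hne : (univ : Finset V).Nonempty := univ_nonempty
    set mn : ℤ := univ.inf' hne f with hmn
    set f₀ : V → ℤ := fun v => f v - mn with hf₀
    have hlap : ∀ v, lap G f₀ v = lap G f v := by
      intro v
      unfold lap
      refine Finset.sum_congr rfl fun w _ => ?_
      simp only [hf₀]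
      ring
    exact main_ind G _ f₀ (fun v => by
        have := Finset.inf'_le f (mem_univ v); simp only [hf₀]; omega) rfl D₁ D₂
      (fun v => by rw [hlap v]; exact hfl v)
end

section
/- Suppose the weighted A-grading of S by w is nice, i.e. there exists an additive group homomorphism u' : A → ℤ with u'(w(i)) > 0 for every i ∈ σ. Let M be a finitely generated S-module equipped with an A-grading compatible with the grading of S, and let 𝔪 ⊆ S be the ideal generated by the variables (all polynomials with zero constant term). If 𝔪M = M, then M = 0. -/
open MvPolynomial

set_option synthInstance.maxHeartbeats 1000000
set_option maxHeartbeats 1000000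

theorem stmt15 (K : Type) [Field K] (σ : Type) [Finite σ]
    (A : Type) [AddCommGroup A] [DecidableEq A]
    (w : σ → A)
    -- the weighted `A`-grading of `S = K[xᵢ : i ∈ σ]` by `w` is "nice":
    (u' : A →+ ℤ) (hu : ∀ i : σ, 0 < u' (w i))
    -- `M` is a finitely generated `S`-module:
    (M : Type) [AddCommGroup M] [Module (MvPolynomial σ K) M]
    [Module.Finite (MvPolynomial σ K) M]
    -- equipped with an `A`-grading compatible with the grading of `S`:
    (ℳ : A → AddSubgroup M)
    (hdecomp : DirectSum.IsInternal ℳ)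
    (hcompat : ∀ (a b : A) (s : MvPolynomial σ K) (m : M),
      s ∈ weightedHomogeneousSubmodule K w a → m ∈ ℳ b → s • m ∈ ℳ (a + b))
    -- if `𝔪 M = M`, where `𝔪` is the ideal generated by the variables:
    (hm : (Ideal.span (Set.range (X : σ → MvPolynomial σ K))) •
        (⊤ : Submodule (MvPolynomial σ K) M) = ⊤) :
    -- then `M = 0`:
    ∀ m : M, m = 0 := by
  classical
  letI := hdecomp.chooseDecomposition
  -- the projection onto the degree-`b` component, as an additive hom
  set πh : A → M →+ M := fun b =>
    ((ℳ b).subtype.comp ((DFinsupp.evalAddMonoidHom b).comp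
      (DirectSum.decomposeAddEquiv ℳ).toAddMonoidHom)) with hπh
  have hπ : ∀ (b : A) (x : M), πh b x = (DirectSum.decompose ℳ x b : M) := fun _ _ => rfl
  -- key: projection of a homogeneous scalar multiple
  have key : ∀ (a b : A) (s : MvPolynomial σ K) (x : M),
      s ∈ weightedHomogeneousSubmodule K w a →
      πh b (s • x) = s • πh (b - a) x := by
    intro a b s x hs
    conv_lhs => rw [← DirectSum.sum_support_decompose ℳ x]
    rw [Finset.smul_sum, map_sum]
    have hmem : ∀ c : A, s • ((DirectSum.decompose ℳ x c : M)) ∈ ℳ (a + c) :=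
      fun c => hcompat a c s _ hs (SetLike.coe_mem _)
    rw [Finset.sum_eq_single (b - a)]
    · rw [hπ, hπ]
      have := hmem (b - a)
      rw [add_sub_cancel] at this
      exact DirectSum.decompose_of_mem_same ℳ this
    · intro c _ hc
      rw [hπ]
      refine DirectSum.decompose_of_mem_ne ℳ (hmem c) ?_
      intro h
      exact hc (by rw [← h]; abel)
    · intro hb
      rw [DFinsupp.notMem_support_iff] at hb
      rw [hb]
      simp
  -- degrees of nonzero homogeneous components of polynomials have nonnegative weight
  have hnn : ∀ (a : A) (s : MvPolynomial σ K),
      weightedHomogeneousComponent w a s ≠ 0 → 0 ≤ u' a := by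
    intro a s h
    have : ∃ d ∈ s.support, Finsupp.weight w d = a := by
      by_contra hcon
      push_neg at hcon
      exact h (weightedHomogeneousComponent_eq_zero' a s hcon)
    obtain ⟨d, _, hd⟩ := this
    rw [← hd, Finsupp.weight_apply, map_finsuppSum]
    rw [Finsupp.sum]
    apply Finset.sum_nonneg
    intro i _
    rw [map_nsmul]
    exact nsmul_nonneg (le_of_lt (hu i)) _
  intro m
  by_contra h0
  -- Nakayama determinant trick
  obtain ⟨r, hr, hrz⟩ :=
    Submodule.exists_sub_one_mem_and_smul_eq_zero_of_fg_of_le_smul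
      (Ideal.span (Set.range (X : σ → MvPolynomial σ K)))
      (⊤ : Submodule (MvPolynomial σ K) M) Module.Finite.fg_top (le_of_eq hm.symm)
  set x : MvPolynomial σ K := 1 - r with hx
  have hxI : x ∈ Ideal.span (Set.range (X : σ → MvPolynomial σ K)) := by
    have := (Ideal.span (Set.range (X : σ → MvPolynomial σ K))).neg_mem hr
    simpa [hx, neg_sub] using this
  have hxm : x • m = m := by
    rw [hx, sub_smul, one_smul, hrz m trivial, sub_zero]
  -- main induction: projections of `y • m` vanish below the minimal degree of `m`
  have L : ∀ y ∈ Ideal.span (Set.range (X : σ → MvPolynomial σ K)),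
      ∀ b : A, (∀ c : A, u' c < u' b → πh c m = 0) → πh b (y • m) = 0 := by
    intro y hy
    refine Submodule.span_induction ?_ ?_ ?_ ?_ hy
    · rintro _ ⟨i, rfl⟩ b hb
      rw [key (w i) b (X i) m (isWeightedHomogeneous_X K w i)]
      rw [hb (b - w i) ?_, smul_zero]
      have : u' (b - w i) = u' b - u' (w i) := by rw [map_sub]
      rw [this]
      linarith [hu i]
    · intro b _
      rw [zero_smul, map_zero]
    · intro p q _ _ hp hq b hb
      rw [add_smul, map_add, hp b hb, hq b hb, add_zero]
    · intro s p _ hp b hb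
      rw [smul_eq_mul, mul_smul]
      -- decompose `s` into weighted homogeneous components
      have hsum := sum_weightedHomogeneousComponent w s
      rw [finsum_eq_sum _ (weightedHomogeneousComponent_finsupp s)] at hsum
      conv_lhs => rw [← hsum]
      rw [Finset.sum_smul, map_sum]
      apply Finset.sum_eq_zero
      intro a _
      by_cases hsa : weightedHomogeneousComponent w a s = 0
      · rw [hsa, zero_smul, map_zero]
      · rw [key a b _ (p • m) (weightedHomogeneousComponent_mem w s a)]
        rw [hp (b - a) ?_, smul_zero]
        intro c hc
        apply hb
        have h1 : 0 ≤ u' a := hnn a s hsa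
        have h2 : u' (b - a) = u' b - u' a := by rw [map_sub]
        rw [h2] at hc
        linarith
  -- find the minimal-degree component of `m`
  have hsupp : (DirectSum.decompose ℳ m).support.Nonempty := by
    rcases Finset.eq_empty_or_nonempty (DirectSum.decompose ℳ m).support with h | h
    · exfalso
      apply h0
      conv_lhs => rw [← DirectSum.sum_support_decompose ℳ m]
      rw [h, Finset.sum_empty]
    · exact h
  obtain ⟨b, hb, hbmin⟩ := Finset.exists_min_image _ (fun c => u' c) hsupp
  have hmin : ∀ c : A, u' c < u' b → πh c m = 0 := by
    intro c hc
    by_contra hne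
    have hc' : c ∈ (DirectSum.decompose ℳ m).support := by
      rw [DFinsupp.mem_support_iff]
      intro h
      apply hne
      rw [hπ, h]
      rfl
    exact absurd (hbmin c hc') (not_le.mpr hc)
  have : πh b m = 0 := by
    conv_lhs => rw [← hxm]
    exact L x hxI b hmin
  rw [DFinsupp.mem_support_iff] at hb
  apply hb
  rw [hπ] at this
  exact Subtype.ext this
end

section
/- Suppose the weighted A-grading of S by w is nice, i.e. there exists an additive group homomorphism u' : A → ℤ with u'(w(i)) > 0 for every i ∈ σ. Let M be a finitely generated A-graded S-module, let 𝔪 ⊆ S be the ideal generated by the variables, and let s₁, …, s_d ∈ 𝔪 be homogeneous elements (each s_i lies in the degree-a_i component of S for some a_i ∈ A). If s₁, …, s_d is an M-regular sequence, then every permutation of s₁, …, s_d is also an M-regular sequence. -/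
/-!
Mathlib reduces the permutability of a weakly regular sequence to a Nakayama-type statement:
whenever `a :: b :: rs` is a subpermutation of the sequence, the `b`-torsion `K` of
`M ⧸ (rs) M` satisfies `K = a • K → K = ⊥` (`IsWeaklyRegular.prototype_perm`). In the graded
setting this holds for a homogeneous `a` of positive `u'`-degree `d`: `(rs) M` is a homogeneous
submodule, and the homogeneous components of `M` have `u'`-degree bounded below, because `M` is
finitely generated and `S` has no components of negative `u'`-degree. If `m - a ^ t • m' ∈ (rs) M`
for every `t`, then the degree-`n` component of `a ^ t • m'` is `a ^ t` times the
degree-`(n - t • d)` component of `m'`, which vanishes for large `t`; so every component of `m`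
lies in `(rs) M`.
-/

open DirectSum MvPolynomial Pointwise

section GradedModule

variable {ι S M σS σM : Type*} [AddCommGroup ι] [DecidableEq ι]
  [CommRing S] [SetLike σS S] (𝒜 : ι → σS)
  [AddCommGroup M] [Module S M] [SetLike σM M] [AddSubmonoidClass σM M] (ℳ : ι → σM)
  [Decomposition ℳ] [SetLike.GradedSMul 𝒜 ℳ]

theorem DirectSum.coe_decompose_smul_of_mem {a : S} {i : ι} (ha : a ∈ 𝒜 i) (m : M) (n : ι) :
    (decompose ℳ (a • m) n : M) = a • (decompose ℳ m (n - i) : M) := by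
  induction m using DirectSum.Decomposition.inductionOn ℳ with
  | zero => simp
  | @homogeneous j x =>
    have hax : a • (x : M) ∈ ℳ (i + j) := SetLike.GradedSMul.smul_mem ha x.2
    by_cases hn : n = i + j
    · subst hn
      rw [decompose_of_mem_same ℳ hax, add_sub_cancel_left, decompose_coe, of_eq_same]
    · rw [decompose_of_mem_ne ℳ hax (Ne.symm hn), decompose_coe, of_eq_of_ne, ZeroMemClass.coe_zero,
        smul_zero]
      rintro rfl
      exact hn (add_sub_cancel _ _).symm
  | add m₁ m₂ h₁ h₂ =>
    simp only [smul_add, decompose_add, add_apply, AddMemClass.coe_add, h₁, h₂]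

variable [AddSubmonoidClass σS S] [GradedRing 𝒜]

theorem Ideal.IsHomogeneous.smul_top {I : Ideal S} (hI : I.IsHomogeneous 𝒜) :
    (I • ⊤ : Submodule S M).IsHomogeneous ℳ := by
  classical
  intro n m hm
  refine Submodule.smul_induction_on hm (fun r hr m _ => ?_) fun x y hx hy => ?_
  · rw [← sum_support_decompose 𝒜 r, Finset.sum_smul, decompose_sum, DFinsupp.finsetSum_apply,
      AddSubmonoidClass.coe_finsetSum]
    refine Submodule.sum_mem _ fun i _ => ?_
    rw [coe_decompose_smul_of_mem 𝒜 ℳ (SetLike.coe_mem _)]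
    exact Submodule.smul_mem_smul (hI i hr) trivial
  · rw [decompose_add, DirectSum.add_apply, AddMemClass.coe_add]
    exact add_mem hx hy

variable {𝒜 ℳ} (u : ι →+ ℤ)

theorem decompose_smul_eq_zero_of_lt (hu : ∀ i, ∀ a ∈ 𝒜 i, a ≠ 0 → 0 ≤ u i) {B : ℤ} {m : M}
    (hm : ∀ n, u n < B → decompose ℳ m n = 0) (a : S) :
    ∀ n, u n < B → decompose ℳ (a • m) n = 0 := by
  induction a using DirectSum.Decomposition.inductionOn 𝒜 with
  | zero => simp
  | @homogeneous i a =>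
    intro n hn
    rw [← Subtype.coe_inj, coe_decompose_smul_of_mem 𝒜 ℳ a.2, ZeroMemClass.coe_zero]
    by_cases ha : (a : S) = 0
    · rw [ha, zero_smul]
    · have : u (n - i) < B := by have := hu i a a.2 ha; rw [map_sub]; omega
      rw [hm _ this, ZeroMemClass.coe_zero, smul_zero]
  | add a₁ a₂ h₁ h₂ =>
    intro n hn
    rw [add_smul, decompose_add, DirectSum.add_apply, h₁ n hn, h₂ n hn, add_zero]

variable (𝒜 ℳ) in
theorem exists_decompose_eq_zero_of_lt [Module.Finite S M]
    (hu : ∀ i, ∀ a ∈ 𝒜 i, a ≠ 0 → 0 ≤ u i) :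
    ∃ B : ℤ, ∀ m n, u n < B → decompose ℳ m n = 0 := by
  classical
  have hbound (m : M) : ∃ B : ℤ, ∀ n, u n < B → decompose ℳ m n = 0 := by
    obtain ⟨B, hB⟩ := ((decompose ℳ m).support.image u).bddBelow
    refine ⟨B, fun n hn => ?_⟩
    by_contra h
    have := hB (Finset.mem_image_of_mem u (DFinsupp.mem_support_iff.mpr h))
    omega
  choose B hB using hbound
  obtain ⟨T, hT⟩ := Module.Finite.fg_top (R := S) (M := M)
  obtain ⟨B₀, hB₀⟩ := (T.image B).bddBelow
  refine ⟨B₀, fun m => ?_⟩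
  have hm : m ∈ Submodule.span S (T : Set M) := hT ▸ Submodule.mem_top
  induction hm using Submodule.span_induction with
  | mem t ht =>
    exact fun n hn => hB t n (lt_of_lt_of_le hn (hB₀ (Finset.mem_image_of_mem B ht)))
  | zero => simp
  | add x y _ _ hx hy =>
    intro n hn
    rw [decompose_add, DirectSum.add_apply, hx n hn, hy n hn, add_zero]
  | smul a x _ hx => exact decompose_smul_eq_zero_of_lt u hu hx a

theorem Submodule.IsHomogeneous.mem_of_forall_sub_pow_smul_mem {N : Submodule S M}
    (hN : N.IsHomogeneous ℳ) {B : ℤ} (hB : ∀ m n, u n < B → decompose ℳ m n = 0)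
    {a : S} {d : ι} (ha : a ∈ 𝒜 d) (hd : 0 < u d) {m : M}
    (hm : ∀ t : ℕ, ∃ m', m - a ^ t • m' ∈ N) : m ∈ N := by
  refine (hN.mem_iff ℳ).mpr fun n => ?_
  obtain ⟨t, ht⟩ := exists_nat_gt (u n - B)
  obtain ⟨m', hm'⟩ := hm t
  have hlow : u (n - t • d) < B := by
    rw [map_sub, map_nsmul, nsmul_eq_mul]
    nlinarith
  have hsplit : (decompose ℳ m n : M) =
      decompose ℳ (a ^ t • m') n + decompose ℳ (m - a ^ t • m') n := by
    rw [← AddMemClass.coe_add, ← DirectSum.add_apply, ← decompose_add, add_sub_cancel]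
  rw [hsplit, coe_decompose_smul_of_mem 𝒜 ℳ (SetLike.pow_mem_graded t ha), hB _ _ hlow,
    ZeroMemClass.coe_zero, smul_zero, zero_add]
  exact hN n hm'

theorem Submodule.IsHomogeneous.eq_bot_of_eq_pointwise_smul {N : Submodule S M}
    (hN : N.IsHomogeneous ℳ) {B : ℤ} (hB : ∀ m n, u n < B → decompose ℳ m n = 0)
    {a : S} {d : ι} (ha : a ∈ 𝒜 d) (hd : 0 < u d) {K : Submodule S (M ⧸ N)} (hK : K = a • K) :
    K = ⊥ := by
  have hpow (t : ℕ) : K = a ^ t • K := by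
    induction t with
    | zero => rw [pow_zero, one_smul]
    | succ t ih => rw [pow_succ, mul_smul, ← hK, ← ih]
  refine eq_bot_iff.mpr fun x hx => ?_
  obtain ⟨m, rfl⟩ := N.mkQ_surjective x
  refine (Submodule.Quotient.mk_eq_zero N).mpr
    (hN.mem_of_forall_sub_pow_smul_mem u hB ha hd fun t => ?_)
  rw [hpow t] at hx
  obtain ⟨y, -, hy⟩ := (Submodule.mem_smul_pointwise_iff_exists _ _ _).mp hx
  obtain ⟨m', rfl⟩ := N.mkQ_surjective y
  exact ⟨m', (Submodule.Quotient.eq N).mp hy.symm⟩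

end GradedModule

section Weighted

variable {σ A : Type*} [AddCommGroup A] {w : σ → A} (u : A →+ ℤ)

theorem Finsupp.weight_nonneg (hu : ∀ i, 0 ≤ u (w i)) (d : σ →₀ ℕ) : 0 ≤ u (weight w d) := by
  rw [weight_apply, map_finsuppSum]
  exact Finset.sum_nonneg fun i _ => by simp only [map_nsmul]; exact nsmul_nonneg (hu i) _

theorem Finsupp.weight_pos (hu : ∀ i, 0 < u (w i)) {d : σ →₀ ℕ} (hd : d ≠ 0) :
    0 < u (weight w d) := by
  rw [weight_apply, map_finsuppSum]
  refine Finset.sum_pos (fun i hi => ?_) (support_nonempty_iff.mpr hd)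
  simp only [map_nsmul]
  exact nsmul_pos (hu i) (mem_support_iff.mp hi)

variable {R : Type*} [CommSemiring R] {φ : MvPolynomial σ R} {e : A}

theorem MvPolynomial.IsWeightedHomogeneous.nonneg_of_ne_zero (hu : ∀ i, 0 ≤ u (w i))
    (hφ : IsWeightedHomogeneous w φ e) (h0 : φ ≠ 0) : 0 ≤ u e := by
  obtain ⟨d, hd⟩ := support_nonempty.mpr h0
  rw [← hφ (mem_support_iff.mp hd)]
  exact Finsupp.weight_nonneg u hu d

theorem MvPolynomial.IsWeightedHomogeneous.pos_of_mem_span_X (hu : ∀ i, 0 < u (w i))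
    (hφ : IsWeightedHomogeneous w φ e) (hφX : φ ∈ Ideal.span (Set.range X)) (h0 : φ ≠ 0) :
    0 < u e := by
  obtain ⟨d, hd⟩ := support_nonempty.mpr h0
  rw [← Set.image_univ] at hφX
  obtain ⟨i, -, hi⟩ := mem_ideal_span_X_image.mp hφX d hd
  rw [← hφ (mem_support_iff.mp hd)]
  exact Finsupp.weight_pos u hu fun h => hi (by rw [h, Finsupp.coe_zero, Pi.zero_apply])

end Weighted

theorem stmt16_general (K : Type) [Field K] (σ : Type)
    (A : Type) [AddCommGroup A] [DecidableEq A]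
    (w : σ → A)
    -- the weighted `A`-grading of `S = K[xᵢ : i ∈ σ]` by `w` is "nice":
    (u' : A →+ ℤ) (hu : ∀ i : σ, 0 < u' (w i))
    -- `M` is a finitely generated `S`-module:
    (M : Type) [AddCommGroup M] [Module (MvPolynomial σ K) M]
    [Module.Finite (MvPolynomial σ K) M]
    -- equipped with an `A`-grading compatible with the grading of `S`:
    (ℳ : A → AddSubgroup M)
    (hdecomp : DirectSum.IsInternal ℳ)
    (hcompat : ∀ (a b : A) (s : MvPolynomial σ K) (m : M),
      s ∈ weightedHomogeneousSubmodule K w a → m ∈ ℳ b → s • m ∈ ℳ (a + b))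
    -- a list of homogeneous elements of the ideal `𝔪` generated by the variables:
    (l : List (MvPolynomial σ K))
    (hl : ∀ s ∈ l, s ∈ Ideal.span (Set.range (X : σ → MvPolynomial σ K)) ∧
      ∃ a : A, s ∈ weightedHomogeneousSubmodule K w a)
    -- which is an `M`-regular sequence:
    (hreg : RingTheory.Sequence.IsRegular M l)
    -- then every permutation of it is an `M`-regular sequence:
    (l' : List (MvPolynomial σ K)) (hperm : l.Perm l') :
    RingTheory.Sequence.IsRegular M l' := by
  let := hdecomp.chooseDecomposition
  let := weightedGradedAlgebra K w
  have : SetLike.GradedSMul (weightedHomogeneousSubmodule K w) ℳ :=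
    ⟨fun _ _ _ _ hs hm => hcompat _ _ _ _ hs hm⟩
  obtain ⟨B, hB⟩ := exists_decompose_eq_zero_of_lt
    (weightedHomogeneousSubmodule K w) ℳ u' fun _ _ hφ h0 =>
      IsWeightedHomogeneous.nonneg_of_ne_zero u' (fun i => (hu i).le) hφ h0
  refine ⟨hreg.toIsWeaklyRegular.prototype_perm hperm fun a b rs hsub hN => ?_, ?_⟩
  · obtain ⟨ha𝔪, d, had⟩ := hl a (hsub.subset List.mem_cons_self)
    have hrs : (Ideal.ofList rs).IsHomogeneous (weightedHomogeneousSubmodule K w) :=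
      Ideal.homogeneous_span _ _ fun s hs =>
        (hl s (hsub.subset (List.mem_cons_of_mem _ (List.mem_cons_of_mem _ hs)))).2
    rcases eq_or_ne a 0 with rfl | ha0
    · rwa [zero_smul] at hN
    exact (hrs.smul_top _ ℳ).eq_bot_of_eq_pointwise_smul u' hB had
      (had.pos_of_mem_span_X u' hu ha𝔪 ha0) hN
  · have : Ideal.ofList l = Ideal.ofList l' :=
      congrArg Ideal.span (Set.ext fun _ => hperm.mem_iff)
    exact this ▸ hreg.top_ne_smul

theorem stmt16 (K : Type) [Field K] (σ : Type) [Finite σ]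
    (A : Type) [AddCommGroup A] [DecidableEq A]
    (w : σ → A)
    -- the weighted `A`-grading of `S = K[xᵢ : i ∈ σ]` by `w` is "nice":
    (u' : A →+ ℤ) (hu : ∀ i : σ, 0 < u' (w i))
    -- `M` is a finitely generated `S`-module:
    (M : Type) [AddCommGroup M] [Module (MvPolynomial σ K) M]
    [Module.Finite (MvPolynomial σ K) M]
    -- equipped with an `A`-grading compatible with the grading of `S`:
    (ℳ : A → AddSubgroup M)
    (hdecomp : DirectSum.IsInternal ℳ)
    (hcompat : ∀ (a b : A) (s : MvPolynomial σ K) (m : M),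
      s ∈ weightedHomogeneousSubmodule K w a → m ∈ ℳ b → s • m ∈ ℳ (a + b))
    -- a list of homogeneous elements of the ideal `𝔪` generated by the variables:
    (l : List (MvPolynomial σ K))
    (hl : ∀ s ∈ l, s ∈ Ideal.span (Set.range (X : σ → MvPolynomial σ K)) ∧
      ∃ a : A, s ∈ weightedHomogeneousSubmodule K w a)
    -- which is an `M`-regular sequence:
    (hreg : RingTheory.Sequence.IsRegular M l)
    -- then every permutation of it is an `M`-regular sequence:
    (l' : List (MvPolynomial σ K)) (hperm : l.Perm l') :
    RingTheory.Sequence.IsRegular M l' :=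
  stmt16_general K σ A w u' hu M ℳ hdecomp hcompat l hl hreg l' hperm
end

section
/- Let I ⊆ S be an ideal that is homogeneous with respect to the standard grading of S by total degree, and let f₁, …, f_d be nonzero elements of S. If in_ω(f₁), …, in_ω(f_d) is a regular sequence on the S-module S/in_ω(I), then f₁, …, f_d is a regular sequence on the S-module S/I. -/
open Finset MvPolynomial

/-- The `ω`-initial form `in_ω(g)` of a polynomial `g`: the sum of the terms of `g` whose
monomials have maximal `ω`-weight (for `g ≠ 0` this weight is `deg_ω(g)`). -/
noncomputable def initialForm {K σ : Type} [Field K] (ω : σ → ℤ)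
    (g : MvPolynomial σ K) : MvPolynomial σ K :=
  ∑ u ∈ g.support.filter
      (fun u => ∀ u' ∈ g.support, Finsupp.weight ω u' ≤ Finsupp.weight ω u),
    monomial u (coeff u g)

/-- The initial ideal `in_ω(I)`, generated by the initial forms of the nonzero
elements of `I`. -/
noncomputable def initialIdeal {K σ : Type} [Field K] (ω : σ → ℤ)
    (I : Ideal (MvPolynomial σ K)) : Ideal (MvPolynomial σ K) :=
  Ideal.span {p | ∃ g ∈ I, g ≠ 0 ∧ p = initialForm ω g}

/-!
With nonnegative weights every polynomial has a nonnegative top weight `deg_ω`, so one may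
argue by induction on it; and `in_ω` is multiplicative because `K[x]` is a domain.

Suppose `in_ω(f)` is a nonzerodivisor on `S/in_ω(J)`. Any `a + b f` with `a ∈ J` can be
rewritten as `a' + b' f` with `a' ∈ J` and `b' ≡ b (mod J)` so that the top `ω`-components of
`a'` and `b' f` do not cancel: if they do, then `in_ω(b) in_ω(f) = -in_ω(a) ∈ in_ω(J)`, so
`in_ω(b) ∈ in_ω(J)` is the initial form of some `c ∈ J`, and `(a + c f, b - c)` has smaller
top weight. Applied to `0 = -b f + b f` this shows that `f` is a nonzerodivisor on `S/J`, and
applied to a nonzero element of `J + (f)` it shows `in_ω(J + (f)) = in_ω(J) + (in_ω(f))`.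
As `(S/J)/f(S/J) ≅ S/(J + (f))`, induction on the length of the sequence concludes.
-/

open Pointwise in
noncomputable def Ideal.quotSMulTopEquivQuotientSup {R : Type*} [CommRing R] (J : Ideal R) (r : R) :
    QuotSMulTop r (R ⧸ J) ≃ₗ[R] R ⧸ (J ⊔ Ideal.span {r}) :=
  Submodule.quotEquivOfEq _ _
      (by rw [Submodule.map_pointwise_smul, Submodule.map_top, Submodule.range_mkQ]) ≪≫ₗ
    Submodule.quotientQuotientEquivQuotientSup J (r • ⊤) ≪≫ₗ
    Submodule.quotEquivOfEq _ _
      (by rw [← Submodule.singleton_set_smul, Submodule.set_smul_top_eq_span])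

namespace MvPolynomial

section WeightedDegree

variable {R σ : Type*} [CommSemiring R] {ω : σ → ℤ} {p q : MvPolynomial σ R} {m : ℤ}

/-- `deg_ω(p)`, with the junk value `0` at `p = 0`. -/
noncomputable def weightedDeg (ω : σ → ℤ) (p : MvPolynomial σ R) : ℤ :=
  if h : p.support.Nonempty then p.support.sup' h (Finsupp.weight ω) else 0

@[simp]
theorem weightedDeg_zero : weightedDeg ω (0 : MvPolynomial σ R) = 0 := by
  simp [weightedDeg]

theorem le_weightedDeg {u : σ →₀ ℕ} (hu : u ∈ p.support) :
    Finsupp.weight ω u ≤ weightedDeg ω p := by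
  rw [weightedDeg, dif_pos ⟨u, hu⟩]
  exact Finset.le_sup' _ hu

theorem coeff_eq_zero_of_weightedDeg_lt {u : σ →₀ ℕ}
    (h : weightedDeg ω p < Finsupp.weight ω u) : coeff u p = 0 :=
  notMem_support_iff.mp fun hu => (le_weightedDeg hu).not_gt h

theorem exists_weight_eq_weightedDeg (hp : p ≠ 0) :
    ∃ u ∈ p.support, Finsupp.weight ω u = weightedDeg ω p := by
  have h := support_nonempty.mpr hp
  obtain ⟨u, hu, he⟩ := Finset.exists_mem_eq_sup' h (Finsupp.weight ω)
  exact ⟨u, hu, by rw [weightedDeg, dif_pos h, he]⟩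

theorem weightedDeg_le (hp : p ≠ 0) (h : ∀ u ∈ p.support, Finsupp.weight ω u ≤ m) :
    weightedDeg ω p ≤ m := by
  obtain ⟨u, hu, he⟩ := exists_weight_eq_weightedDeg (ω := ω) hp
  exact he ▸ h u hu

theorem weightedDeg_nonneg (hω : ∀ i, 0 ≤ ω i) (p : MvPolynomial σ R) :
    0 ≤ weightedDeg ω p := by
  rcases eq_or_ne p 0 with rfl | hp
  · rw [weightedDeg_zero]
  obtain ⟨u, -, he⟩ := exists_weight_eq_weightedDeg (ω := ω) hp
  rw [← he, Finsupp.weight_apply]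
  exact Finset.sum_nonneg fun i _ => nsmul_nonneg (hω i) _

theorem weightedDeg_add_le (h : p + q ≠ 0) :
    weightedDeg ω (p + q) ≤ max (weightedDeg ω p) (weightedDeg ω q) := by
  classical
  refine weightedDeg_le h fun u hu => ?_
  rcases Finset.mem_union.mp (support_add hu) with hu | hu
  · exact (le_weightedDeg hu).trans (le_max_left _ _)
  · exact (le_weightedDeg hu).trans (le_max_right _ _)

theorem weightedDeg_eq_of_isWeightedHomogeneous (hp : p ≠ 0) (h : IsWeightedHomogeneous ω p m) :
    weightedDeg ω p = m := by
  obtain ⟨u, hu, he⟩ := exists_weight_eq_weightedDeg (ω := ω) hp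
  rw [← he, h (mem_support_iff.mp hu)]

theorem weightedDeg_eq_of_weightedHomogeneousComponent_ne_zero (hle : weightedDeg ω p ≤ m)
    (hm : weightedHomogeneousComponent ω m p ≠ 0) : weightedDeg ω p = m := by
  classical
  obtain ⟨u, hu⟩ := ne_zero_iff.mp hm
  rw [coeff_weightedHomogeneousComponent] at hu
  split_ifs at hu with hum
  · exact le_antisymm hle (hum ▸ le_weightedDeg (mem_support_iff.mpr hu))
  · exact absurd rfl hu

theorem weightedHomogeneousComponent_eq_zero_of_weightedDeg_lt (h : weightedDeg ω p < m) :
    weightedHomogeneousComponent ω m p = 0 :=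
  weightedHomogeneousComponent_eq_zero' _ _ fun _ hu => ((le_weightedDeg hu).trans_lt h).ne

theorem coeff_mul_eq_zero_of_lt {a b : ℤ} (hp : ∀ v ∈ p.support, Finsupp.weight ω v ≤ a)
    (hq : ∀ w ∈ q.support, Finsupp.weight ω w ≤ b) {u : σ →₀ ℕ}
    (hu : a + b < Finsupp.weight ω u) : coeff u (p * q) = 0 := by
  classical
  rw [coeff_mul]
  refine Finset.sum_eq_zero fun ⟨v, w⟩ hvw => ?_
  rw [Finset.HasAntidiagonal.mem_antidiagonal] at hvw
  by_cases hv : coeff v p = 0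
  · rw [hv, zero_mul]
  by_cases hw : coeff w q = 0
  · rw [hw, mul_zero]
  have := add_le_add (hp v (mem_support_iff.mpr hv)) (hq w (mem_support_iff.mpr hw))
  rw [← map_add, hvw] at this
  exact absurd hu this.not_gt

theorem weightedHomogeneousComponent_mul_of_isWeightedHomogeneous {e : ℤ} (δ : ℤ)
    (hq : IsWeightedHomogeneous ω q e) :
    weightedHomogeneousComponent ω δ (p * q) =
      weightedHomogeneousComponent ω (δ - e) p * q := by
  classical
  ext u
  simp only [coeff_weightedHomogeneousComponent, coeff_mul, Finset.ite_sum_zero]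
  refine Finset.sum_congr rfl fun ⟨v, w⟩ hvw => ?_
  rw [Finset.HasAntidiagonal.mem_antidiagonal] at hvw
  by_cases hw : coeff w q = 0
  · simp [hw]
  have hwe : Finsupp.weight ω w = e := hq hw
  have huv : Finsupp.weight ω u = Finsupp.weight ω v + e := by rw [← hvw, map_add, hwe]
  by_cases hv : Finsupp.weight ω v = δ - e
  · rw [if_pos (by omega), if_pos hv]
  · rw [if_neg (by omega), if_neg hv, zero_mul]

end WeightedDegree

section InitialForm

variable {K σ : Type} [Field K] {ω : σ → ℤ} {f g p q : MvPolynomial σ K} {m : ℤ}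

theorem initialForm_eq_weightedHomogeneousComponent (g : MvPolynomial σ K) :
    initialForm ω g = weightedHomogeneousComponent ω (weightedDeg ω g) g := by
  classical
  rcases eq_or_ne g 0 with rfl | hg
  · simp [initialForm]
  obtain ⟨v, hv, hve⟩ := exists_weight_eq_weightedDeg (ω := ω) hg
  rw [initialForm, weightedHomogeneousComponent_apply]
  refine Finset.sum_congr (Finset.filter_congr fun u hu => ⟨fun h => ?_, fun h u' hu' => ?_⟩)
    fun _ _ => rfl
  · exact le_antisymm (le_weightedDeg hu) (hve ▸ h v hv)
  · exact h ▸ le_weightedDeg hu'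

theorem isWeightedHomogeneous_initialForm (g : MvPolynomial σ K) :
    IsWeightedHomogeneous ω (initialForm ω g) (weightedDeg ω g) := by
  rw [initialForm_eq_weightedHomogeneousComponent]
  exact weightedHomogeneousComponent_isWeightedHomogeneous _ _

theorem coeff_initialForm [DecidableEq σ] (g : MvPolynomial σ K) (u : σ →₀ ℕ) :
    coeff u (initialForm ω g) =
      if Finsupp.weight ω u = weightedDeg ω g then coeff u g else 0 := by
  rw [initialForm_eq_weightedHomogeneousComponent, coeff_weightedHomogeneousComponent]

theorem initialForm_ne_zero (hg : g ≠ 0) : initialForm ω g ≠ 0 := by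
  classical
  obtain ⟨u, hu, he⟩ := exists_weight_eq_weightedDeg (ω := ω) hg
  refine ne_zero_iff.mpr ⟨u, ?_⟩
  rwa [coeff_initialForm, if_pos he, ← mem_support_iff]

theorem initialForm_of_isWeightedHomogeneous (h : IsWeightedHomogeneous ω g m) :
    initialForm ω g = g := by
  rcases eq_or_ne g 0 with rfl | hg
  · simp [initialForm]
  rw [initialForm_eq_weightedHomogeneousComponent, weightedDeg_eq_of_isWeightedHomogeneous hg h,
    h.weightedHomogeneousComponent_same]

theorem initialForm_one : initialForm ω (1 : MvPolynomial σ K) = 1 :=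
  initialForm_of_isWeightedHomogeneous (isWeightedHomogeneous_one K ω)

theorem initialForm_neg (g : MvPolynomial σ K) : initialForm ω (-g) = -initialForm ω g := by
  simp only [initialForm_eq_weightedHomogeneousComponent, weightedDeg, support_neg, map_neg]

theorem initialForm_eq_weightedHomogeneousComponent_of_ne_zero (hle : weightedDeg ω g ≤ m)
    (hm : weightedHomogeneousComponent ω m g ≠ 0) :
    initialForm ω g = weightedHomogeneousComponent ω m g := by
  rw [initialForm_eq_weightedHomogeneousComponent,
    weightedDeg_eq_of_weightedHomogeneousComponent_ne_zero hle hm]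

theorem weightedHomogeneousComponent_mem_of_initialForm_mem {I : Ideal (MvPolynomial σ K)}
    (hle : weightedDeg ω g ≤ m) (hI : initialForm ω g ∈ I) :
    weightedHomogeneousComponent ω m g ∈ I := by
  rcases hle.eq_or_lt with rfl | hlt
  · rwa [← initialForm_eq_weightedHomogeneousComponent]
  · rw [weightedHomogeneousComponent_eq_zero_of_weightedDeg_lt hlt]
    exact I.zero_mem

theorem weightedDeg_eq_of_initialForm_eq (hg : g ≠ 0)
    (hin : initialForm ω g = initialForm ω f) :
    weightedDeg ω g = weightedDeg ω f :=
  (isWeightedHomogeneous_initialForm g).inj_right (initialForm_ne_zero hg)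
    (hin ▸ isWeightedHomogeneous_initialForm f)

theorem weightedDeg_add_lt (hpq : p + q ≠ 0) (hdeg : weightedDeg ω p = weightedDeg ω q)
    (hin : initialForm ω p + initialForm ω q = 0) :
    weightedDeg ω (p + q) < weightedDeg ω p := by
  classical
  suffices weightedDeg ω (p + q) ≤ weightedDeg ω p - 1 by omega
  refine weightedDeg_le hpq fun u hu => ?_
  by_contra! hlt
  rcases (show weightedDeg ω p ≤ Finsupp.weight ω u by omega).eq_or_lt with he | hlt
  · have := congr_arg (coeff u) hin
    rw [coeff_add, coeff_initialForm, coeff_initialForm, if_pos he.symm,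
      if_pos (hdeg ▸ he.symm), coeff_zero, ← coeff_add] at this
    exact mem_support_iff.mp hu this
  · rw [mem_support_iff, coeff_add, coeff_eq_zero_of_weightedDeg_lt hlt,
      coeff_eq_zero_of_weightedDeg_lt (hdeg ▸ hlt), add_zero] at hu
    exact hu rfl

theorem coeff_mul_eq_coeff_initialForm_mul [DecidableEq σ] {u : σ →₀ ℕ}
    (hu : Finsupp.weight ω u = weightedDeg ω f + weightedDeg ω g) :
    coeff u (f * g) = coeff u (initialForm ω f * initialForm ω g) := by
  rw [coeff_mul, coeff_mul]
  refine Finset.sum_congr rfl fun ⟨v, w⟩ hvw => ?_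
  rw [Finset.HasAntidiagonal.mem_antidiagonal] at hvw
  have hsum : Finsupp.weight ω v + Finsupp.weight ω w = weightedDeg ω f + weightedDeg ω g := by
    rw [← map_add, hvw, hu]
  simp only [coeff_initialForm]
  rcases lt_trichotomy (Finsupp.weight ω v) (weightedDeg ω f) with hlt | heq | hgt
  · rw [coeff_eq_zero_of_weightedDeg_lt (ω := ω) (p := g) (by omega), if_neg hlt.ne, mul_zero,
      zero_mul]
  · rw [if_pos heq, if_pos (by omega)]
  · rw [coeff_eq_zero_of_weightedDeg_lt hgt, if_neg hgt.ne', zero_mul, zero_mul]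

theorem initialForm_mul (hf : f ≠ 0) (hg : g ≠ 0) :
    initialForm ω (f * g) = initialForm ω f * initialForm ω g := by
  classical
  set D := weightedDeg ω f + weightedDeg ω g
  have hhom : IsWeightedHomogeneous ω (initialForm ω f * initialForm ω g) D :=
    (isWeightedHomogeneous_initialForm f).mul (isWeightedHomogeneous_initialForm g)
  have hcomp : weightedHomogeneousComponent ω D (f * g) = initialForm ω f * initialForm ω g := by
    ext u
    rw [coeff_weightedHomogeneousComponent]
    split_ifs with hu
    · exact coeff_mul_eq_coeff_initialForm_mul hu
    · exact (hhom.coeff_eq_zero u hu).symm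
  have hle : weightedDeg ω (f * g) ≤ D :=
    weightedDeg_le (mul_ne_zero hf hg) fun u hu => by
      by_contra! hlt
      exact mem_support_iff.mp hu (coeff_mul_eq_zero_of_lt (fun _ => le_weightedDeg)
        (fun _ => le_weightedDeg) hlt)
  have hne : weightedHomogeneousComponent ω D (f * g) ≠ 0 :=
    hcomp ▸ mul_ne_zero (initialForm_ne_zero hf) (initialForm_ne_zero hg)
  rw [initialForm_eq_weightedHomogeneousComponent_of_ne_zero hle hne, hcomp]

theorem weightedDeg_mul (hf : f ≠ 0) (hg : g ≠ 0) :
    weightedDeg ω (f * g) = weightedDeg ω f + weightedDeg ω g := by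
  have h :=
    (isWeightedHomogeneous_initialForm (ω := ω) f).mul (isWeightedHomogeneous_initialForm g)
  rw [← initialForm_mul hf hg] at h
  exact (isWeightedHomogeneous_initialForm _).inj_right
    (initialForm_ne_zero (mul_ne_zero hf hg)) h

theorem weightedDeg_sub_lt (hpq : p - q ≠ 0) (hq : q ≠ 0)
    (hin : initialForm ω p = initialForm ω q) : weightedDeg ω (p - q) < weightedDeg ω p := by
  have hdeg : weightedDeg ω (-q) = weightedDeg ω q := by simp only [weightedDeg, support_neg]
  rw [sub_eq_add_neg] at hpq ⊢
  refine weightedDeg_add_lt hpq ?_ (by rw [initialForm_neg, hin, add_neg_cancel])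
  rw [hdeg, weightedDeg_eq_of_initialForm_eq hq hin.symm]

end InitialForm

section InitialIdeal

variable {K σ : Type} [Field K] {ω : σ → ℤ} {J : Ideal (MvPolynomial σ K)}
  {f g p : MvPolynomial σ K}

theorem initialForm_mem_initialIdeal (hg : g ∈ J) : initialForm ω g ∈ initialIdeal ω J := by
  rcases eq_or_ne g 0 with rfl | hg0
  · simp [initialForm]
  · exact Ideal.subset_span ⟨g, hg, hg0, rfl⟩

theorem initialIdeal_mono {J' : Ideal (MvPolynomial σ K)} (h : J ≤ J') :
    initialIdeal ω J ≤ initialIdeal ω J' :=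
  Ideal.span_mono fun _ ⟨g, hg, hg0, he⟩ => ⟨g, h hg, hg0, he⟩

theorem exists_initialForm_eq_of_mem_initialIdeal {δ : ℤ} (hp : p ∈ initialIdeal ω J)
    (hhom : IsWeightedHomogeneous ω p δ) (hp0 : p ≠ 0) :
    ∃ g ∈ J, g ≠ 0 ∧ initialForm ω g = p := by
  classical
  obtain ⟨n, c, s, hsum⟩ := Submodule.mem_span_set'.mp hp
  choose g hgJ _ hgs using fun i => (s i).2
  -- `p = ∑ cᵢ in_ω(gᵢ)` is the top component of `G`, obtained by keeping only the part of
  -- each `cᵢ` that lands in weight `δ`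
  set G := ∑ i, weightedHomogeneousComponent ω (δ - weightedDeg ω (g i)) (c i) * g i
  have hcomp : weightedHomogeneousComponent ω δ G = p := by
    rw [map_sum, ← hhom.weightedHomogeneousComponent_same, ← hsum, map_sum]
    refine Finset.sum_congr rfl fun i _ => ?_
    rw [smul_eq_mul, hgs i, mul_comm,
      weightedHomogeneousComponent_mul_of_isWeightedHomogeneous δ
        (weightedHomogeneousComponent_isWeightedHomogeneous _ _),
      weightedHomogeneousComponent_mul_of_isWeightedHomogeneous δ
        (isWeightedHomogeneous_initialForm _),
      sub_sub_cancel, ← initialForm_eq_weightedHomogeneousComponent, mul_comm]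
  have hne : weightedHomogeneousComponent ω δ G ≠ 0 := hcomp ▸ hp0
  have hG0 : G ≠ 0 := fun h => hne (by rw [h, map_zero])
  have hle : weightedDeg ω G ≤ δ := by
    refine weightedDeg_le hG0 fun u hu => ?_
    by_contra! hlt
    refine mem_support_iff.mp hu ?_
    rw [coeff_sum]
    refine Finset.sum_eq_zero fun i _ => coeff_mul_eq_zero_of_lt
      (fun _ hv => (weightedHomogeneousComponent_isWeightedHomogeneous _ _
        (mem_support_iff.mp hv)).le)
      (fun _ => le_weightedDeg) (by rwa [sub_add_cancel])
  refine ⟨G, Ideal.sum_mem _ fun i _ => J.mul_mem_left _ (hgJ i), hG0, ?_⟩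
  rw [initialForm_eq_weightedHomogeneousComponent_of_ne_zero hle hne, hcomp]

end InitialIdeal

section Regular

variable {K σ : Type} [Field K] {ω : σ → ℤ} {J : Ideal (MvPolynomial σ K)}
  {f : MvPolynomial σ K}

theorem weightedDeg_eq_and_initialForm_add_eq_zero (hω : ∀ i, 0 ≤ ω i)
    {p q : MvPolynomial σ K} (hq : q ≠ 0)
    (h : weightedHomogeneousComponent ω (max (weightedDeg ω p) (weightedDeg ω q)) (p + q) = 0) :
    weightedDeg ω p = weightedDeg ω q ∧ initialForm ω p + initialForm ω q = 0 := by
  rw [map_add] at h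
  rcases lt_trichotomy (weightedDeg ω p) (weightedDeg ω q) with hlt | heq | hgt
  · rw [max_eq_right hlt.le, weightedHomogeneousComponent_eq_zero_of_weightedDeg_lt hlt,
      zero_add, ← initialForm_eq_weightedHomogeneousComponent] at h
    exact absurd h (initialForm_ne_zero hq)
  · rw [← heq, max_self] at h
    rw [initialForm_eq_weightedHomogeneousComponent, initialForm_eq_weightedHomogeneousComponent,
      ← heq]
    exact ⟨rfl, h⟩
  · have hp : p ≠ 0 := by
      rintro rfl
      exact (weightedDeg_nonneg hω q).not_gt (by rwa [weightedDeg_zero] at hgt)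
    rw [max_eq_left hgt.le, weightedHomogeneousComponent_eq_zero_of_weightedDeg_lt hgt,
      add_zero, ← initialForm_eq_weightedHomogeneousComponent] at h
    exact absurd h (initialForm_ne_zero hp)

theorem exists_add_mul_eq_without_cancellation (hω : ∀ i, 0 ≤ ω i) (hf : f ≠ 0)
    (hreg : IsSMulRegular (MvPolynomial σ K ⧸ initialIdeal ω J) (initialForm ω f))
    {a : MvPolynomial σ K} (ha : a ∈ J) (b : MvPolynomial σ K) :
    ∃ a' ∈ J, ∃ b', b - b' ∈ J ∧ a' + b' * f = a + b * f ∧ (b' = 0 ∨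
      weightedHomogeneousComponent ω (max (weightedDeg ω a') (weightedDeg ω (b' * f)))
        (a + b * f) ≠ 0) := by
  induction hn : (max (weightedDeg ω a) (weightedDeg ω (b * f))).toNat
    using Nat.strong_induction_on generalizing a b with
  | _ n ih =>
  by_cases hb : b = 0
  · exact ⟨a, ha, 0, by simp [hb], by simp [hb], .inl rfl⟩
  by_cases htop : weightedHomogeneousComponent ω
      (max (weightedDeg ω a) (weightedDeg ω (b * f))) (a + b * f) ≠ 0
  · exact ⟨a, ha, b, by simp, rfl, .inr htop⟩
  have hbf : b * f ≠ 0 := mul_ne_zero hb hf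
  obtain ⟨hdeg, hcancel⟩ := weightedDeg_eq_and_initialForm_add_eq_zero hω hbf (not_not.mp htop)
  have hinb : initialForm ω b ∈ initialIdeal ω J := by
    refine mem_of_isSMulRegular_quotient_of_smul_mem hreg ?_
    rw [smul_eq_mul, mul_comm, ← initialForm_mul hb hf, eq_neg_of_add_eq_zero_right hcancel]
    exact neg_mem (initialForm_mem_initialIdeal ha)
  obtain ⟨c, hc, hc0, hcb⟩ := exists_initialForm_eq_of_mem_initialIdeal hinb
    (isWeightedHomogeneous_initialForm b) (initialForm_ne_zero hb)
  have hacf : a + c * f ∈ J := J.add_mem ha (J.mul_mem_right f hc)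
  have hrep : a + c * f + (b - c) * f = a + b * f := by ring
  by_cases hbc : b - c = 0
  · refine ⟨a + c * f, hacf, 0, by rwa [sub_zero, sub_eq_zero.mp hbc], ?_, .inl rfl⟩
    simp [← hrep, hbc]
  have hcf : initialForm ω (c * f) = initialForm ω (b * f) := by
    rw [initialForm_mul hc0 hf, initialForm_mul hb hf, hcb]
  have hlt_bc : weightedDeg ω ((b - c) * f) < weightedDeg ω (b * f) := by
    rw [weightedDeg_mul hbc hf, weightedDeg_mul hb hf]
    linarith [weightedDeg_sub_lt hbc hc0 hcb.symm]
  have hlt_acf : weightedDeg ω (a + c * f) < weightedDeg ω (b * f) := by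
    rcases eq_or_ne (a + c * f) 0 with h0 | h0
    · rw [h0, weightedDeg_zero]
      exact (weightedDeg_nonneg hω _).trans_lt hlt_bc
    rw [← hdeg]
    refine weightedDeg_add_lt h0 ?_ (by rw [hcf]; exact hcancel)
    rw [hdeg, weightedDeg_eq_of_initialForm_eq (mul_ne_zero hc0 hf) hcf]
  have hlt : (max (weightedDeg ω (a + c * f)) (weightedDeg ω ((b - c) * f))).toNat < n := by
    have := weightedDeg_nonneg hω (a + c * f)
    rw [← hn, hdeg, max_self]
    omega
  obtain ⟨a', ha', b', hb', heq, hnc⟩ := ih _ hlt hacf (b - c) rfl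
  refine ⟨a', ha', b', ?_, heq.trans hrep, hrep ▸ hnc⟩
  convert J.add_mem hb' hc using 1
  ring

theorem isSMulRegular_quotient_of_isSMulRegular_initialForm (hω : ∀ i, 0 ≤ ω i) (hf : f ≠ 0)
    (hreg : IsSMulRegular (MvPolynomial σ K ⧸ initialIdeal ω J) (initialForm ω f)) :
    IsSMulRegular (MvPolynomial σ K ⧸ J) f := by
  refine (isSMulRegular_quotient_iff_mem_of_smul_mem J f).mpr fun h hfh => ?_
  obtain ⟨_, -, b', hb', -, hnc⟩ :=
    exists_add_mul_eq_without_cancellation hω hf hreg (J.neg_mem hfh) h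
  rw [smul_eq_mul, mul_comm f h, neg_add_cancel, map_zero] at hnc
  obtain rfl : b' = 0 := hnc.resolve_right (not_not.mpr rfl)
  rwa [sub_zero] at hb'

theorem initialIdeal_sup_span_singleton (hω : ∀ i, 0 ≤ ω i) (hf : f ≠ 0)
    (hreg : IsSMulRegular (MvPolynomial σ K ⧸ initialIdeal ω J) (initialForm ω f)) :
    initialIdeal ω (J ⊔ Ideal.span {f}) =
      initialIdeal ω J ⊔ Ideal.span {initialForm ω f} := by
  refine le_antisymm (Ideal.span_le.mpr ?_) (sup_le (initialIdeal_mono le_sup_left) ?_)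
  · rintro _ ⟨g, hg, hg0, rfl⟩
    obtain ⟨a, ha, _, hc, rfl⟩ := Submodule.mem_sup.mp hg
    obtain ⟨b, rfl⟩ := Ideal.mem_span_singleton'.mp hc
    obtain ⟨a', ha', b', -, heq, hnc⟩ := exists_add_mul_eq_without_cancellation hω hf hreg ha b
    rw [← heq] at hg0 hnc ⊢
    rcases eq_or_ne b' 0 with rfl | hb'
    · rw [zero_mul, add_zero]
      exact Ideal.mem_sup_left (initialForm_mem_initialIdeal ha')
    have hinb' : initialForm ω (b' * f) ∈ Ideal.span {initialForm ω f} := by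
      rw [initialForm_mul hb' hf]
      exact Ideal.mul_mem_left _ _ (Ideal.mem_span_singleton_self _)
    rw [initialForm_eq_weightedHomogeneousComponent_of_ne_zero (weightedDeg_add_le hg0)
      (hnc.resolve_left hb'), map_add]
    exact add_mem
      (Ideal.mem_sup_left (weightedHomogeneousComponent_mem_of_initialForm_mem (le_max_left _ _)
        (initialForm_mem_initialIdeal ha')))
      (Ideal.mem_sup_right (weightedHomogeneousComponent_mem_of_initialForm_mem
        (le_max_right _ _) hinb'))
  · exact Ideal.span_le.mpr (Set.singleton_subset_iff.mpr
      (initialForm_mem_initialIdeal (Ideal.mem_sup_right (Ideal.mem_span_singleton_self f))))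

open RingTheory.Sequence in
theorem isRegular_quotient_of_isRegular_initialForm (hω : ∀ i, 0 ≤ ω i)
    (l : List (MvPolynomial σ K)) (hl : ∀ g ∈ l, g ≠ 0) (J : Ideal (MvPolynomial σ K))
    (hreg : IsRegular (MvPolynomial σ K ⧸ initialIdeal ω J) (l.map (initialForm ω))) :
    IsRegular (MvPolynomial σ K ⧸ J) l := by
  induction l generalizing J with
  | nil =>
    have : Nontrivial (MvPolynomial σ K ⧸ J) := by
      refine Ideal.Quotient.nontrivial_iff.mpr fun hJ => ?_
      refine Ideal.Quotient.nontrivial_iff.mp hreg.nontrivial ((Ideal.eq_top_iff_one _).mpr ?_)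
      rw [← initialForm_one]
      exact initialForm_mem_initialIdeal ((Ideal.eq_top_iff_one _).mp hJ)
    exact IsRegular.nil _ _
  | cons f l ih =>
    have hf := hl f List.mem_cons_self
    rw [List.map_cons, isRegular_cons_iff] at hreg
    obtain ⟨hfreg, hrest⟩ := hreg
    rw [(Ideal.quotSMulTopEquivQuotientSup _ _).isRegular_congr,
      ← initialIdeal_sup_span_singleton hω hf hfreg] at hrest
    rw [isRegular_cons_iff, (Ideal.quotSMulTopEquivQuotientSup J f).isRegular_congr]
    exact ⟨isSMulRegular_quotient_of_isSMulRegular_initialForm hω hf hfreg,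
      ih (fun g hg => hl g (List.mem_cons_of_mem _ hg)) _ hrest⟩

end Regular

end MvPolynomial

theorem stmt18_general (K : Type) [Field K] (σ : Type)
    (ω : σ → ℤ) (hω : ∀ i, 0 < ω i)
    (I : Ideal (MvPolynomial σ K))
    (d : ℕ) (f : Fin d → MvPolynomial σ K) (hf : ∀ i, f i ≠ 0)
    (hreg : RingTheory.Sequence.IsRegular
      (MvPolynomial σ K ⧸ initialIdeal ω I)
      (List.ofFn fun i => initialForm ω (f i))) :
    RingTheory.Sequence.IsRegular (MvPolynomial σ K ⧸ I) (List.ofFn f) := by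
  refine isRegular_quotient_of_isRegular_initialForm (fun i => (hω i).le) _ ?_ I ?_
  · simpa [List.mem_ofFn] using hf
  · rwa [List.map_ofFn]

theorem stmt18 (K : Type) [Field K] (σ : Type) [Finite σ]
    (ω : σ → ℤ) (hω : ∀ i, 0 < ω i)
    (I : Ideal (MvPolynomial σ K))
    -- `I` is homogeneous with respect to the standard grading by total degree:
    (hI : ∀ g ∈ I, ∀ n : ℕ, homogeneousComponent n g ∈ I)
    (d : ℕ) (f : Fin d → MvPolynomial σ K) (hf : ∀ i, f i ≠ 0)
    (hreg : RingTheory.Sequence.IsRegular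
      (MvPolynomial σ K ⧸ initialIdeal ω I)
      (List.ofFn fun i => initialForm ω (f i))) :
    RingTheory.Sequence.IsRegular (MvPolynomial σ K ⧸ I) (List.ofFn f) :=
  stmt18_general K σ ω hω I d f hf hreg
end

section
/- Fix q ∈ V and a real number c > 0. Let f : V → ℝ satisfy f(q) = −c, ∑_{v∈V} f(v) = 0, and f(u) ≠ f(v) for every pair of adjacent vertices u, v. Suppose s ∈ V with s ≠ q is a source for f, i.e. f(u) > f(s) for every vertex u adjacent to s, and let w ∈ V be a vertex at which f attains its maximum (f(w) ≥ f(v) for all v ∈ V). Then w ≠ q and w ≠ s, and for every real t ≥ 0 the function f_t = f + t·(1_w − 1_s) satisfies: f_t(q) = −c, ∑_{v∈V} f_t(v) = 0, and for every pair of adjacent vertices u, v, f_t(u) > f_t(v) if and only if f(u) > f(v). (Consequently the cell of the graphic hyperplane arrangement H_G^{q,c} containing f is unbounded, which proves that every point of the bounded complex B_G^{q,c} induces an acyclic partial orientation of G with unique source at q.) -/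
open Finset

theorem stmt19 (V : Type) [Fintype V] [Nonempty V] [DecidableEq V]
    (G : SimpleGraph V) (hG : G.Connected)
    (q : V) (c : ℝ) (hc : 0 < c)
    (f : V → ℝ) (hfq : f q = -c) (hsum : ∑ v, f v = 0)
    (hne : ∀ u v, G.Adj u v → f u ≠ f v)
    (s : V) (hs : s ≠ q) (hsource : ∀ u, G.Adj u s → f s < f u)
    (w : V) (hw : ∀ v, f v ≤ f w) :
    w ≠ q ∧ w ≠ s ∧
    ∀ t : ℝ, 0 ≤ t →
      (f q + t * ((if q = w then 1 else 0) - (if q = s then 1 else 0)) = -c) ∧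
      (∑ v, (f v + t * ((if v = w then 1 else 0) - (if v = s then 1 else 0))) = 0) ∧
      ∀ u v, G.Adj u v →
        (f v + t * ((if v = w then 1 else 0) - (if v = s then 1 else 0)) <
            f u + t * ((if u = w then 1 else 0) - (if u = s then 1 else 0)) ↔
          f v < f u) := by
  -- f w ≥ 0
  have hcard : 0 < (Fintype.card V : ℝ) := by
    exact_mod_cast Fintype.card_pos
  have hw0 : 0 ≤ f w := by
    by_contra h
    push_neg at h
    have : ∑ v : V, f v < 0 := by
      calc ∑ v : V, f v ≤ ∑ _v : V, f w := Finset.sum_le_sum fun v _ => hw v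
      _ = (Fintype.card V : ℝ) * f w := by
          simp [Finset.sum_const, nsmul_eq_mul]
      _ < 0 := mul_neg_of_pos_of_neg hcard h
    linarith [hsum]
  have hwq : w ≠ q := by
    intro h
    rw [h, hfq] at hw0
    linarith
  -- s has a neighbor
  obtain ⟨p⟩ := hG s q
  have hws : w ≠ s := by
    cases p with
    | nil => exact absurd rfl hs
    | cons h _ =>
      rename_i u _
      have h1 : f s < f u := hsource u h.symm
      have h2 : f u ≤ f w := hw u
      intro e
      rw [e] at h2
      linarith
  refine ⟨hwq, hws, ?_⟩
  intro t ht
  refine ⟨?_, ?_, ?_⟩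
  · have h1 : ¬ q = w := Ne.symm hwq
    have h2 : ¬ q = s := Ne.symm hs
    simp [h1, h2, hfq]
  · rw [Finset.sum_add_distrib, hsum, ← Finset.mul_sum, Finset.sum_sub_distrib]
    simp [hws]
  · intro u v hadj
    have h6 : u = w → f v < f u := fun h =>
      lt_of_le_of_ne (h ▸ hw v) fun e => hne u v hadj e.symm
    have h7 : v = w → f u < f v := fun h =>
      lt_of_le_of_ne (h ▸ hw u) fun e => hne v u hadj.symm e.symm
    have h4 : u = s → f u < f v := fun h => h ▸ hsource v (h ▸ hadj).symm
    have h5 : v = s → f v < f u := fun h => h ▸ hsource u (h ▸ hadj)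
    have huv : u ≠ v := G.ne_of_adj hadj
    by_cases huw : u = w <;> by_cases hvw : v = w <;>
      by_cases hus : u = s <;> by_cases hvs : v = s <;>
      simp_all <;>
      first
        | (constructor <;> intro h <;> linarith)
        | linarith
        | linarith [hsource _ hadj]
end
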